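/- arXiv:2502.12712 — 11 statements merged into one kernel-verified Lean document; each statement's English description precedes it below -/
import Mathlib

section
/- Let F be a factorial (unique factorization) monoid and H ⊆ F a submonoid with H ≠ H^×. Then H = (H : F) ∪ H^× if and only if H \ H^× is an s-ideal of F (i.e., (H \ H^×)·F ⊆ H \ H^×). -/
/-- `p` is a prime element of the monoid `F`. -/
def IsPrimeElem {F : Type*} [CancelCommMonoid F] (p : F) : Prop :=
  ¬ IsUnit p ∧ ∀ a b : F, p ∣ a * b → p ∣ a ∨ p ∣ b

/-- `F` is a factorial monoid: every element is a unit times a product of primes. -/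
def IsFactorialMonoid (F : Type*) [CancelCommMonoid F] : Prop :=
  ∀ a : F, ∃ (u : F) (l : Multiset F), IsUnit u ∧ (∀ p ∈ l, IsPrimeElem p) ∧ a = u * l.prod

/-- `a` is an invertible element of the submonoid `H`, i.e. `a ∈ H^×`. -/
def IsUnitIn {F : Type*} [CancelCommMonoid F] (H : Submonoid F) (a : F) : Prop :=
  a ∈ H ∧ ∃ b ∈ H, a * b = 1

/-- for a factorial monoid `F` and a submonoid `H ⊆ F` with `H ≠ H^×`, one has
`H = (H : F) ∪ H^×` iff `H \ H^×` is an s-ideal of `F`. -/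
theorem stmt_1 {F : Type*} [CancelCommMonoid F] (hF : IsFactorialMonoid F)
    (H : Submonoid F) (hne : ∃ a ∈ H, ¬ IsUnitIn H a) :
    (∀ a ∈ H, (∀ y : F, a * y ∈ H) ∨ IsUnitIn H a) ↔
      (∀ a ∈ H, ¬ IsUnitIn H a → ∀ y : F, a * y ∈ H ∧ ¬ IsUnitIn H (a * y)) := by
  constructor
  · intro h a ha hna y
    rcases h a ha with hcond | hu
    · refine ⟨hcond y, ?_⟩
      rintro ⟨_, b, hb, hab⟩
      apply hna
      refine ⟨ha, y * b, ?_, ?_⟩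
      · have key : a * (y * b * (y * b)) = y * b := by
          have : a * (y * b * (y * b)) = (a * y * b) * (y * b) := by simp [mul_assoc]
          rw [this, hab, one_mul]
        have := hcond (y * b * (y * b))
        rwa [key] at this
      · rw [← mul_assoc, hab]
    · exact absurd hu hna
  · intro h a ha
    by_cases hu : IsUnitIn H a
    · exact Or.inr hu
    · exact Or.inl fun y => (h a ha hu y).1
end

section
/- Let F be a factorial monoid and H ⊆ F a conductor submonoid with H ⊊ F. Then the inclusion H ↪ F is not a divisor homomorphism, and H is not a Krull monoid. -/
/-- `H` is a conductor submonoid of `F`: `H ≠ H^×` and `H \ H^×` is an s-ideal of `F`. -/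
def IsConductorSubmonoid {F : Type*} [CancelCommMonoid F] (H : Submonoid F) : Prop :=
  (∃ a ∈ H, ¬ IsUnitIn H a) ∧
  ∀ a ∈ H, ¬ IsUnitIn H a → ∀ y : F, a * y ∈ H ∧ ¬ IsUnitIn H (a * y)

/-- `a` is an atom of the submonoid `H`. -/
def IsAtomIn {F : Type*} [CancelCommMonoid F] (H : Submonoid F) (a : F) : Prop :=
  a ∈ H ∧ ¬ IsUnitIn H a ∧
    ∀ b c : F, b ∈ H → c ∈ H → a = b * c → IsUnitIn H b ∨ IsUnitIn H c


universe u

/-- if `H ⊊ F` is a conductor submonoid of a factorial monoid `F`, then the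
inclusion `H ↪ F` is not a divisor homomorphism, and `H` is not a Krull monoid (where being
Krull is characterized by the existence of a divisor homomorphism into a free abelian
monoid). -/
theorem stmt_3 {F : Type u} [CancelCommMonoid F] (hF : IsFactorialMonoid F)
    (H : Submonoid F) (hH : IsConductorSubmonoid H) (hsub : (H : Set F) ≠ Set.univ) :
    ¬ (∀ a b : F, a ∈ H → b ∈ H → ((∃ c ∈ H, b = a * c) ↔ a ∣ b)) ∧
    ¬ ∃ (ι : Type u) (φ : H →* Multiplicative (ι →₀ ℕ)),
        ∀ a b : H, a ∣ b ↔ φ a ∣ φ b := by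
  obtain ⟨x, hxH, hxu⟩ := hH.1
  have hy : ∃ y : F, y ∉ H := by
    by_contra h; push_neg at h; exact hsub (Set.eq_univ_iff_forall.2 h)
  obtain ⟨y, hyH⟩ := hy
  have hmem : ∀ n : ℕ, x * y ^ n ∈ H ∧ ¬ IsUnitIn H (x * y ^ n) := by
    intro n
    induction n with
    | zero => simpa using ⟨hxH, hxu⟩
    | succ n ih =>
      have := hH.2 _ ih.1 ih.2 y
      simpa [pow_succ, mul_assoc] using this
  constructor
  · intro hdiv
    have h1 : x * y ∈ H := by simpa using (hmem 1).1
    obtain ⟨c, hcH, hc⟩ := (hdiv x (x * y) hxH h1).2 ⟨y, rfl⟩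
    exact hyH ((mul_left_cancel hc) ▸ hcH)
  · rintro ⟨ι, φ, hφ⟩
    set c : ℕ → (ι →₀ ℕ) := fun n => Multiplicative.toAdd (φ ⟨x * y ^ n, (hmem n).1⟩) with hc
    have key : ∀ n, c (n + 1) + c 0 = c n + c 1 := by
      intro n
      have hmul : (⟨x * y ^ (n + 1), (hmem (n + 1)).1⟩ : H) * ⟨x * y ^ 0, (hmem 0).1⟩
          = ⟨x * y ^ n, (hmem n).1⟩ * ⟨x * y ^ 1, (hmem 1).1⟩ := by
        ext
        push_cast
        simp [pow_succ, mul_comm, mul_assoc, mul_left_comm]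
      have h2 := congrArg (fun z => Multiplicative.toAdd (φ z)) hmul
      simp only [map_mul, toAdd_mul] at h2
      exact h2
    have hle : c 0 ≤ c 1 := by
      by_contra hlt
      rw [Finsupp.le_def] at hlt
      push_neg at hlt
      obtain ⟨i, hi⟩ := hlt
      have step : ∀ n, c n i + n * (c 0 i - c 1 i) = c 0 i := by
        intro n
        induction n with
        | zero => simp
        | succ n ih =>
          have hrec : c (n + 1) i + c 0 i = c n i + c 1 i := by
            have := congrArg (fun f => f i) (key n); simpa using this
          rw [Nat.succ_mul]
          generalize hm : n * (c 0 i - c 1 i) = m at ih ⊢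
          omega
      have h1 := step (c 0 i + 1)
      have h2 : c 0 i + 1 ≤ (c 0 i + 1) * (c 0 i - c 1 i) :=
        Nat.le_mul_of_pos_right _ (by omega)
      generalize hm : (c 0 i + 1) * (c 0 i - c 1 i) = m at h1 h2
      omega
    have hdvd : φ ⟨x * y ^ 0, (hmem 0).1⟩ ∣ φ ⟨x * y ^ 1, (hmem 1).1⟩ := by
      refine ⟨Multiplicative.ofAdd (c 1 - c 0), ?_⟩
      apply Multiplicative.toAdd.injective
      rw [toAdd_mul]
      show c 1 = c 0 + (c 1 - c 0)
      exact (add_tsub_cancel_of_le hle).symm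
    obtain ⟨t, ht⟩ := (hφ _ _).2 hdvd
    have ht' : x * y ^ 1 = x * y ^ 0 * (t : F) := congrArg Subtype.val ht
    simp only [pow_one, pow_zero, mul_one] at ht'
    exact hyH ((mul_left_cancel ht') ▸ t.2)
end

section
/- Let F be a factorial monoid and H ⊆ F a conductor submonoid. Then H is a BF-monoid: every nonunit element of H has a nonempty finite set of factorization lengths into atoms of H. -/
section Aux

variable {F : Type*} [CancelCommMonoid F]

lemma prime_dvd_prod' {p : F} (hp : IsPrimeElem p) :
    ∀ {l : Multiset F}, p ∣ l.prod → ∃ q ∈ l, p ∣ q := by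
  intro l
  induction l using Multiset.induction with
  | empty =>
      intro h
      exact absurd (isUnit_of_dvd_one (by simpa using h)) hp.1
  | cons a s ih =>
      intro h
      rw [Multiset.prod_cons] at h
      rcases hp.2 _ _ h with h | h
      · exact ⟨a, Multiset.mem_cons_self a s, h⟩
      · obtain ⟨q, hq, hd⟩ := ih h
        exact ⟨q, Multiset.mem_cons_of_mem hq, hd⟩

lemma len_unique : ∀ {l : Multiset F} {u v : F} {m : Multiset F},
    IsUnit u → IsUnit v → (∀ p ∈ l, IsPrimeElem p) → (∀ p ∈ m, IsPrimeElem p) →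
    u * l.prod = v * m.prod → Multiset.card l = Multiset.card m := by
  classical
  intro l
  induction l using Multiset.induction with
  | empty =>
      intro u v m hu hv _ hm h
      rcases Multiset.empty_or_exists_mem m with rfl | ⟨q, hq⟩
      · simp
      · exfalso
        have hqd : q ∣ u := by
          rw [Multiset.prod_zero, mul_one] at h
          rw [h]
          exact Dvd.dvd.mul_left (Multiset.dvd_prod hq) v
        exact (hm q hq).1 (isUnit_of_dvd_unit hqd hu)
  | cons p l ih =>
      intro u v m hu hv hl hm h
      have hp : IsPrimeElem p := hl p (Multiset.mem_cons_self p l)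
      have hpd : p ∣ v * m.prod := by
        rw [← h, Multiset.prod_cons]
        exact ⟨u * l.prod, by simp [mul_comm, mul_left_comm, mul_assoc]⟩
      have hpm : p ∣ m.prod := by
        rcases hp.2 v m.prod hpd with h' | h'
        · exact absurd (isUnit_of_dvd_unit h' hv) hp.1
        · exact h'
      obtain ⟨q, hq, w, hw⟩ := prime_dvd_prod' hp hpm
      have hqprime := hm q hq
      have hwu : IsUnit w := by
        rcases hqprime.2 p w (hw ▸ dvd_refl q) with h' | h'
        · obtain ⟨s, hs⟩ := h'
          have h1 : q * 1 = q * (s * w) := by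
            rw [mul_one]
            calc q = p * w := hw
            _ = q * s * w := by rw [hs]
            _ = q * (s * w) := by rw [mul_assoc]
          exact IsUnit.of_mul_eq_one (a := w) s
            (by rw [mul_comm]; exact (mul_left_cancel h1).symm)
        · obtain ⟨t, ht⟩ := h'
          exfalso
          have h1 : w * 1 = w * (p * t) := by
            rw [mul_one]
            calc w = q * t := ht
            _ = p * w * t := by rw [hw]
            _ = w * (p * t) := by rw [mul_comm p w, mul_assoc]
          exact hp.1 (IsUnit.of_mul_eq_one (a := p) t (mul_left_cancel h1).symm)
      have hmm : q ::ₘ m.erase q = m := Multiset.cons_erase hq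
      have key : u * l.prod = (v * w) * (m.erase q).prod := by
        have h2 : m.prod = p * w * (m.erase q).prod := by
          rw [← hw, ← Multiset.prod_cons, hmm]
        apply mul_left_cancel (a := p)
        calc p * (u * l.prod) = u * (p ::ₘ l).prod := by
              rw [Multiset.prod_cons]; simp [mul_comm, mul_left_comm, mul_assoc]
        _ = v * m.prod := h
        _ = v * (p * w * (m.erase q).prod) := by rw [h2]
        _ = p * (v * w * (m.erase q).prod) := by
              simp [mul_comm, mul_left_comm, mul_assoc]
      have hcard := ih hu (hv.mul hwu)
        (fun x hx => hl x (Multiset.mem_cons_of_mem hx))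
        (fun x hx => hm x (Multiset.mem_of_mem_erase hx)) key
      rw [← hmm]
      simp [hcard]

variable (hF : IsFactorialMonoid F)

noncomputable def plen (a : F) : ℕ :=
  Multiset.card (hF a).choose_spec.choose

lemma plen_exists (a : F) : ∃ u l, IsUnit u ∧ (∀ p ∈ l, IsPrimeElem p) ∧
    a = u * Multiset.prod l ∧ Multiset.card l = plen hF a := by
  obtain ⟨h1, h2, h3⟩ := (hF a).choose_spec.choose_spec
  exact ⟨_, _, h1, h2, h3, rfl⟩

lemma plen_eq {a u : F} {l : Multiset F} (hu : IsUnit u)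
    (hl : ∀ p ∈ l, IsPrimeElem p) (h : a = u * l.prod) :
    plen hF a = Multiset.card l := by
  obtain ⟨v, m, hv, hm, hvm, hcard⟩ := plen_exists hF a
  rw [← hcard]
  exact len_unique hv hu hm hl (hvm ▸ h)

lemma plen_mul (a b : F) : plen hF (a * b) = plen hF a + plen hF b := by
  obtain ⟨u, l, hu, hl, hul, hcl⟩ := plen_exists hF a
  obtain ⟨v, m, hv, hm, hvm, hcm⟩ := plen_exists hF b
  have : a * b = (u * v) * (l + m).prod := by
    rw [Multiset.prod_add, hul, hvm]
    simp [mul_comm, mul_left_comm, mul_assoc]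
  rw [plen_eq hF (hu.mul hv) (fun p hp => by
      rcases Multiset.mem_add.1 hp with h | h
      exacts [hl p h, hm p h]) this]
  simp [← hcl, ← hcm]

lemma plen_eq_zero_iff {a : F} : plen hF a = 0 ↔ IsUnit a := by
  constructor
  · intro h
    obtain ⟨u, l, hu, _, hul, hcl⟩ := plen_exists hF a
    rw [h, Multiset.card_eq_zero] at hcl
    rw [hul, hcl]
    simpa using hu
  · intro h
    have := plen_eq hF (a := a) (u := a) (l := (0 : Multiset F)) h (by simp) (by simp)
    simpa using this

lemma card_le_plen_prod : ∀ (t : Multiset F), (∀ u ∈ t, ¬ IsUnit u) →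
    Multiset.card t ≤ plen hF t.prod := by
  intro t
  induction t using Multiset.induction with
  | empty => simp
  | cons a s ih =>
      intro h
      rw [Multiset.prod_cons, plen_mul]
      have h1 : 1 ≤ plen hF a := by
        rcases Nat.eq_zero_or_pos (plen hF a) with h0 | h0
        · exact absurd ((plen_eq_zero_iff hF).1 h0)
            (h a (Multiset.mem_cons_self a s))
        · exact h0
      have h2 := ih (fun u hu => h u (Multiset.mem_cons_of_mem hu))
      simp only [Multiset.card_cons]
      omega

variable {H : Submonoid F}

lemma not_isUnit_of_not_isUnitIn (hH : IsConductorSubmonoid H) {a : F} (ha : a ∈ H) (hna : ¬ IsUnitIn H a) :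
    ¬ IsUnit a := by
  intro hu
  obtain ⟨b, hb⟩ := hu.exists_right_inv
  have h := (hH.2 a ha hna b).2
  rw [hb] at h
  exact h ⟨H.one_mem, 1, H.one_mem, one_mul 1⟩

lemma exists_atoms (hH : IsConductorSubmonoid H) : ∀ (n : ℕ) (a : F), plen hF a = n → a ∈ H → ¬ IsUnitIn H a →
    ∃ l : Multiset F, (∀ u ∈ l, IsAtomIn H u) ∧ l.prod = a := by
  intro n
  induction n using Nat.strong_induction_on with
  | _ n ih =>
    intro a hn ha hna
    by_cases hat : IsAtomIn H a
    · exact ⟨{a}, by simpa using hat, by simp⟩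
    · have hsplit : ∃ b c : F, b ∈ H ∧ c ∈ H ∧ a = b * c ∧
          ¬ IsUnitIn H b ∧ ¬ IsUnitIn H c := by
        simp only [IsAtomIn, ha, hna, not_false_iff, true_and] at hat
        push_neg at hat
        obtain ⟨b, c, hb, hc, habc, h1, h2⟩ := hat
        exact ⟨b, c, hb, hc, habc, h1, h2⟩
      obtain ⟨b, c, hb, hc, habc, h1, h2⟩ := hsplit
      have hsum : plen hF b + plen hF c = n := by rw [← plen_mul, ← habc, hn]
      have hb1 : 1 ≤ plen hF b := by
        rcases Nat.eq_zero_or_pos (plen hF b) with h0 | h0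
        · exact absurd ((plen_eq_zero_iff hF).1 h0)
            (not_isUnit_of_not_isUnitIn hH hb h1)
        · exact h0
      have hc1 : 1 ≤ plen hF c := by
        rcases Nat.eq_zero_or_pos (plen hF c) with h0 | h0
        · exact absurd ((plen_eq_zero_iff hF).1 h0)
            (not_isUnit_of_not_isUnitIn hH hc h2)
        · exact h0
      obtain ⟨lb, hlb, hlbp⟩ := ih (plen hF b) (by omega) b rfl hb h1
      obtain ⟨lc, hlc, hlcp⟩ := ih (plen hF c) (by omega) c rfl hc h2
      refine ⟨lb + lc, fun u hu => ?_, by rw [Multiset.prod_add, hlbp, hlcp, habc]⟩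
      rcases Multiset.mem_add.1 hu with h | h
      exacts [hlb u h, hlc u h]

end Aux

/-- every conductor submonoid of a factorial monoid is a BF-monoid:
every non-invertible element has a nonempty finite set of lengths of factorizations
into atoms. -/
theorem stmt_4 {F : Type*} [CancelCommMonoid F] (hF : IsFactorialMonoid F)
    (H : Submonoid F) (hH : IsConductorSubmonoid H) :
    ∀ a ∈ H, ¬ IsUnitIn H a →
      {n : ℕ | ∃ l : Multiset F, Multiset.card l = n ∧ (∀ u ∈ l, IsAtomIn H u) ∧
        l.prod = a}.Nonempty ∧
      {n : ℕ | ∃ l : Multiset F, Multiset.card l = n ∧ (∀ u ∈ l, IsAtomIn H u) ∧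
        l.prod = a}.Finite := by
  intro a ha hna
  constructor
  · obtain ⟨l, hl, hlp⟩ := exists_atoms hF hH (plen hF a) a rfl ha hna
    exact ⟨Multiset.card l, l, rfl, hl, hlp⟩
  · apply Set.Finite.subset (Set.finite_Iic (plen hF a))
    rintro n ⟨l, rfl, hl, hlp⟩
    have : ∀ u ∈ l, ¬ IsUnit u := fun u hu =>
      not_isUnit_of_not_isUnitIn hH (hl u hu).1 (hl u hu).2.1
    have := card_le_plen_prod hF l this
    rw [hlp] at this
    exact this
end

section
/- Let F be a factorial monoid and H ⊆ F a gap absorbing submonoid. Then 𝒢(H)·𝒢(H) ⊆ 𝒢(H) ∪ H^× ∪ 𝒜(H) ∪ 𝒜(H)·𝒜(H), where 𝒢(H) = F \ H is the gap set and 𝒜(H) the set of atoms of H. -/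
section Aux

variable {F : Type*} [CancelCommMonoid F]

/-- Splitting lemma: a two-fold factorization of a unit times a product of primes splits
the prime multiset. -/
lemma splitD : ∀ (l : Multiset F), (∀ p ∈ l, IsPrimeElem p) → ∀ (u b c : F), IsUnit u →
    u * l.prod = b * c →
    ∃ (l₁ l₂ : Multiset F) (u₁ u₂ : F), IsUnit u₁ ∧ IsUnit u₂ ∧ l = l₁ + l₂ ∧
      b = u₁ * l₁.prod ∧ c = u₂ * l₂.prod := by
  intro l
  induction l using Multiset.induction_on with
  | empty =>
      intro _ u b c hu heq
      simp only [Multiset.prod_zero, mul_one] at heq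
      subst heq
      exact ⟨0, 0, b, c, isUnit_of_mul_isUnit_left hu, isUnit_of_mul_isUnit_right hu,
        by simp, by simp, by simp⟩
  | cons p ls ih =>
      intro hpr u b c hu heq
      have hp := hpr p (Multiset.mem_cons_self p ls)
      have hls : ∀ q ∈ ls, IsPrimeElem q := fun q hq => hpr q (Multiset.mem_cons_of_mem hq)
      rw [Multiset.prod_cons] at heq
      have hdvd : p ∣ b * c :=
        ⟨u * ls.prod, by rw [← heq]; simp [mul_comm, mul_left_comm, mul_assoc]⟩
      rcases hp.2 b c hdvd with ⟨b₁, hb₁⟩ | ⟨c₁, hc₁⟩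
      · have h2 : u * ls.prod = b₁ * c := by
          apply mul_left_cancel (a := p)
          rw [hb₁] at heq
          calc p * (u * ls.prod) = u * (p * ls.prod) := by
                simp [mul_comm, mul_left_comm, mul_assoc]
            _ = p * b₁ * c := heq
            _ = p * (b₁ * c) := by rw [mul_assoc]
        obtain ⟨l₁, l₂, u₁, u₂, hu₁, hu₂, hsum, hbf, hcf⟩ := ih hls u b₁ c hu h2
        refine ⟨p ::ₘ l₁, l₂, u₁, u₂, hu₁, hu₂, ?_, ?_, hcf⟩
        · rw [hsum, Multiset.cons_add]
        · rw [hb₁, hbf, Multiset.prod_cons]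
          simp [mul_comm, mul_left_comm, mul_assoc]
      · have h2 : u * ls.prod = b * c₁ := by
          apply mul_left_cancel (a := p)
          rw [hc₁] at heq
          calc p * (u * ls.prod) = u * (p * ls.prod) := by
                simp [mul_comm, mul_left_comm, mul_assoc]
            _ = b * (p * c₁) := heq
            _ = p * (b * c₁) := by simp [mul_comm, mul_left_comm, mul_assoc]
        obtain ⟨l₁, l₂, u₁, u₂, hu₁, hu₂, hsum, hbf, hcf⟩ := ih hls u b c₁ hu h2
        refine ⟨l₁, p ::ₘ l₂, u₁, u₂, hu₁, hu₂, ?_, hbf, ?_⟩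
        · rw [hsum, add_comm l₁ (p ::ₘ l₂), Multiset.cons_add, add_comm l₂ l₁]
        · rw [hc₁, hcf, Multiset.prod_cons]
          simp [mul_comm, mul_left_comm, mul_assoc]

/-- An atom times an `H`-unit is an atom. -/
lemma atom_mul_unitIn {H : Submonoid F} {a e : F} (hA : IsAtomIn H a) (hE : IsUnitIn H e) :
    IsAtomIn H (a * e) := by
  obtain ⟨haH, hanu, hsplit⟩ := hA
  obtain ⟨heH, e', he'H, hee'⟩ := hE
  refine ⟨H.mul_mem haH heH, ?_, ?_⟩
  · rintro ⟨-, k, hkH, hk⟩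
    exact hanu ⟨haH, e * k, H.mul_mem heH hkH, by rwa [← mul_assoc]⟩
  · intro b c hb hc heq
    have ha2 : a = b * (c * e') := by
      calc a = a * (e * e') := by rw [hee', mul_one]
        _ = (a * e) * e' := by rw [mul_assoc]
        _ = (b * c) * e' := by rw [heq]
        _ = b * (c * e') := by rw [mul_assoc]
    rcases hsplit b (c * e') hb (H.mul_mem hc he'H) ha2 with h | h
    · exact Or.inl h
    · right
      obtain ⟨-, k, hkH, hk⟩ := h
      exact ⟨hc, e' * k, H.mul_mem he'H hkH, by rw [← mul_assoc]; exact hk⟩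

/-- Every nonunit of `H` has an atom factor (atomicity of `H`). -/
lemma exists_atom_factor {H : Submonoid F} (hF : IsFactorialMonoid F)
    (hu : ∀ a ∈ H, (IsUnitIn H a ↔ IsUnit a)) :
    ∀ h ∈ H, ¬ IsUnitIn H h → ∃ v h', IsAtomIn H v ∧ h' ∈ H ∧ h = v * h' := by
  have aux : ∀ n : ℕ, ∀ h : F, h ∈ H → ¬ IsUnitIn H h →
      ∀ (ε : F) (l : Multiset F), IsUnit ε → (∀ p ∈ l, IsPrimeElem p) →
      h = ε * l.prod → Multiset.card l ≤ n →
      ∃ v h', IsAtomIn H v ∧ h' ∈ H ∧ h = v * h' := by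
    intro n
    induction n with
    | zero =>
        intro h hH hnu ε l hε hpr hfac hcard
        have hl : l = 0 := Multiset.card_eq_zero.mp (Nat.le_zero.mp hcard)
        subst hl
        rw [Multiset.prod_zero, mul_one] at hfac
        exact absurd ((hu h hH).mpr (hfac ▸ hε)) hnu
    | succ n ih =>
        intro h hH hnu ε l hε hpr hfac hcard
        by_cases hatom : IsAtomIn H h
        · exact ⟨h, 1, hatom, H.one_mem, (mul_one h).symm⟩
        have hC : ¬ ∀ b c : F, b ∈ H → c ∈ H → h = b * c → IsUnitIn H b ∨ IsUnitIn H c :=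
          fun hc => hatom ⟨hH, hnu, hc⟩
        push_neg at hC
        obtain ⟨b, c, hbH, hcH, heq, hbu, hcu⟩ := hC
        obtain ⟨l₁, l₂, u₁, u₂, hu₁, hu₂, hsum, hbf, hcf⟩ :=
          splitD l hpr ε b c hε (by rw [← hfac, heq])
        have hl₁ : l₁ ≠ 0 := by
          rintro rfl
          simp only [Multiset.prod_zero, mul_one] at hbf
          exact hbu ((hu b hbH).mpr (hbf ▸ hu₁))
        have hl₂ : l₂ ≠ 0 := by
          rintro rfl
          simp only [Multiset.prod_zero, mul_one] at hcf
          exact hcu ((hu c hcH).mpr (hcf ▸ hu₂))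
        have hcard₁ : Multiset.card l₁ ≤ n := by
          have hcc := congrArg Multiset.card hsum
          rw [Multiset.card_add] at hcc
          have h2 : 0 < Multiset.card l₂ := Multiset.card_pos.mpr hl₂
          omega
        obtain ⟨v, b', hv, hb'H, hbfac⟩ := ih b hbH hbu u₁ l₁ hu₁
          (fun q hq => hpr q (hsum ▸ Multiset.mem_add.mpr (Or.inl hq))) hbf hcard₁
        exact ⟨v, b' * c, hv, H.mul_mem hb'H hcH, by rw [heq, hbfac, mul_assoc]⟩
  intro h hH hnu
  obtain ⟨ε, l, hε, hpr, hfac⟩ := hF h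
  exact aux (Multiset.card l) h hH hnu ε l hε hpr hfac le_rfl

/-- Conductor property: `H ∖ H^×` absorbs multiplication by all of `F`. -/
lemma conductor_prop {H : Submonoid F} (hF : IsFactorialMonoid F)
    (hu : ∀ a ∈ H, (IsUnitIn H a ↔ IsUnit a))
    (hga : ∀ s u : F, s ∉ H → IsAtomIn H u →
      IsAtomIn H (s * u) ∨ ∃ v w : F, IsAtomIn H v ∧ IsAtomIn H w ∧ s * u = v * w) :
    ∀ h ∈ H, ¬ IsUnitIn H h → ∀ y : F, h * y ∈ H ∧ ¬ IsUnitIn H (h * y) := by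
  intro h hH hnu y
  refine ⟨?_, ?_⟩
  · by_cases hy : y ∈ H
    · exact H.mul_mem hH hy
    · obtain ⟨v, h', hv, hh'H, heq⟩ := exists_atom_factor hF hu h hH hnu
      have hyv : y * v ∈ H := by
        rcases hga y v hy hv with hA | ⟨v', w', hv', hw', hvw⟩
        · exact hA.1
        · rw [hvw]; exact H.mul_mem hv'.1 hw'.1
      have hre : h * y = (y * v) * h' := by
        rw [heq]; simp [mul_comm, mul_left_comm, mul_assoc]
      rw [hre]; exact H.mul_mem hyv hh'H
  · rintro ⟨-, k, hkH, hk⟩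
    have : IsUnit h := IsUnit.of_mul_eq_one (y * k) (by rw [← mul_assoc]; exact hk)
    exact hnu ((hu h hH).mpr this)

/-- Key lemma: if `s ∉ H`, `p` is a prime and `ε` a unit with `s·p·ε ∈ H ∖ H^×`, then
`s·p·ε` is an atom of `H`. -/
lemma lemX {H : Submonoid F} (hF : IsFactorialMonoid F)
    (hu : ∀ a ∈ H, (IsUnitIn H a ↔ IsUnit a))
    (hga : ∀ s u : F, s ∉ H → IsAtomIn H u →
      IsAtomIn H (s * u) ∨ ∃ v w : F, IsAtomIn H v ∧ IsAtomIn H w ∧ s * u = v * w)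
    (s p ε : F) (hs : s ∉ H) (hp : IsPrimeElem p) (hε : IsUnit ε)
    (hz : s * (p * ε) ∈ H) (hnu : ¬ IsUnitIn H (s * (p * ε))) :
    IsAtomIn H (s * (p * ε)) := by
  obtain ⟨v, h, hv, hhH, heq⟩ := exists_atom_factor hF hu _ hz hnu
  obtain ⟨εs, ls, hεs, hls, hsf⟩ := hF s
  have key : (εs * ε) * (p ::ₘ ls).prod = v * h := by
    rw [← heq, hsf, Multiset.prod_cons]
    simp [mul_comm, mul_left_comm, mul_assoc]
  obtain ⟨l₁, l₂, u₁, u₂, hu₁, hu₂, hsum, hvf, hhf⟩ :=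
    splitD (p ::ₘ ls)
      (by
        intro q hq
        rcases Multiset.mem_cons.mp hq with rfl | hq
        exacts [hp, hls q hq])
      (εs * ε) v h (hεs.mul hε) key
  have hdvds : ∀ x y : F, x ∈ H → ¬ IsUnitIn H x → s ≠ x * y := by
    intro x y hxH hxnu hsxy
    exact hs (hsxy ▸ (conductor_prop hF hu hga x hxH hxnu y).1)
  have hpmem : p ∈ l₁ + l₂ := hsum ▸ Multiset.mem_cons_self p ls
  rcases Multiset.mem_add.mp hpmem with hp1 | hp2
  · -- p ∈ l₁ : then h divides s, so h must be an H-unit and s·p·ε is an atom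
    obtain ⟨l₁', rfl⟩ := Multiset.exists_cons_of_mem hp1
    have hls_eq : ls = l₁' + l₂ := by
      have h3 : p ::ₘ ls = p ::ₘ (l₁' + l₂) := by rw [hsum, Multiset.cons_add]
      exact (Multiset.cons_inj_right p).mp h3
    obtain ⟨u₂', hu₂'⟩ := hu₂.exists_right_inv
    by_cases hhu : IsUnitIn H h
    · rw [heq]; exact atom_mul_unitIn hv hhu
    · exfalso
      apply hdvds h (εs * u₂' * l₁'.prod) hhH hhu
      rw [hsf, hls_eq, Multiset.prod_add, hhf,
        show u₂ * l₂.prod * (εs * u₂' * l₁'.prod)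
            = (u₂ * u₂') * (εs * (l₁'.prod * l₂.prod)) from by
          simp [mul_comm, mul_left_comm, mul_assoc],
        hu₂', one_mul]
  · -- p ∈ l₂ : then the atom v divides s, contradiction
    obtain ⟨l₂', rfl⟩ := Multiset.exists_cons_of_mem hp2
    have hls_eq : ls = l₁ + l₂' := by
      have h3 : p ::ₘ ls = p ::ₘ (l₁ + l₂') := by
        rw [hsum, add_comm l₁ (p ::ₘ l₂'), Multiset.cons_add, add_comm l₂' l₁]
      exact (Multiset.cons_inj_right p).mp h3
    obtain ⟨u₁', hu₁'⟩ := hu₁.exists_right_inv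
    exfalso
    apply hdvds v (εs * u₁' * l₂'.prod) hv.1 hv.2.1
    rw [hsf, hls_eq, Multiset.prod_add, hvf,
      show u₁ * l₁.prod * (εs * u₁' * l₂'.prod)
          = (u₁ * u₁') * (εs * (l₁.prod * l₂'.prod)) from by
        simp [mul_comm, mul_left_comm, mul_assoc],
      hu₁', one_mul]

/-- Main induction (on the prime length of `t`). -/
lemma mainAux {H : Submonoid F} (hF : IsFactorialMonoid F)
    (hu : ∀ a ∈ H, (IsUnitIn H a ↔ IsUnit a))
    (hga : ∀ s u : F, s ∉ H → IsAtomIn H u →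
      IsAtomIn H (s * u) ∨ ∃ v w : F, IsAtomIn H v ∧ IsAtomIn H w ∧ s * u = v * w) :
    ∀ n : ℕ, ∀ (t ε : F) (l : Multiset F),
    Multiset.card l ≤ n → IsUnit ε → (∀ p ∈ l, IsPrimeElem p) → t = ε * l.prod →
    ∀ s : F, s ∉ H → t ∉ H → s * t ∈ H → ¬ IsUnitIn H (s * t) →
    IsAtomIn H (s * t) ∨ ∃ v w, IsAtomIn H v ∧ IsAtomIn H w ∧ s * t = v * w := by
  have hzerocase : ∀ (t ε : F), IsUnit ε → t = ε → ∀ s : F, s ∉ H → s * t ∈ H →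
      ¬ IsUnitIn H (s * t) → False := by
    intro t ε hε hfac s hs hst hnu
    subst hfac
    obtain ⟨ε', hε'⟩ := hε.exists_right_inv
    have hmem := (conductor_prop hF hu hga _ hst hnu ε').1
    apply hs
    rwa [show s * t * ε' = s from by rw [mul_assoc, hε', mul_one]] at hmem
  intro n
  induction n with
  | zero =>
      intro t ε l hcard hε hpr hfac s hs ht hst hnu
      have hl : l = 0 := Multiset.card_eq_zero.mp (Nat.le_zero.mp hcard)
      subst hl
      rw [Multiset.prod_zero, mul_one] at hfac
      exact absurd (hzerocase t ε hε hfac s hs hst hnu) not_false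
  | succ n ih =>
      intro t ε l hcard hε hpr hfac s hs ht hst hnu
      rcases eq_or_ne l 0 with rfl | hl
      · rw [Multiset.prod_zero, mul_one] at hfac
        exact absurd (hzerocase t ε hε hfac s hs hst hnu) not_false
      · obtain ⟨p, hpmem⟩ := Multiset.exists_mem_of_ne_zero hl
        obtain ⟨l', rfl⟩ := Multiset.exists_cons_of_mem hpmem
        have hp : IsPrimeElem p := hpr p (Multiset.mem_cons_self _ _)
        have hpr' : ∀ q ∈ l', IsPrimeElem q := fun q hq => hpr q (Multiset.mem_cons_of_mem hq)
        have hcard' : Multiset.card l' ≤ n := by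
          rw [Multiset.card_cons] at hcard; omega
        have htsplit : t = p * (ε * l'.prod) := by
          rw [hfac, Multiset.prod_cons]
          simp [mul_comm, mul_left_comm, mul_assoc]
        by_cases ht' : ε * l'.prod ∈ H
        · by_cases hut' : IsUnitIn H (ε * l'.prod)
          · have hunit : IsUnit (ε * l'.prod) := (hu _ ht').mp hut'
            left
            rw [htsplit] at hst hnu ⊢
            exact lemX hF hu hga s p (ε * l'.prod) hs hp hunit hst hnu
          · exfalso
            apply ht
            have hmem := (conductor_prop hF hu hga _ ht' hut' p).1
            rwa [show ε * l'.prod * p = t from by rw [htsplit, mul_comm]] at hmem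
        · by_cases hsp : s * p ∈ H
          · by_cases husp : IsUnitIn H (s * p)
            · exfalso
              have hUs : IsUnit s := isUnit_of_mul_isUnit_left ((hu _ hsp).mp husp)
              obtain ⟨s', hs'⟩ := hUs.exists_right_inv
              have hmem := (conductor_prop hF hu hga _ hst hnu s').1
              apply ht
              rwa [show s * t * s' = t from by
                rw [show s * t * s' = (s * s') * t from by
                  simp [mul_comm, mul_left_comm, mul_assoc], hs', one_mul]] at hmem
            · have h1 : s * (p * 1) ∈ H := by simpa using hsp
              have h2 : ¬ IsUnitIn H (s * (p * 1)) := by simpa using husp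
              have hatom : IsAtomIn H (s * p) := by
                have := lemX hF hu hga s p 1 hs hp isUnit_one h1 h2
                simpa using this
              have hkey : (ε * l'.prod) * (s * p) = s * t := by
                rw [htsplit]; simp [mul_comm, mul_left_comm, mul_assoc]
              rcases hga (ε * l'.prod) (s * p) ht' hatom with hA | ⟨v, w, hv, hw, hvw⟩
              · left; rw [← hkey]; exact hA
              · right; exact ⟨v, w, hv, hw, by rw [← hkey, hvw]⟩
          · have hkey : (s * p) * (ε * l'.prod) = s * t := by
              rw [htsplit]; simp [mul_comm, mul_left_comm, mul_assoc]
            have hres := ih (ε * l'.prod) ε l' hcard' hε hpr' rfl (s * p) hsp ht'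
              (by rw [hkey]; exact hst) (by rw [hkey]; exact hnu)
            rcases hres with hA | ⟨v, w, hv, hw, hvw⟩
            · left; rw [← hkey]; exact hA
            · right; exact ⟨v, w, hv, hw, by rw [← hkey, hvw]⟩

end Aux

/-- for a gap absorbing submonoid `H` of a factorial monoid `F` one has
`𝒢(H)·𝒢(H) ⊆ 𝒢(H) ∪ H^× ∪ 𝒜(H) ∪ 𝒜(H)·𝒜(H)`, where `𝒢(H) = F \ H`. -/
theorem stmt_8 {F : Type*} [CancelCommMonoid F] (hF : IsFactorialMonoid F)
    (H : Submonoid F) (hu : ∀ a ∈ H, (IsUnitIn H a ↔ IsUnit a))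
    (hne : ∃ a ∈ H, ¬ IsUnitIn H a)
    (hga : ∀ s u : F, s ∉ H → IsAtomIn H u →
      IsAtomIn H (s * u) ∨ ∃ v w : F, IsAtomIn H v ∧ IsAtomIn H w ∧ s * u = v * w) :
    ∀ s t : F, s ∉ H → t ∉ H →
      s * t ∉ H ∨ IsUnitIn H (s * t) ∨ IsAtomIn H (s * t) ∨
        ∃ v w : F, IsAtomIn H v ∧ IsAtomIn H w ∧ s * t = v * w := by
  intro s t hs ht
  by_cases hst : s * t ∈ H
  · right
    by_cases hnu : IsUnitIn H (s * t)
    · left; exact hnu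
    · right
      obtain ⟨ε, l, hε, hpr, hfac⟩ := hF t
      exact mainAux hF hu hga (Multiset.card l) t ε l le_rfl hε hpr hfac s hs ht hst hnu
  · left; exact hst
end

section
/- Let F be a factorial monoid and H ⊆ F a submonoid with H ≠ H^× and H^× = F^× ∩ H. Then H is a conductor submonoid (H \ H^× is an s-ideal of F) if and only if H is gap absorbing (𝒢(H)·𝒜(H) ⊆ 𝒜(H) ∪ 𝒜(H)·𝒜(H)). -/
namespace Stmt9Aux

variable {F : Type*} [CancelCommMonoid F]

theorem primeSplit : ∀ (l : Multiset F), (∀ p ∈ l, IsPrimeElem p) →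
    ∀ a b ε : F, IsUnit ε → a * b = ε * l.prod →
    ∃ (A B : Multiset F) (α β : F), A + B = l ∧ IsUnit α ∧ IsUnit β ∧
      a = α * A.prod ∧ b = β * B.prod := by
  intro l
  induction l using Multiset.induction with
  | empty =>
    intro _ a b ε hε h
    simp only [Multiset.prod_zero, mul_one] at h
    have hab : IsUnit (a * b) := h ▸ hε
    exact ⟨0, 0, a, b, by simp, isUnit_of_mul_isUnit_left hab,
      isUnit_of_mul_isUnit_right hab, by simp, by simp⟩
  | cons p l ih =>
    intro hpr a b ε hε h
    have hp : IsPrimeElem p := hpr p (Multiset.mem_cons_self p l)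
    have hl : ∀ q ∈ l, IsPrimeElem q := fun q hq => hpr q (Multiset.mem_cons_of_mem hq)
    have hdvd : p ∣ a * b := ⟨ε * l.prod, by
      rw [h, Multiset.prod_cons]
      rw [mul_left_comm]⟩
    rcases hp.2 a b hdvd with ⟨a', rfl⟩ | ⟨b', rfl⟩
    · have h2 : p * (a' * b) = p * (ε * l.prod) := by
        rw [← mul_assoc, h, Multiset.prod_cons, mul_left_comm]
      have h3 := mul_left_cancel h2
      obtain ⟨A, B, α, β, hAB, hα, hβ, ha, hb⟩ := ih hl a' b ε hε h3
      exact ⟨p ::ₘ A, B, α, β, by rw [Multiset.cons_add, hAB], hα, hβ,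
        by rw [Multiset.prod_cons, ha, mul_left_comm], hb⟩
    · have h2 : p * (a * b') = p * (ε * l.prod) := by
        rw [mul_left_comm, h, Multiset.prod_cons, mul_left_comm]
      have h3 := mul_left_cancel h2
      obtain ⟨A, B, α, β, hAB, hα, hβ, ha, hb⟩ := ih hl a b' ε hε h3
      exact ⟨A, p ::ₘ B, α, β, by rw [Multiset.add_cons, hAB], hα, hβ, ha,
        by rw [Multiset.prod_cons, hb, mul_left_comm]⟩

set_option linter.unusedSectionVars false

theorem msplitLe [DecidableEq F] (M A B : Multiset F) (h : M ≤ A + B) :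
    (M ∩ A) + (M - A) = M ∧ M ∩ A ≤ A ∧ M - A ≤ B := by
  have hc := fun p => Multiset.le_iff_count.mp h p
  refine ⟨Multiset.ext.mpr fun p => ?_, Multiset.inter_le_right,
    Multiset.le_iff_count.mpr fun p => ?_⟩
  · have := hc p
    rw [Multiset.count_add, Multiset.count_inter, Multiset.count_sub]
    omega
  · have := hc p
    rw [Multiset.count_sub]
    rw [Multiset.count_add] at this
    omega

theorem msub_le [DecidableEq F] (M₁ M₂ W Z : Multiset F) (h : M₁ + M₂ = W + Z) :
    (M₁ - W) + (M₂ - W) ≤ Z := by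
  refine Multiset.le_iff_count.mpr fun p => ?_
  have := congrArg (Multiset.count p) h
  simp only [Multiset.count_add] at this
  rw [Multiset.count_add, Multiset.count_sub, Multiset.count_sub]
  omega

theorem msub_split [DecidableEq F] (R Z S : Multiset F) (h1 : R ≤ Z) (h2 : Z ≤ S) :
    S - R = (S - Z) + (Z - R) := by
  have hc1 := fun p => Multiset.le_iff_count.mp h1 p
  have hc2 := fun p => Multiset.le_iff_count.mp h2 p
  refine Multiset.ext.mpr fun p => ?_
  rw [Multiset.count_sub, Multiset.count_add, Multiset.count_sub, Multiset.count_sub]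
  have := hc1 p; have := hc2 p
  omega

theorem shift_unit {γ γ' x y : F} (h : γ * γ' = 1) (hx : γ' * x = y) : x = γ * y := by
  rw [← hx, ← mul_assoc, h, one_mul]

abbrev NUx (H : Submonoid F) (a : F) : Prop := a ∈ H ∧ ¬ IsUnitIn H a

def Conf [DecidableEq F] (H : Submonoid F) (σ υ : F) (S U : Multiset F) (k l : ℕ) : Prop :=
  ∃ W Z : Multiset F, W ≤ U ∧ Z ≤ S ∧ Multiset.card W = k ∧ Multiset.card Z = l ∧
    NUx H (W.prod * Z.prod) ∧ NUx H (σ * υ * (U - W).prod * (S - Z).prod)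

theorem conf_mul [DecidableEq F] (σ υ : F) (S U W Z : Multiset F) (hW : W ≤ U) (hZ : Z ≤ S) :
    (W.prod * Z.prod) * (σ * υ * (U - W).prod * (S - Z).prod) = (σ * S.prod) * (υ * U.prod) := by
  have hU : (U - W).prod * W.prod = U.prod := by
    rw [← Multiset.prod_add, tsub_add_cancel_of_le hW]
  have hS : (S - Z).prod * Z.prod = S.prod := by
    rw [← Multiset.prod_add, tsub_add_cancel_of_le hZ]
  rw [← hU, ← hS]
  ac_rfl

theorem forward (hF : IsFactorialMonoid F) (H : Submonoid F)
    (cond : ∀ a ∈ H, ¬ IsUnitIn H a → ∀ y : F, a * y ∈ H ∧ ¬ IsUnitIn H (a * y)) :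
    ∀ s u : F, s ∉ H → IsAtomIn H u →
      IsAtomIn H (s * u) ∨ ∃ v w : F, IsAtomIn H v ∧ IsAtomIn H w ∧ s * u = v * w := by
  classical
  intro s u hs hu
  have hNU : ∀ {a : F}, NUx H a → ∀ y, NUx H (a * y) := fun {a} ha y => cond a ha.1 ha.2 y
  have hNUeq : ∀ {a x : F}, NUx H a → ∀ y, x = a * y → NUx H x :=
    fun {a x} ha y hx => hx ▸ hNU ha y
  have htNU : NUx H (s * u) := by
    have := hNU (a := u) ⟨hu.1, hu.2.1⟩ s
    rwa [mul_comm] at this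
  by_cases hcomp : ∃ b c : F, NUx H b ∧ NUx H c ∧ s * u = b * c
  swap
  · left
    refine ⟨htNU.1, htNU.2, fun b c hb hc heq => ?_⟩
    by_contra hn
    push_neg at hn
    exact hcomp ⟨b, c, ⟨hb, hn.1⟩, ⟨hc, hn.2⟩, heq⟩
  · right
    obtain ⟨σ, S, hσ, hSp, hsEq⟩ := hF s
    obtain ⟨υ, U, hυ, hUp, huEq⟩ := hF u
    have hSUp : ∀ p ∈ S + U, IsPrimeElem p := fun p hp => by
      rcases Multiset.mem_add.mp hp with h | h
      exacts [hSp p h, hUp p h]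
    have htprod : s * u = (σ * υ) * (S + U).prod := by
      rw [hsEq, huEq, Multiset.prod_add]; ac_rfl
    obtain ⟨b₀, c₀, hb₀, hc₀, hbc₀⟩ := hcomp
    have h0 : b₀ * c₀ = (σ * υ) * (S + U).prod := by rw [← hbc₀]; exact htprod
    obtain ⟨M₁, M₂, β, γ, hM, hβ, hγ, hbeq0, hceq0⟩ :=
      primeSplit (S + U) hSUp b₀ c₀ (σ * υ) (hσ.mul hυ) h0
    have hM₁le : M₁ ≤ S + U := hM ▸ Multiset.le_add_right M₁ M₂
    obtain ⟨hZW₀, hZ₀S, hW₀U⟩ := msplitLe M₁ S U hM₁le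
    obtain ⟨β', hββ'⟩ := hβ.exists_right_inv
    have hprodM₁ : M₁.prod = b₀ * β' := by
      rw [hbeq0, mul_right_comm, hββ', one_mul]
    have hWZeq : (M₁ - S).prod * (M₁ ∩ S).prod = b₀ * β' := by
      rw [← hprodM₁, ← Multiset.prod_add, add_comm, hZW₀]
    have hbNU₀ : NUx H ((M₁ - S).prod * (M₁ ∩ S).prod) := hNUeq hb₀ β' hWZeq
    have hcmul0 : ((M₁ - S).prod * (M₁ ∩ S).prod) *
        (σ * υ * (U - (M₁ - S)).prod * (S - (M₁ ∩ S)).prod) = b₀ * c₀ := by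
      rw [conf_mul σ υ S U _ _ hW₀U hZ₀S, ← hsEq, ← huEq, hbc₀]
    have hcNU₀ : NUx H (σ * υ * (U - (M₁ - S)).prod * (S - (M₁ ∩ S)).prod) := by
      refine hNUeq hc₀ β ?_
      rw [hWZeq] at hcmul0
      have h1 : b₀ * (β' * (σ * υ * (U - (M₁ - S)).prod * (S - (M₁ ∩ S)).prod)) = b₀ * c₀ := by
        rw [← mul_assoc]; exact hcmul0
      have h2 := mul_left_cancel h1
      rw [shift_unit hββ' h2, mul_comm]
    have conf₀ : Conf H σ υ S U (Multiset.card (M₁ - S)) (Multiset.card (M₁ ∩ S)) :=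
      ⟨M₁ - S, M₁ ∩ S, hW₀U, hZ₀S, rfl, rfl, hbNU₀, hcNU₀⟩
    have confBound : ∀ k l, Conf H σ υ S U k l → k ≤ Multiset.card U := by
      rintro k l ⟨W, Z, hWU, -, hk, -, -, -⟩
      exact hk ▸ Multiset.card_le_card hWU
    set P : ℕ → Prop := fun k => ∃ l, Conf H σ υ S U k l with hPdef
    have hPk₀ : P (Multiset.card (M₁ - S)) := ⟨_, conf₀⟩
    have hk₀spec : P (Nat.findGreatest P (Multiset.card U)) :=
      Nat.findGreatest_spec (confBound _ _ conf₀) hPk₀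
    set k₀ := Nat.findGreatest P (Multiset.card U) with hk₀def
    have hk₀max : ∀ k l, Conf H σ υ S U k l → k ≤ k₀ := fun k l hc =>
      Nat.le_findGreatest (confBound k l hc) ⟨l, hc⟩
    have hLne : {l | Conf H σ υ S U k₀ l}.Nonempty := hk₀spec
    have hl₀ : Conf H σ υ S U k₀ (sInf {l | Conf H σ υ S U k₀ l}) := Nat.sInf_mem hLne
    set l₀ := sInf {l | Conf H σ υ S U k₀ l} with hl₀def
    have hl₀min : ∀ l, Conf H σ υ S U k₀ l → l₀ ≤ l := fun l hl => Nat.sInf_le hl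
    obtain ⟨W, Z, hWU, hZS, hWk, hZl, hbNU, hcNU⟩ := hl₀
    have hbc : (W.prod * Z.prod) * (σ * υ * (U - W).prod * (S - Z).prod) = s * u := by
      rw [conf_mul σ υ S U W Z hWU hZS, ← hsEq, ← huEq]
    -- key lemma for the c-side: pieces of a factorization of c cannot carry U-primes
    have keyC : ∀ (M : Multiset F) (δ cself cother : F), IsUnit δ → NUx H cself →
        NUx H cother → cself = δ * M.prod → M ≤ (U - W) + (S - Z) →
        σ * υ * (U - W).prod * (S - Z).prod = cself * cother →
        M ∩ (U - W) = 0 := by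
      intro M δ cself cother hδ hcs hco hcsEq hMle hsplit
      obtain ⟨hABM, hAle, hBle⟩ := msplitLe M (U - W) (S - Z) hMle
      obtain ⟨δ', hδδ'⟩ := hδ.exists_right_inv
      have hMprod : M.prod = cself * δ' := by rw [hcsEq, mul_right_comm, hδδ', one_mul]
      have hW' : W + M ∩ (U - W) ≤ U := by
        calc W + M ∩ (U - W) ≤ W + (U - W) := add_le_add le_rfl hAle
        _ = U := add_tsub_cancel_of_le hWU
      have hZ' : Z + (M - (U - W)) ≤ S := by
        calc Z + (M - (U - W)) ≤ Z + (S - Z) := add_le_add le_rfl hBle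
        _ = S := add_tsub_cancel_of_le hZS
      have hMp2 : (M ∩ (U - W)).prod * (M - (U - W)).prod = M.prod := by
        rw [← Multiset.prod_add, hABM]
      have hnb : (W + M ∩ (U - W)).prod * (Z + (M - (U - W))).prod
          = (W.prod * Z.prod) * M.prod := by
        rw [Multiset.prod_add, Multiset.prod_add, ← hMp2]
        ac_rfl
      have hnbNU : NUx H ((W + M ∩ (U - W)).prod * (Z + (M - (U - W))).prod) :=
        hNUeq hbNU M.prod hnb
      have hnmul : ((W + M ∩ (U - W)).prod * (Z + (M - (U - W))).prod) *
          (σ * υ * (U - (W + M ∩ (U - W))).prod * (S - (Z + (M - (U - W)))).prod)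
          = (W.prod * Z.prod) * (cself * cother) := by
        rw [conf_mul σ υ S U _ _ hW' hZ', ← hsplit, conf_mul σ υ S U W Z hWU hZS]
      have hncNU : NUx H (σ * υ * (U - (W + M ∩ (U - W))).prod *
          (S - (Z + (M - (U - W)))).prod) := by
        refine hNUeq hco δ ?_
        have h2 : (W.prod * Z.prod) * (cself * (δ' *
            (σ * υ * (U - (W + M ∩ (U - W))).prod * (S - (Z + (M - (U - W)))).prod)))
            = (W.prod * Z.prod) * (cself * cother) := by
          calc (W.prod * Z.prod) * (cself * (δ' *
              (σ * υ * (U - (W + M ∩ (U - W))).prod * (S - (Z + (M - (U - W)))).prod)))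
              = ((W.prod * Z.prod) * (cself * δ')) *
                (σ * υ * (U - (W + M ∩ (U - W))).prod * (S - (Z + (M - (U - W)))).prod) := by
                ac_rfl
          _ = ((W + M ∩ (U - W)).prod * (Z + (M - (U - W))).prod) *
                (σ * υ * (U - (W + M ∩ (U - W))).prod * (S - (Z + (M - (U - W)))).prod) := by
                rw [hnb, hMprod]
          _ = (W.prod * Z.prod) * (cself * cother) := hnmul
        have h3 := mul_left_cancel (mul_left_cancel h2)
        rw [shift_unit hδδ' h3, mul_comm]
      have hle := hk₀max _ _ ⟨W + M ∩ (U - W), Z + (M - (U - W)), hW', hZ', rfl, rfl,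
        hnbNU, hncNU⟩
      rw [Multiset.card_add, hWk] at hle
      exact Multiset.card_eq_zero.mp (by omega)
    -- c is an atom
    have hcAtom : IsAtomIn H (σ * υ * (U - W).prod * (S - Z).prod) := by
      refine ⟨hcNU.1, hcNU.2, fun c₁ c₂ hc₁H hc₂H hceq => ?_⟩
      by_contra hn
      push_neg at hn
      have hc₁ : NUx H c₁ := ⟨hc₁H, hn.1⟩
      have hc₂ : NUx H c₂ := ⟨hc₂H, hn.2⟩
      have hprimes' : ∀ p ∈ (U - W) + (S - Z), IsPrimeElem p := fun p hp => by
        rcases Multiset.mem_add.mp hp with h | h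
        · exact hUp p (Multiset.mem_of_le tsub_le_self h)
        · exact hSp p (Multiset.mem_of_le tsub_le_self h)
      have hceq' : c₁ * c₂ = (σ * υ) * ((U - W) + (S - Z)).prod := by
        rw [← hceq, Multiset.prod_add]; ac_rfl
      obtain ⟨M₁, M₂, γ₁, γ₂, hM, hγ₁, hγ₂, he₁, he₂⟩ :=
        primeSplit _ hprimes' c₁ c₂ (σ * υ) (hσ.mul hυ) hceq'
      have hA1 := keyC M₁ γ₁ c₁ c₂ hγ₁ hc₁ hc₂ he₁
        (hM ▸ Multiset.le_add_right M₁ M₂) hceq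
      have hA2 := keyC M₂ γ₂ c₂ c₁ hγ₂ hc₂ hc₁ he₂
        (hM ▸ Multiset.le_add_left M₂ M₁) (by rw [hceq, mul_comm])
      have hUW0 : U - W = 0 := by
        refine Multiset.ext.mpr fun p => ?_
        have h1 := congrArg (Multiset.count p) hA1
        have h2 := congrArg (Multiset.count p) hA2
        have h3 := congrArg (Multiset.count p) hM
        simp only [Multiset.count_inter, Multiset.count_add, Multiset.count_zero] at h1 h2 h3 ⊢
        omega
      obtain ⟨υ', hυυ'⟩ := hυ.exists_right_inv
      have hfin : (σ * υ * (U - W).prod * (S - Z).prod) * (υ' * Z.prod) = s := by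
        rw [hUW0, Multiset.prod_zero, mul_one, hsEq]
        have hSp2 : (S - Z).prod * Z.prod = S.prod := by
          rw [← Multiset.prod_add, tsub_add_cancel_of_le hZS]
        rw [← hSp2]
        have hac : σ * υ * (S - Z).prod * (υ' * Z.prod)
            = σ * ((S - Z).prod * Z.prod) * (υ * υ') := by ac_rfl
        rw [hac, hυυ', mul_one]
      exact hs ((hNUeq hcNU (υ' * Z.prod) hfin.symm).1)
    -- key lemma for the b-side
    have keyB : ∀ (M : Multiset F) (δ bi : F), IsUnit δ → NUx H bi →
        bi = δ * M.prod → M ≤ W + Z → l₀ ≤ Multiset.card (M - W) := by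
      intro M δ bi hδ hbi hbiEq hMle
      obtain ⟨hVRM, hVle, hRle⟩ := msplitLe M W Z hMle
      obtain ⟨δ', hδδ'⟩ := hδ.exists_right_inv
      have hMprod : M.prod = bi * δ' := by rw [hbiEq, mul_right_comm, hδδ', one_mul]
      have hW2 : (M ∩ W) + (W - (M ∩ W)) = W := add_tsub_cancel_of_le hVle
      have hnb : W.prod * (M - W).prod = bi * (δ' * (W - (M ∩ W)).prod) := by
        calc W.prod * (M - W).prod
            = ((M ∩ W) + (W - (M ∩ W))).prod * (M - W).prod := by rw [hW2]
        _ = ((M ∩ W).prod * (M - W).prod) * (W - (M ∩ W)).prod := by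
              rw [Multiset.prod_add]; ac_rfl
        _ = M.prod * (W - (M ∩ W)).prod := by rw [← Multiset.prod_add, hVRM]
        _ = bi * (δ' * (W - (M ∩ W)).prod) := by rw [hMprod]; ac_rfl
      have hnbNU : NUx H (W.prod * (M - W).prod) := hNUeq hbi _ hnb
      have hRS : M - W ≤ S := le_trans hRle hZS
      have hnc : σ * υ * (U - W).prod * (S - (M - W)).prod
          = (σ * υ * (U - W).prod * (S - Z).prod) * (Z - (M - W)).prod := by
        rw [msub_split (M - W) Z S hRle hZS, Multiset.prod_add]; ac_rfl
      have hncNU : NUx H (σ * υ * (U - W).prod * (S - (M - W)).prod) := hNUeq hcNU _ hnc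
      exact hl₀min _ ⟨W, M - W, hWU, hRS, hWk, rfl, hnbNU, hncNU⟩
    -- b is an atom
    have hbAtom : IsAtomIn H (W.prod * Z.prod) := by
      refine ⟨hbNU.1, hbNU.2, fun b₁ b₂ hb₁H hb₂H hbeq => ?_⟩
      by_contra hn
      push_neg at hn
      have hb₁ : NUx H b₁ := ⟨hb₁H, hn.1⟩
      have hb₂ : NUx H b₂ := ⟨hb₂H, hn.2⟩
      have hprimesWZ : ∀ p ∈ W + Z, IsPrimeElem p := fun p hp => by
        rcases Multiset.mem_add.mp hp with h | h
        · exact hUp p (Multiset.mem_of_le hWU h)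
        · exact hSp p (Multiset.mem_of_le hZS h)
      have heq' : b₁ * b₂ = (1 : F) * (W + Z).prod := by
        rw [one_mul, ← hbeq, Multiset.prod_add]
      obtain ⟨M₁, M₂, β₁, β₂, hM, hβ₁, hβ₂, he₁, he₂⟩ :=
        primeSplit _ hprimesWZ b₁ b₂ 1 isUnit_one heq'
      have hc1 := keyB M₁ β₁ b₁ hβ₁ hb₁ he₁ (hM ▸ Multiset.le_add_right M₁ M₂)
      have hc2 := keyB M₂ β₂ b₂ hβ₂ hb₂ he₂ (hM ▸ Multiset.le_add_left M₂ M₁)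
      have hsum := Multiset.card_le_card (msub_le M₁ M₂ W Z hM)
      rw [Multiset.card_add] at hsum
      have hZl' : Multiset.card Z = l₀ := hZl
      have hZ0 : Z = 0 := Multiset.card_eq_zero.mp (by omega)
      have hufact : u = b₁ * (b₂ * (υ * (U - W).prod)) := by
        have hU2 : (W + (U - W)).prod = U.prod := by rw [add_tsub_cancel_of_le hWU]
        rw [Multiset.prod_add] at hU2
        have hb' : W.prod = b₁ * b₂ := by
          have h4 := hbeq
          rw [hZ0, Multiset.prod_zero, mul_one] at h4
          exact h4
        rw [huEq, ← hU2, hb']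
        ac_rfl
      have hsecNU : NUx H (b₂ * (υ * (U - W).prod)) := hNU hb₂ _
      rcases hu.2.2 b₁ _ hb₁H hsecNU.1 hufact with h | h
      · exact hb₁.2 h
      · exact hsecNU.2 h
    exact ⟨_, _, hbAtom, hcAtom, hbc.symm⟩

theorem reverse (hF : IsFactorialMonoid F) (H : Submonoid F)
    (hu : ∀ a ∈ H, (IsUnitIn H a ↔ IsUnit a))
    (gap : ∀ s u : F, s ∉ H → IsAtomIn H u →
      IsAtomIn H (s * u) ∨ ∃ v w : F, IsAtomIn H v ∧ IsAtomIn H w ∧ s * u = v * w) :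
    ∀ a ∈ H, ¬ IsUnitIn H a → ∀ y : F, a * y ∈ H ∧ ¬ IsUnitIn H (a * y) := by
  classical
  have main : ∀ n : ℕ, ∀ a : F, a ∈ H → ¬ IsUnitIn H a →
      (∃ (ε : F) (l : Multiset F), IsUnit ε ∧ (∀ p ∈ l, IsPrimeElem p) ∧ a = ε * l.prod ∧
        Multiset.card l ≤ n) → ∀ y : F, a * y ∈ H ∧ ¬ IsUnitIn H (a * y) := by
    intro n
    induction n with
    | zero =>
      rintro a haH hanu ⟨ε, l, hε, -, haeq, hcard⟩ y
      exfalso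
      have hl0 : l = 0 := Multiset.card_eq_zero.mp (Nat.le_zero.mp hcard)
      rw [hl0, Multiset.prod_zero, mul_one] at haeq
      exact hanu ((hu a haH).mpr (haeq ▸ hε))
    | succ n ih =>
      rintro a haH hanu ⟨ε, l, hε, hlp, haeq, hcard⟩ y
      by_cases hat : IsAtomIn H a
      · by_cases hyH : y ∈ H
        · refine ⟨H.mul_mem haH hyH, fun hun => ?_⟩
          have h1 : IsUnit (a * y) := (hu _ (H.mul_mem haH hyH)).mp hun
          exact hanu ((hu a haH).mpr (isUnit_of_mul_isUnit_left h1))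
        · rcases gap y a hyH hat with h | ⟨v, w, hv, hw, hvw⟩
          · rw [mul_comm]; exact ⟨h.1, h.2.1⟩
          · rw [mul_comm, hvw]
            refine ⟨H.mul_mem hv.1 hw.1, fun hun => ?_⟩
            have h2 : IsUnit (v * w) := (hu _ (H.mul_mem hv.1 hw.1)).mp hun
            exact hv.2.1 ((hu v hv.1).mpr (isUnit_of_mul_isUnit_left h2))
      · have hsplit : ∃ b c : F, b ∈ H ∧ c ∈ H ∧ a = b * c ∧
            ¬ IsUnitIn H b ∧ ¬ IsUnitIn H c := by
          by_contra hno
          push_neg at hno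
          refine hat ⟨haH, hanu, fun b c hb hc heq => ?_⟩
          by_cases hub : IsUnitIn H b
          · exact Or.inl hub
          · exact Or.inr (hno b c hb hc heq hub)
        obtain ⟨b, c, hbH, hcH, habc, hbnu, hcnu⟩ := hsplit
        have h0 : b * c = ε * l.prod := by rw [← habc]; exact haeq
        obtain ⟨M₁, M₂, β₁, β₂, hM, hβ₁, hβ₂, hbe, hce⟩ := primeSplit l hlp b c ε hε h0
        have hM₂ne : M₂ ≠ 0 := by
          intro h
          rw [h, Multiset.prod_zero, mul_one] at hce
          exact hcnu ((hu c hcH).mpr (hce ▸ hβ₂))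
        have hM₁card : Multiset.card M₁ ≤ n := by
          have h3 := congrArg Multiset.card hM
          rw [Multiset.card_add] at h3
          have h2 : 0 < Multiset.card M₂ := Multiset.card_pos.mpr hM₂ne
          omega
        have hM₁p : ∀ p ∈ M₁, IsPrimeElem p := fun p hp =>
          hlp p (by rw [← hM]; exact Multiset.mem_add.mpr (Or.inl hp))
        have hbStep := ih b hbH hbnu ⟨β₁, M₁, hβ₁, hM₁p, hbe, hM₁card⟩ (c * y)
        have heq2 : a * y = b * (c * y) := by rw [habc, mul_assoc]
        rw [heq2]
        exact hbStep
  intro a haH hanu y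
  obtain ⟨ε, l, hε, hlp, haeq⟩ := hF a
  exact main (Multiset.card l) a haH hanu ⟨ε, l, hε, hlp, haeq, le_refl _⟩ y

end Stmt9Aux

/-- for a submonoid `H` of a factorial monoid `F` with `H ≠ H^×` and
`H^× = F^× ∩ H`, `H` is a conductor submonoid (`H \ H^×` is an s-ideal of `F`) iff `H` is
gap absorbing (`𝒢(H)·𝒜(H) ⊆ 𝒜(H) ∪ 𝒜(H)·𝒜(H)`). -/
theorem stmt_9 {F : Type*} [CancelCommMonoid F] (hF : IsFactorialMonoid F)
    (H : Submonoid F) (hu : ∀ a ∈ H, (IsUnitIn H a ↔ IsUnit a))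
    (hne : ∃ a ∈ H, ¬ IsUnitIn H a) :
    (∀ a ∈ H, ¬ IsUnitIn H a → ∀ y : F, a * y ∈ H ∧ ¬ IsUnitIn H (a * y)) ↔
      (∀ s u : F, s ∉ H → IsAtomIn H u →
        IsAtomIn H (s * u) ∨ ∃ v w : F, IsAtomIn H v ∧ IsAtomIn H w ∧ s * u = v * w) := by
  exact ⟨fun cond => Stmt9Aux.forward hF H cond, fun gap => Stmt9Aux.reverse hF H hu gap⟩
end

section
/- Let K ⊊ L be fields and n ∈ ℕ. Then D = K + XⁿL[[X]] is a conductor subring of the factorial domain L[[X]]: D \ D^× equals its conductor ideal, and the set of nonzero nonunits of D forms an s-ideal of the multiplicative monoid of nonzero elements of L[[X]]. -/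
/-- for fields `K ⊊ L` and `n ≥ 1`, `D = K + XⁿL[[X]]` is a conductor
subring of the factorial domain `L[[X]]`: `D` is a subring, `D = (D : L[[X]]) ∪ D^×`
(equivalently, `D \ D^×` equals the conductor), and the nonzero nonunits of `D` form an
s-ideal of the multiplicative monoid of nonzero elements of `L[[X]]`. -/
theorem stmt_11 {L : Type*} [Field L] (K : Subfield L) (hK : K ≠ ⊤) (n : ℕ) (hn : 1 ≤ n)
    (D : Set (PowerSeries L))
    (hD : D = {f | PowerSeries.coeff 0 f ∈ K ∧
      ∀ i : ℕ, 1 ≤ i → i < n → PowerSeries.coeff i f = 0}) :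
    (1 ∈ D ∧ (∀ f ∈ D, ∀ g ∈ D, f + g ∈ D ∧ f * g ∈ D) ∧ ∀ f ∈ D, -f ∈ D) ∧
    (∀ f ∈ D, (∀ g : PowerSeries L, f * g ∈ D) ∨ ∃ g ∈ D, f * g = 1) ∧
    (∀ f ∈ D, (¬ ∃ g ∈ D, f * g = 1) ↔ ∀ g : PowerSeries L, f * g ∈ D) ∧
    (∀ f ∈ D, f ≠ 0 → (¬ ∃ g ∈ D, f * g = 1) →
      ∀ h : PowerSeries L, h ≠ 0 →
        f * h ∈ D ∧ f * h ≠ 0 ∧ ¬ ∃ g ∈ D, (f * h) * g = 1) := by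
  subst hD
  obtain ⟨a, ha⟩ : ∃ a : L, a ∉ K := by
    by_contra h
    push_neg at h
    exact hK (SetLike.ext fun x => ⟨fun _ => trivial, fun _ => h x⟩)
  -- basic membership facts
  set Co := fun (i : ℕ) (f : PowerSeries L) => PowerSeries.coeff i f with hCo
  have hzero : ∀ f : PowerSeries L,
      (PowerSeries.coeff 0 f ∈ K ∧ ∀ i : ℕ, 1 ≤ i → i < n → PowerSeries.coeff i f = 0) →
      PowerSeries.coeff 0 f = 0 →
      ∀ g : PowerSeries L, ∀ i : ℕ, i < n → PowerSeries.coeff i (f * g) = 0 := by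
    intro f hf hf0 g i hi
    rw [PowerSeries.coeff_mul]
    apply Finset.sum_eq_zero
    intro x hx
    rw [Finset.HasAntidiagonal.mem_antidiagonal] at hx
    have hx1 : x.1 < n := lt_of_le_of_lt (hx ▸ Nat.le_add_right x.1 x.2) hi
    rcases Nat.eq_zero_or_pos x.1 with h0 | h0
    · rw [h0, hf0, zero_mul]
    · rw [hf.2 x.1 h0 hx1, zero_mul]
  -- if f ∈ D with nonzero constant coeff, then f⁻¹ ∈ D and f * f⁻¹ = 1
  have hinv : ∀ f : PowerSeries L,
      (PowerSeries.coeff 0 f ∈ K ∧ ∀ i : ℕ, 1 ≤ i → i < n → PowerSeries.coeff i f = 0) →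
      PowerSeries.coeff 0 f ≠ 0 →
      (PowerSeries.coeff 0 f⁻¹ ∈ K ∧
        ∀ i : ℕ, 1 ≤ i → i < n → PowerSeries.coeff i f⁻¹ = 0) ∧ f * f⁻¹ = 1 := by
    intro f hf hf0
    have hc : PowerSeries.constantCoeff f ≠ 0 := by
      rwa [← PowerSeries.coeff_zero_eq_constantCoeff]
    refine ⟨⟨?_, ?_⟩, PowerSeries.mul_inv_cancel f hc⟩
    · rw [PowerSeries.coeff_inv, if_pos rfl, ← PowerSeries.coeff_zero_eq_constantCoeff]
      exact K.inv_mem hf.1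
    · intro i hi hin
      rw [PowerSeries.coeff_inv, if_neg (by omega)]
      have : (∑ x ∈ Finset.HasAntidiagonal.antidiagonal i,
          if x.2 < i then PowerSeries.coeff x.1 f * PowerSeries.coeff x.2 f⁻¹ else 0) = 0 := by
        apply Finset.sum_eq_zero
        intro x hx
        rw [Finset.HasAntidiagonal.mem_antidiagonal] at hx
        by_cases h2 : x.2 < i
        · rw [if_pos h2]
          have h1 : 1 ≤ x.1 := by omega
          have h1' : x.1 < n := by omega
          rw [hf.2 x.1 h1 h1', zero_mul]
        · rw [if_neg h2]
      rw [this, mul_zero]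
  -- if f ∈ D has nonzero constant coeff, then ¬ (∀ g, f * g ∈ D)
  have hnotall : ∀ f : PowerSeries L,
      PowerSeries.coeff 0 f ≠ 0 →
      ¬ (∀ g : PowerSeries L, PowerSeries.coeff 0 (f * g) ∈ K ∧
        ∀ i : ℕ, 1 ≤ i → i < n → PowerSeries.coeff i (f * g) = 0) := by
    intro f hf0 hall
    have hc : PowerSeries.constantCoeff f ≠ 0 := by
      rwa [← PowerSeries.coeff_zero_eq_constantCoeff]
    have := (hall (f⁻¹ * PowerSeries.C a)).1
    rw [← mul_assoc, PowerSeries.mul_inv_cancel f hc, one_mul] at this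
    simp only [PowerSeries.coeff_zero_eq_constantCoeff, PowerSeries.constantCoeff_C] at this
    exact ha this
  -- subring facts
  refine ⟨⟨?_, ?_, ?_⟩, ?_, ?_, ?_⟩
  · constructor
    · simpa using K.one_mem
    · intro i hi hin
      rw [PowerSeries.coeff_one, if_neg (by omega)]
  · intro f hf g hg
    refine ⟨⟨?_, ?_⟩, ?_, ?_⟩
    · rw [map_add]; exact K.add_mem hf.1 hg.1
    · intro i hi hin; rw [map_add, hf.2 i hi hin, hg.2 i hi hin, add_zero]
    · have h1 := hf.1
      have h2 := hg.1
      rw [PowerSeries.coeff_zero_eq_constantCoeff] at h1 h2 ⊢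
      rw [map_mul]
      exact K.mul_mem h1 h2
    · intro i hi hin
      rw [PowerSeries.coeff_mul]
      apply Finset.sum_eq_zero
      intro x hx
      rw [Finset.HasAntidiagonal.mem_antidiagonal] at hx
      rcases Nat.eq_zero_or_pos x.1 with h0 | h0
      · have : x.2 = i := by omega
        rw [this, hg.2 i hi hin, mul_zero]
      · rw [hf.2 x.1 h0 (by omega), zero_mul]
  · intro f hf
    refine ⟨?_, ?_⟩
    · rw [map_neg]; exact K.neg_mem hf.1
    · intro i hi hin; rw [map_neg, hf.2 i hi hin, neg_zero]
  · -- dichotomy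
    intro f hf
    by_cases hf0 : PowerSeries.coeff 0 f = 0
    · left
      intro g
      exact ⟨(hzero f hf hf0 g 0 (by omega)) ▸ K.zero_mem,
        fun i hi hin => hzero f hf hf0 g i hin⟩
    · right
      obtain ⟨hfi, hmul⟩ := hinv f hf hf0
      exact ⟨f⁻¹, hfi, hmul⟩
  · -- iff
    intro f hf
    constructor
    · intro hnu
      by_cases hf0 : PowerSeries.coeff 0 f = 0
      · intro g
        exact ⟨(hzero f hf hf0 g 0 (by omega)) ▸ K.zero_mem,
          fun i hi hin => hzero f hf hf0 g i hin⟩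
      · obtain ⟨hfi, hmul⟩ := hinv f hf hf0
        exact absurd ⟨f⁻¹, hfi, hmul⟩ hnu
    · intro hall ⟨g, _, hfg⟩
      have hf0 : PowerSeries.coeff 0 f ≠ 0 := by
        intro h0
        have := congrArg (PowerSeries.coeff 0) hfg
        rw [hzero f hf h0 g 0 (by omega)] at this
        simp at this
      exact hnotall f hf0 hall
  · -- s-ideal
    intro f hf hfne hnu h hhne
    have hf0 : PowerSeries.coeff 0 f = 0 := by
      by_contra hf0
      obtain ⟨hfi, hmul⟩ := hinv f hf hf0
      exact hnu ⟨f⁻¹, hfi, hmul⟩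
    refine ⟨⟨(hzero f hf hf0 h 0 (by omega)) ▸ K.zero_mem,
      fun i hi hin => hzero f hf hf0 h i hin⟩, mul_ne_zero hfne hhne, ?_⟩
    rintro ⟨g, _, hfg⟩
    have := congrArg (PowerSeries.coeff 0) hfg
    rw [mul_assoc, hzero f hf hf0 (h * g) 0 (by omega)] at this
    simp at this
end

section
/- Let G be an abelian group and G₀ ⊆ G a finite set of torsion elements. Then the monoid F_ι(G₀) = {S ∈ ℱ(G₀) : S is not zero-sum free} ∪ {1} is a finitely generated submonoid of the free abelian monoid ℱ(G₀). -/
/-- for an abelian group `G` and a finite set `G₀` of torsion elements of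
`G`, the monoid `F_ι(G₀)` of sequences over `G₀` that are not zero-sum free (together with
the empty sequence) is a finitely generated submonoid of the free abelian monoid on `G₀`
(realized as multisets with support in `G₀`). -/
theorem stmt_12 {G : Type*} [AddCommGroup G] (G₀ : Finset G)
    (htor : ∀ g ∈ G₀, ∃ m : ℕ, 0 < m ∧ m • g = 0) :
    ∃ M : AddSubmonoid (Multiset G),
      (M : Set (Multiset G)) =
        {S : Multiset G | (∀ g ∈ S, g ∈ G₀) ∧
          (S = 0 ∨ ∃ T ≤ S, T ≠ 0 ∧ T.sum = 0)} ∧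
      M.FG := by
  classical
  set P : Multiset G → Prop := fun S => (∀ g ∈ S, g ∈ G₀) ∧
      (S = 0 ∨ ∃ T ≤ S, T ≠ 0 ∧ T.sum = 0) with hP
  -- choose orders
  set m : G → ℕ := fun g => if h : g ∈ G₀ then (htor g h).choose else 1 with hm
  have hm0 : ∀ g ∈ G₀, 0 < m g := by
    intro g hg; simp only [hm, dif_pos hg]; exact (htor g hg).choose_spec.1
  have hmg : ∀ g ∈ G₀, (m g) • g = 0 := by
    intro g hg; simp only [hm, dif_pos hg]; exact (htor g hg).choose_spec.2
  set L : ℕ := ∑ g ∈ G₀, m g with hL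
  have hmL : ∀ g ∈ G₀, m g ≤ L := by
    intro g hg
    exact Finset.single_le_sum (fun i _ => Nat.zero_le _) hg
  -- pigeonhole
  have pigeon : ∀ S : Multiset G, (∀ g ∈ S, g ∈ G₀) → L < Multiset.card S →
      ∃ g ∈ G₀, m g ≤ S.count g := by
    intro S hS hcard
    by_contra h
    push_neg at h
    have hc : Multiset.card S = ∑ g ∈ G₀, S.count g := by
      rw [← Multiset.toFinset_sum_count_eq]
      refine Finset.sum_subset ?_ ?_
      · intro g hg; exact hS g (Multiset.mem_toFinset.mp hg)
      · intro g _ hg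
        exact Multiset.count_eq_zero_of_notMem (fun c => hg (Multiset.mem_toFinset.mpr c))
    have h2 : ∑ g ∈ G₀, (S.count g + 1) ≤ ∑ g ∈ G₀, m g :=
      Finset.sum_le_sum (fun g hg => Nat.succ_le_of_lt (h g hg))
    rw [Finset.sum_add_distrib, Finset.sum_const, smul_eq_mul, mul_one] at h2
    omega
  -- replicate subsequences
  have hrep : ∀ (g : G), g ∈ G₀ → ∀ S : Multiset G, m g ≤ S.count g →
      ∃ T ≤ S, T ≠ 0 ∧ T.sum = 0 := by
    intro g hg S hcount
    refine ⟨Multiset.replicate (m g) g, ?_, ?_, ?_⟩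
    · rw [Multiset.le_iff_count]
      intro a
      rcases eq_or_ne a g with rfl | hne
      · simpa using hcount
      · simp [Multiset.count_replicate, hne.symm]
    · intro h
      have := hm0 g hg
      have hc : Multiset.card (Multiset.replicate (m g) g) = 0 := by rw [h]; simp
      simp at hc
      omega
    · rw [Multiset.sum_replicate]; exact hmg g hg
  -- the submonoid
  refine ⟨{ carrier := {S | P S},
            zero_mem' := ⟨by simp, Or.inl rfl⟩,
            add_mem' := ?_ }, rfl, ?_⟩
  · rintro a b ⟨ha1, ha2⟩ ⟨hb1, hb2⟩
    refine ⟨?_, ?_⟩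
    · intro g hg
      rcases Multiset.mem_add.mp hg with h | h
      · exact ha1 g h
      · exact hb1 g h
    · rcases ha2 with rfl | ⟨T, hT, hT0, hTs⟩
      · rcases hb2 with rfl | ⟨T, hT, hT0, hTs⟩
        · exact Or.inl (by simp)
        · exact Or.inr ⟨T, le_trans hT (by simp), hT0, hTs⟩
      · exact Or.inr ⟨T, le_trans hT (by simp), hT0, hTs⟩
  -- finite generation
  · rw [AddSubmonoid.fg_iff]
    refine ⟨{S | P S ∧ S ≤ (2 * L) • G₀.val}, ?_, ?_⟩
    · -- closure = M
      apply le_antisymm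
      · rw [AddSubmonoid.closure_le]
        intro S hS
        exact hS.1
      · -- key induction
        have hle : ∀ S : Multiset G, P S → Multiset.card S ≤ 2 * L →
            S ≤ (2 * L) • G₀.val := by
          intro S hPS hcard
          rw [Multiset.le_iff_count]
          intro a
          rw [Multiset.count_nsmul]
          by_cases ha : a ∈ S
          · have : Multiset.count a G₀.val = 1 :=
              Multiset.count_eq_one_of_mem G₀.nodup (hPS.1 a ha)
            rw [this, mul_one]
            exact le_trans (Multiset.count_le_card a S) hcard
          · simp [Multiset.count_eq_zero_of_notMem ha]
        have key : ∀ n (S : Multiset G), Multiset.card S ≤ n → P S →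
            S ∈ AddSubmonoid.closure {S | P S ∧ S ≤ (2 * L) • G₀.val} := by
          intro n
          induction n with
          | zero =>
            intro S hc hPS
            have : S = 0 := Multiset.card_eq_zero.mp (Nat.le_zero.mp hc)
            subst this
            exact AddSubmonoid.zero_mem _
          | succ n ih =>
            intro S hc hPS
            by_cases hB : Multiset.card S ≤ 2 * L
            · exact AddSubmonoid.subset_closure ⟨hPS, hle S hPS hB⟩
            · push_neg at hB
              have hLS : L < Multiset.card S := by omega
              obtain ⟨g, hg, hcount⟩ := pigeon S hPS.1 hLS
              set T := Multiset.replicate (m g) g with hT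
              have hTS : T ≤ S := by
                rw [Multiset.le_iff_count]
                intro a
                rcases eq_or_ne a g with rfl | hne
                · simpa [hT] using hcount
                · simp [hT, Multiset.count_replicate, hne.symm]
              have hTcard : Multiset.card T = m g := by simp [hT]
              have hT0 : T ≠ 0 := by
                intro h
                have := hm0 g hg
                rw [h] at hTcard
                simp at hTcard
                omega
              have hTP : P T := by
                refine ⟨?_, Or.inr ⟨T, le_refl T, hT0, ?_⟩⟩
                · intro a ha
                  rw [hT, Multiset.mem_replicate] at ha
                  rw [ha.2]; exact hg
                · rw [hT, Multiset.sum_replicate]; exact hmg g hg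
              have hTmem : T ∈ AddSubmonoid.closure {S | P S ∧ S ≤ (2 * L) • G₀.val} := by
                apply AddSubmonoid.subset_closure
                refine ⟨hTP, hle T hTP ?_⟩
                rw [hTcard]; exact le_trans (hmL g hg) (by omega)
              set R := S - T with hR
              have hRS : R ≤ S := Multiset.sub_le_self S T
              have hSRT : S = T + R := by
                rw [hR, add_comm]
                exact (tsub_add_cancel_of_le hTS).symm
              have hRcard : Multiset.card R = Multiset.card S - m g := by
                rw [hR, Multiset.card_sub hTS, hTcard]
              have hRP : P R := by
                refine ⟨fun a ha => hPS.1 a (Multiset.mem_of_le hRS ha), ?_⟩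
                have hRL : L < Multiset.card R := by
                  have := hmL g hg
                  omega
                obtain ⟨g', hg', hcount'⟩ :=
                  pigeon R (fun a ha => hPS.1 a (Multiset.mem_of_le hRS ha)) hRL
                exact Or.inr (hrep g' hg' R hcount')
              have hRmem : R ∈ AddSubmonoid.closure {S | P S ∧ S ≤ (2 * L) • G₀.val} := by
                apply ih
                · have := hm0 g hg
                  omega
                · exact hRP
              rw [hSRT]
              exact AddSubmonoid.add_mem _ hTmem hRmem
        intro S hS
        exact key (Multiset.card S) S le_rfl hS
    · -- finiteness
      apply Set.Finite.subset (s := {S : Multiset G | S ≤ (2 * L) • G₀.val})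
      · apply Set.Finite.ofFinset (((2 * L) • G₀.val).powerset.toFinset)
        intro S
        simp [Multiset.mem_powerset]
      · intro S hS
        exact hS.2
end

section
/- Let G be an infinite abelian group. Then the class semigroup 𝒞(F_ι(G), ℱ(G)) is infinite; in particular, for any two distinct elements g, h ∈ G, the sequences g and h (of length 1) are not F_ι(G)-equivalent in ℱ(G). -/
lemma sub_le_pair_sum_ne {G : Type*} [AddCommGroup G] {a b : G}
    (ha : a ≠ 0) (hb : b ≠ 0) (hab : a + b ≠ 0) :
    ∀ T ≤ ({a, b} : Multiset G), T ≠ 0 → T.sum ≠ 0 := by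
  intro T hT hT0
  have hc : Multiset.card T ≤ 2 := by
    have := Multiset.card_le_card hT
    simpa using this
  interval_cases h : Multiset.card T
  · exact absurd (Multiset.card_eq_zero.mp h) hT0
  · obtain ⟨x, hx⟩ := Multiset.card_eq_one.mp h
    subst hx
    have hxmem : x ∈ ({a, b} : Multiset G) := Multiset.mem_of_le hT (by simp)
    simp only [Multiset.insert_eq_cons, Multiset.mem_cons, Multiset.mem_singleton] at hxmem
    rcases hxmem with rfl | rfl <;> simpa
  · have : T = ({a, b} : Multiset G) := Multiset.eq_of_le_of_card_le hT (by simp [h])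
    subst this
    simpa using hab

lemma singleton_mem_iff {G : Type*} [AddCommGroup G] (g : G) :
    ({g} : Multiset G) ∈ {S : Multiset G | S = 0 ∨ ∃ T ≤ S, T ≠ 0 ∧ T.sum = 0} ↔ g = 0 := by
  constructor
  · rintro (h | ⟨T, hT, hT0, hsum⟩)
    · simpa using h
    · have hc : Multiset.card T ≤ 1 := by simpa using Multiset.card_le_card hT
      have hc1 : Multiset.card T = 1 := by
        rcases Nat.lt_or_ge (Multiset.card T) 1 with h1 | h1
        · exact absurd (Multiset.card_eq_zero.mp (Nat.lt_one_iff.mp h1)) hT0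
        · omega
      have : T = ({g} : Multiset G) := Multiset.eq_of_le_of_card_le hT (by simp [hc1])
      subst this
      simpa using hsum
  · rintro rfl
    exact Or.inr ⟨{0}, le_refl _, by simp, by simp⟩

/-- for an infinite abelian group `G`, the class semigroup
`𝒞(F_ι(G), ℱ(G))` is infinite; in particular, distinct `g, h ∈ G` give sequences of length
one that are not `F_ι(G)`-equivalent. -/
theorem stmt_13 {G : Type*} [AddCommGroup G] [Infinite G]
    (Hs : Set (Multiset G))
    (hHs : Hs = {S : Multiset G | S = 0 ∨ ∃ T ≤ S, T ≠ 0 ∧ T.sum = 0}) :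
    (∀ g h : G, g ≠ h →
      ¬ ∀ x : Multiset G, (x + {g} ∈ Hs ↔ x + {h} ∈ Hs)) ∧
    {C : Set (Multiset G) | ∃ y : Multiset G,
      C = {y' | ∀ x : Multiset G, (x + y ∈ Hs ↔ x + y' ∈ Hs)}}.Infinite := by
  subst hHs
  have key : ∀ g h : G, g ≠ h →
      ¬ ∀ x : Multiset G,
        (x + {g} ∈ {S : Multiset G | S = 0 ∨ ∃ T ≤ S, T ≠ 0 ∧ T.sum = 0} ↔
         x + {h} ∈ {S : Multiset G | S = 0 ∨ ∃ T ≤ S, T ≠ 0 ∧ T.sum = 0}) := by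
    intro g h hgh hall
    by_cases hg : g = 0
    · subst hg
      have := (hall 0).mp (by simpa using (singleton_mem_iff (0 : G)).mpr rfl)
      have : h = 0 := (singleton_mem_iff h).mp (by simpa using this)
      exact hgh this.symm
    · by_cases hh : h = 0
      · subst hh
        have := (hall 0).mpr (by simpa using (singleton_mem_iff (0 : G)).mpr rfl)
        have : g = 0 := (singleton_mem_iff g).mp (by simpa using this)
        exact hg this
      · -- both nonzero; use x = {-g}
        have hin : ({-g} : Multiset G) + {g} ∈
            {S : Multiset G | S = 0 ∨ ∃ T ≤ S, T ≠ 0 ∧ T.sum = 0} := by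
          refine Or.inr ⟨{-g, g}, le_refl _, by simp, by simp⟩
        have hout := (hall {-g}).mp hin
        rcases hout with h0 | ⟨T, hT, hT0, hsum⟩
        · simp [Multiset.singleton_add] at h0
        · have hne : (-g) + h ≠ 0 := fun hc => hgh (neg_add_eq_zero.mp hc)
          have hgne : (-g : G) ≠ 0 := neg_ne_zero.mpr hg
          have hTle : T ≤ ({-g, h} : Multiset G) := by
            simpa [Multiset.insert_eq_cons, Multiset.singleton_add] using hT
          exact sub_le_pair_sum_ne hgne hh hne T hTle hT0 hsum
  refine ⟨key, ?_⟩
  apply Set.infinite_of_injective_forall_mem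
    (f := fun g : G => {y' : Multiset G | ∀ x : Multiset G,
      (x + {g} ∈ {S : Multiset G | S = 0 ∨ ∃ T ≤ S, T ≠ 0 ∧ T.sum = 0} ↔
       x + y' ∈ {S : Multiset G | S = 0 ∨ ∃ T ≤ S, T ≠ 0 ∧ T.sum = 0})})
  case hi =>
    intro g h hfg
    by_contra hgh
    have hmem : ({h} : Multiset G) ∈ {y' : Multiset G | ∀ x : Multiset G,
        (x + {h} ∈ {S : Multiset G | S = 0 ∨ ∃ T ≤ S, T ≠ 0 ∧ T.sum = 0} ↔
         x + y' ∈ {S : Multiset G | S = 0 ∨ ∃ T ≤ S, T ≠ 0 ∧ T.sum = 0})} :=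
      fun x => Iff.rfl
    beta_reduce at hfg
    rw [← hfg] at hmem
    exact key g h hgh hmem
  case hf =>
    intro g
    exact ⟨{g}, rfl⟩
end

section
/- For every m ∈ ℕ with m ≥ 3, there is a conductor submonoid H of a finitely generated free abelian monoid F with equal catenary degree c_eq(H) ≥ m. Concretely: let F = ℱ({p₁,…,p_{2m}}) and let H ⊆ F be the smallest conductor submonoid containing the elements pᵢp_{i+1} for i ∈ [1,2m] (indices mod 2m). Then the element a = p₁p₂⋯p_{2m} has exactly the two factorizations (p₁p₂)(p₃p₄)⋯(p_{2m−1}p_{2m}) and (p_{2m}p₁)(p₂p₃)⋯(p_{2m−2}p_{2m−1}) of length m, and these have distance ≥ m, so c_eq(H) ≥ m. -/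
private lemma aux_count_sum {α : Type*} [DecidableEq α] (v : α) (S : Multiset (Multiset α)) :
    Multiset.count v S.sum = (S.map (Multiset.count v)).sum := by
  induction S using Multiset.induction with
  | empty => simp
  | cons u S ih => simp [Multiset.count_add, ih]

private lemma aux_card_sum {α : Type*} (S : Multiset (Multiset α)) :
    Multiset.card S.sum = (S.map Multiset.card).sum := by
  induction S using Multiset.induction with
  | empty => simp
  | cons u S ih => simp [ih]

private lemma aux_indicator {α : Type*} [DecidableEq α] (w : α) (S : Multiset α) :
    (S.map fun u => if w = u then (1:ℕ) else 0).sum = S.count w := by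
  induction S using Multiset.induction with
  | empty => simp
  | cons u S ih =>
    by_cases h : w = u
    · subst h; simp [Multiset.count_cons, ih, add_comm]
    · simp [Multiset.count_cons, h, ih]

private lemma aux_all_two (s : Multiset ℕ) (h2 : ∀ x ∈ s, 2 ≤ x)
    (hsum : s.sum = 2 * Multiset.card s) : ∀ x ∈ s, x = 2 := by
  intro x hx
  obtain ⟨t, rfl⟩ := Multiset.exists_cons_of_mem hx
  have ht : Multiset.card t • 2 ≤ t.sum :=
    Multiset.card_nsmul_le_sum (fun y hy => h2 y (Multiset.mem_cons_of_mem hy))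
  have hx2 : 2 ≤ x := h2 x hx
  rw [Multiset.sum_cons, Multiset.card_cons] at hsum
  simp only [smul_eq_mul] at ht
  omega

private lemma aux_univ {n : ℕ} (S : Multiset (Fin n)) (hc : Multiset.card S = n)
    (hn : S.Nodup) : S = (Finset.univ : Finset (Fin n)).val := by
  have h := Finset.eq_univ_of_card (⟨S, hn⟩ : Finset (Fin n))
    (by simpa [Finset.card] using hc)
  exact congrArg Finset.val h



/-- `u` is an atom of the (additively written) submonoid with underlying set `Hs` of the
free abelian monoid of multisets: the only invertible element being `0`. -/
def MAtomIn {α : Type*} (Hs : Set (Multiset α)) (u : Multiset α) : Prop :=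
  u ∈ Hs ∧ u ≠ 0 ∧ ∀ b c : Multiset α, b ∈ Hs → c ∈ Hs → u = b + c → b = 0 ∨ c = 0

/-- `F_ι(G)`: the sequences over `G` having a nonempty zero-sum subsequence, together with
the empty sequence. -/
def FIota (G : Type*) [AddCommGroup G] : Set (Multiset G) :=
  {S | S = 0 ∨ ∃ T ≤ S, T ≠ 0 ∧ T.sum = 0}

/-- for every `m ≥ 3` there is a conductor submonoid `H` of a finitely
generated free abelian monoid `F = ℱ({p₀, …, p_{2m-1}})` with equal catenary degree at
least `m`.  Concretely, `H` is the smallest conductor submonoid of `ℱ(Fin 2m)` containing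
the elements `pᵢp_{i+1}` (indices mod `2m`); the element `a = p₀p₁⋯p_{2m-1}` has exactly
the two factorizations `z = (p₀p₁)(p₂p₃)⋯` and `z' = (p₁p₂)(p₃p₄)⋯` of length `m`, and
their distance is at least `m`; hence `c_eq(H) ≥ m`. -/
theorem stmt_16 (m : ℕ) (hm : 3 ≤ m)
    (p : ℕ → Fin (2 * m)) (hp : ∀ j : ℕ, (p j : ℕ) = j % (2 * m))
    (gen : ℕ → Multiset (Fin (2 * m))) (hgen : ∀ i : ℕ, gen i = {p i, p (i + 1)})
    (Hs : Set (Multiset (Fin (2 * m))))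
    (hHs : Hs = {S | S = 0 ∨ ∃ i : ℕ, i < 2 * m ∧ gen i ≤ S})
    (a : Multiset (Fin (2 * m))) (ha : a = (Finset.univ : Finset (Fin (2 * m))).val)
    (z z' : Multiset (Multiset (Fin (2 * m))))
    (hz : z = (Multiset.range m).map fun i => gen (2 * i))
    (hz' : z' = (Multiset.range m).map fun i => gen (2 * i + 1)) :
    -- `Hs` is a submonoid and a conductor submonoid of `ℱ(Fin 2m)`
    (0 ∈ Hs ∧ ∀ x ∈ Hs, ∀ y ∈ Hs, x + y ∈ Hs) ∧
    (∀ x ∈ Hs, x ≠ 0 → ∀ y : Multiset (Fin (2 * m)), x + y ∈ Hs ∧ x + y ≠ 0) ∧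
    -- `Hs` is the smallest such containing the generators
    (∀ S : Set (Multiset (Fin (2 * m))), 0 ∈ S →
      (∀ x ∈ S, x ≠ 0 → ∀ y : Multiset (Fin (2 * m)), x + y ∈ S) →
      (∀ i : ℕ, i < 2 * m → gen i ∈ S) → Hs ⊆ S) ∧
    -- `z` and `z'` are distinct factorizations of `a` of length `m` into atoms of `Hs`
    z ≠ z' ∧
    (∀ u ∈ z, MAtomIn Hs u) ∧ (∀ u ∈ z', MAtomIn Hs u) ∧
    z.sum = a ∧ z'.sum = a ∧
    Multiset.card z = m ∧ Multiset.card z' = m ∧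
    -- they are the only factorizations of `a` of length `m`
    (∀ y : Multiset (Multiset (Fin (2 * m))), (∀ u ∈ y, MAtomIn Hs u) →
      y.sum = a → Multiset.card y = m → y = z ∨ y = z') ∧
    -- and they have distance at least `m`
    m ≤ max (Multiset.card (z - z')) (Multiset.card (z' - z)) := by
  have hn0 : 0 < 2 * m := by omega
  have hpp : ∀ x y : ℕ, p x = p y ↔ x % (2*m) = y % (2*m) := by
    intro x y
    rw [Fin.ext_iff, hp, hp]
  have hstep : ∀ x y : ℕ, x % (2*m) = y % (2*m) ↔ (x+1) % (2*m) = (y+1) % (2*m) :=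
    fun x y => ⟨fun h => Nat.ModEq.add_right 1 h, fun h => Nat.ModEq.add_right_cancel' 1 h⟩
  have habs : ∀ x : ℕ, x % (2*m) = (x+2) % (2*m) → False := by
    intro x h
    have h2 : (0:ℕ) % (2*m) = 2 % (2*m) :=
      Nat.ModEq.add_left_cancel' x (show x + 0 ≡ x + 2 [MOD 2*m] from h)
    rw [Nat.zero_mod, Nat.mod_eq_of_lt (by omega)] at h2
    omega
  have geninj : ∀ x y : ℕ, gen x = gen y ↔ x % (2*m) = y % (2*m) := by
    intro x y
    constructor
    · intro h
      have hx : p x ∈ gen y := by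
        rw [← h, hgen]
        simp
      have hy : p y ∈ gen x := by
        rw [h, hgen]
        simp
      rw [hgen] at hx hy
      simp only [Multiset.insert_eq_cons, Multiset.mem_cons, Multiset.mem_singleton] at hx hy
      rcases hx with hx | hx
      · exact (hpp x y).1 hx
      · rcases hy with hy | hy
        · exact (hpp x y).1 hy.symm
        · exfalso
          have e1 : x % (2*m) = (y+1) % (2*m) := (hpp _ _).1 hx
          have e2 : y % (2*m) = (x+1) % (2*m) := (hpp _ _).1 hy
          have e3 : (y+1) % (2*m) = (x+2) % (2*m) := (hstep y (x+1)).1 e2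
          exact habs x (e1.trans e3)
    · intro h
      rw [hgen, hgen, (hpp x y).2 h, (hpp (x+1) (y+1)).2 ((hstep x y).1 h)]
  have gencard : ∀ i, Multiset.card (gen i) = 2 := by intro i; rw [hgen]; rfl
  have gen0 : ∀ i, gen i ≠ 0 := by
    intro i h
    have h2 := gencard i
    rw [h] at h2
    simp at h2
  have hzsum : ∀ k:ℕ, ((Multiset.range k).map fun i => gen (2*i)).sum
      = (Multiset.range (2*k)).map p := by
    intro k
    induction k with
    | zero => simp
    | succ n ih =>
      have e : 2*(n+1) = (2*n+1)+1 := by ring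
      rw [e]
      simp only [Multiset.range_succ, Multiset.map_cons, Multiset.sum_cons]
      rw [hgen (2*n), ih, Multiset.insert_eq_cons, Multiset.cons_add,
        Multiset.singleton_add, Multiset.cons_swap]
  have hz'sum : ∀ k:ℕ, ((Multiset.range k).map fun i => gen (2*i+1)).sum
      = (Multiset.range (2*k)).map (fun j => p (j+1)) := by
    intro k
    induction k with
    | zero => simp
    | succ n ih =>
      have e : 2*(n+1) = (2*n+1)+1 := by ring
      rw [e]
      simp only [Multiset.range_succ, Multiset.map_cons, Multiset.sum_cons]
      rw [hgen (2*n+1), ih, Multiset.insert_eq_cons, Multiset.cons_add,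
        Multiset.singleton_add, Multiset.cons_swap]
  have hnodup1 : ((Multiset.range (2*m)).map p).Nodup := by
    refine Multiset.Nodup.map_on ?_ (Multiset.nodup_range _)
    intro x hx y hy h
    rw [Multiset.mem_range] at hx hy
    have h2 := (hpp x y).1 h
    rwa [Nat.mod_eq_of_lt hx, Nat.mod_eq_of_lt hy] at h2
  have hnodup2 : ((Multiset.range (2*m)).map (fun j => p (j+1))).Nodup := by
    refine Multiset.Nodup.map_on ?_ (Multiset.nodup_range _)
    intro x hx y hy h
    rw [Multiset.mem_range] at hx hy
    have h2 := (hstep x y).2 ((hpp (x+1) (y+1)).1 h)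
    rwa [Nat.mod_eq_of_lt hx, Nat.mod_eq_of_lt hy] at h2
  have heven : ∀ k, (2*k) % (2*m) = 2*(k%m) := fun k => Nat.mul_mod_mul_left 2 k m
  have hoddm : ∀ k, (2*k+1) % (2*m) = 2*(k%m)+1 := by
    intro k
    have hk : k % m < m := Nat.mod_lt _ (by omega)
    rw [Nat.add_mod, heven, Nat.mod_eq_of_lt (show (1:ℕ) < 2*m by omega),
      Nat.mod_eq_of_lt (by omega)]
  -- Hs facts
  have hHs0 : (0 : Multiset (Fin (2*m))) ∈ Hs := by rw [hHs]; exact Or.inl rfl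
  have hHsmem : ∀ x : Multiset (Fin (2*m)), x ∈ Hs → x ≠ 0 → ∃ i, i < 2*m ∧ gen i ≤ x := by
    intro x hx hx0
    rw [hHs] at hx
    rcases hx with h | h
    · exact absurd h hx0
    · exact h
  have genHs : ∀ i : ℕ, gen i ∈ Hs := by
    intro i
    rw [hHs]
    refine Or.inr ⟨i % (2*m), Nat.mod_lt _ hn0, le_of_eq ?_⟩
    rw [geninj]
    exact Nat.mod_mod_of_dvd i dvd_rfl
  have hxcard : ∀ x ∈ Hs, x ≠ 0 → 2 ≤ Multiset.card x := by
    intro x hx hx0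
    obtain ⟨i, _, hle⟩ := hHsmem x hx hx0
    have h2 := Multiset.card_le_card hle
    rwa [gencard] at h2
  have hatom : ∀ i : ℕ, MAtomIn Hs (gen i) := by
    intro i
    refine ⟨genHs i, gen0 i, ?_⟩
    intro b c hb hc heq
    by_contra h
    push_neg at h
    have hb2 := hxcard b hb h.1
    have hc2 := hxcard c hc h.2
    have h3 := congrArg Multiset.card heq
    rw [gencard, Multiset.card_add] at h3
    omega
  have hclosed : ∀ x ∈ Hs, ∀ y ∈ Hs, x + y ∈ Hs := by
    intro x hx y hy
    by_cases hx0 : x = 0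
    · subst hx0; rwa [zero_add]
    · obtain ⟨i, hi, hle⟩ := hHsmem x hx hx0
      rw [hHs]
      exact Or.inr ⟨i, hi, le_trans hle (Multiset.le_add_right x y)⟩
  have hcond : ∀ x ∈ Hs, x ≠ 0 → ∀ y : Multiset (Fin (2*m)), x + y ∈ Hs ∧ x + y ≠ 0 := by
    intro x hx hx0 y
    obtain ⟨i, hi, hle⟩ := hHsmem x hx hx0
    refine ⟨by rw [hHs]; exact Or.inr ⟨i, hi, le_trans hle (Multiset.le_add_right x y)⟩, ?_⟩
    intro h
    apply hx0
    have hle0 : x ≤ 0 := h ▸ Multiset.le_add_right x y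
    exact Multiset.le_zero.1 hle0
  have hsmall : ∀ S : Set (Multiset (Fin (2*m))), 0 ∈ S →
      (∀ x ∈ S, x ≠ 0 → ∀ y : Multiset (Fin (2*m)), x + y ∈ S) →
      (∀ i : ℕ, i < 2*m → gen i ∈ S) → Hs ⊆ S := by
    intro S h0 hcl hgens w hw
    rw [hHs] at hw
    rcases hw with rfl | ⟨i, hi, hle⟩
    · exact h0
    · have h2 := hcl (gen i) (hgens i hi) (gen0 i) (w - gen i)
      rwa [add_tsub_cancel_of_le hle] at h2
  have hzs : z.sum = a := by
    rw [hz, hzsum m, ha]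
    exact aux_univ _ (by simp) hnodup1
  have hz's : z'.sum = a := by
    rw [hz', hz'sum m, ha]
    exact aux_univ _ (by simp) hnodup2
  have hzc : Multiset.card z = m := by rw [hz]; simp
  have hz'c : Multiset.card z' = m := by rw [hz']; simp
  have hmemz : ∀ w, w ∈ z ↔ ∃ k, k < m ∧ w = gen (2*k) := by
    intro w
    rw [hz, Multiset.mem_map]
    constructor
    · rintro ⟨k, hk, rfl⟩; exact ⟨k, Multiset.mem_range.1 hk, rfl⟩
    · rintro ⟨k, hk, rfl⟩; exact ⟨k, Multiset.mem_range.2 hk, rfl⟩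
  have hmemz' : ∀ w, w ∈ z' ↔ ∃ k, k < m ∧ w = gen (2*k+1) := by
    intro w
    rw [hz', Multiset.mem_map]
    constructor
    · rintro ⟨k, hk, rfl⟩; exact ⟨k, Multiset.mem_range.1 hk, rfl⟩
    · rintro ⟨k, hk, rfl⟩; exact ⟨k, Multiset.mem_range.2 hk, rfl⟩
  have hdisj : ∀ w, w ∈ z → w ∈ z' → False := by
    intro w h1 h2
    obtain ⟨k, hk, rfl⟩ := (hmemz w).1 h1
    obtain ⟨j, hj, he⟩ := (hmemz' _).1 h2
    rw [geninj, heven, hoddm] at he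
    omega
  have hg0z : gen 0 ∈ z := (hmemz _).2 ⟨0, by omega, by norm_num⟩
  have hzne : z ≠ z' := fun h => hdisj (gen 0) hg0z (h ▸ hg0z)
  have hzatom : ∀ u ∈ z, MAtomIn Hs u := by
    intro u hu
    obtain ⟨k, _, rfl⟩ := (hmemz u).1 hu
    exact hatom _
  have hz'atom : ∀ u ∈ z', MAtomIn Hs u := by
    intro u hu
    obtain ⟨k, _, rfl⟩ := (hmemz' u).1 hu
    exact hatom _
  have hsub : z - z' = z := by
    ext w
    rw [Multiset.count_sub]
    by_cases h : w ∈ z'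
    · have h0 : Multiset.count w z = 0 := Multiset.count_eq_zero.2 (fun hw => hdisj w hw h)
      omega
    · have h0 : Multiset.count w z' = 0 := Multiset.count_eq_zero.2 h
      omega
  have hdist : m ≤ max (Multiset.card (z - z')) (Multiset.card (z' - z)) := by
    rw [hsub, hzc]
    exact le_max_left _ _
  have huniq : ∀ y : Multiset (Multiset (Fin (2*m))), (∀ u ∈ y, MAtomIn Hs u) →
      y.sum = a → Multiset.card y = m → y = z ∨ y = z' := by
    intro y hy hysum hycard
    have hall2 : ∀ u ∈ y, Multiset.card u = 2 := by
      have h2 : ∀ x ∈ y.map Multiset.card, 2 ≤ x := by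
        intro x hx
        obtain ⟨u, hu, rfl⟩ := Multiset.mem_map.1 hx
        exact hxcard u (hy u hu).1 (hy u hu).2.1
      have hsum2 : (y.map Multiset.card).sum = 2 * Multiset.card (y.map Multiset.card) := by
        rw [← aux_card_sum, hysum, ha, Multiset.card_map, hycard]
        simp
      intro u hu
      exact aux_all_two _ h2 hsum2 _ (Multiset.mem_map_of_mem _ hu)
    have hushape : ∀ u ∈ y, ∃ i, i < 2*m ∧ u = gen i := by
      intro u hu
      obtain ⟨i, hi, hle⟩ := hHsmem u (hy u hu).1 (hy u hu).2.1
      exact ⟨i, hi, (Multiset.eq_of_le_of_card_le hle (by rw [hall2 u hu, gencard])).symm⟩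
    have key : ∀ j : ℕ, Multiset.count (gen j) y + Multiset.count (gen (j+1)) y = 1 := by
      intro j
      have h1 : Multiset.count (p (j+1)) y.sum = 1 := by
        rw [hysum, ha]
        exact Multiset.count_eq_one_of_mem Finset.univ.nodup (Finset.mem_val.mpr (Finset.mem_univ _))
      rw [aux_count_sum] at h1
      have h2 : y.map (Multiset.count (p (j+1)))
          = y.map (fun u => (if gen j = u then (1:ℕ) else 0)
              + (if gen (j+1) = u then 1 else 0)) := by
        refine Multiset.map_congr rfl ?_
        intro u hu
        obtain ⟨i, hi, rfl⟩ := hushape u hu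
        have t1 : (p (j+1) = p i) ↔ (gen (j+1) = gen i) := by rw [hpp, geninj]
        have t2 : (p (j+1) = p (i+1)) ↔ (gen j = gen i) := by
          rw [hpp, geninj]
          exact (hstep j i).symm
        have hcount : Multiset.count (p (j+1)) (gen i)
            = ((if p (j+1) = p (i+1) then (1:ℕ) else 0) + if p (j+1) = p i then 1 else 0) := by
          rw [hgen, Multiset.insert_eq_cons, Multiset.count_cons, Multiset.count_singleton]
        rw [hcount]
        simp only [t1, t2]
      rw [h2, Multiset.sum_map_add, aux_indicator, aux_indicator] at h1
      exact h1
    have hc0 := key 0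
    norm_num at hc0
    by_cases h0 : Multiset.count (gen 0) y = 1
    · left
      have hev : ∀ k, Multiset.count (gen (2*k)) y = 1
          ∧ Multiset.count (gen (2*k+1)) y = 0 := by
        intro k
        induction k with
        | zero =>
          have e1 : gen (2*0) = gen 0 := by norm_num
          have e2 : gen (2*0+1) = gen 1 := by norm_num
          rw [e1, e2]
          omega
        | succ n ih =>
          have k1 := key (2*n+1)
          have k2 := key (2*n+1+1)
          have e2 : 2*(n+1) = 2*n+1+1 := by ring
          rw [e2]
          omega
      ext w
      by_cases hw : ∃ k, k < m ∧ w = gen (2*k)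
      · obtain ⟨k, hk, rfl⟩ := hw
        have h1 : Multiset.count (gen (2*k)) y = 1 := (hev k).1
        have hinj : Set.InjOn (fun i => gen (2*i)) {x | x ∈ Multiset.range m} := by
          intro x hx y' hy' h
          simp only [Set.mem_setOf_eq, Multiset.mem_range] at hx hy'
          have h3 := (geninj _ _).1 h
          rw [heven, heven, Nat.mod_eq_of_lt hx, Nat.mod_eq_of_lt hy'] at h3
          omega
        rw [h1, hz]
        have hh := Multiset.count_map_eq_count (fun i => gen (2*i)) (Multiset.range m)
          hinj k (Multiset.mem_range.2 hk)
        rw [hh, Multiset.count_eq_one_of_mem (Multiset.nodup_range m) (Multiset.mem_range.2 hk)]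
      · have hy0 : Multiset.count w y = 0 := by
          by_contra hc
          have hwmem : w ∈ y := by
            by_contra h
            exact hc (Multiset.count_eq_zero.2 h)
          obtain ⟨i, hi, rfl⟩ := hushape w hwmem
          rcases Nat.even_or_odd i with ⟨k, hk⟩ | ⟨k, hk⟩
          · have hik : i = 2*k := by omega
            exact hw ⟨k, by omega, by rw [hik]⟩
          · have hik : i = 2*k+1 := hk
            exact hc (by rw [hik]; exact (hev k).2)
        have hz0 : Multiset.count w z = 0 :=
          Multiset.count_eq_zero.2 (fun hmem => hw ((hmemz w).1 hmem))
        rw [hy0, hz0]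
    · right
      have hodd2 : ∀ k, Multiset.count (gen (2*k+1)) y = 1
          ∧ Multiset.count (gen (2*k+1+1)) y = 0 := by
        intro k
        induction k with
        | zero =>
          have k1 := key 1
          norm_num at k1
          have e1 : gen (2*0+1) = gen 1 := by norm_num
          have e2 : gen (2*0+1+1) = gen 2 := by norm_num
          rw [e1, e2]
          omega
        | succ n ih =>
          have k1 := key (2*n+1+1)
          have k2 := key (2*n+1+1+1)
          have e2 : 2*(n+1) = 2*n+1+1 := by ring
          rw [e2]
          omega
      ext w
      by_cases hw : ∃ k, k < m ∧ w = gen (2*k+1)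
      · obtain ⟨k, hk, rfl⟩ := hw
        have hinj : Set.InjOn (fun i => gen (2*i+1)) {x | x ∈ Multiset.range m} := by
          intro x hx y' hy' h
          simp only [Set.mem_setOf_eq, Multiset.mem_range] at hx hy'
          have h3 := (geninj _ _).1 h
          rw [hoddm, hoddm, Nat.mod_eq_of_lt hx, Nat.mod_eq_of_lt hy'] at h3
          omega
        rw [(hodd2 k).1, hz']
        have hh := Multiset.count_map_eq_count (fun i => gen (2*i+1)) (Multiset.range m)
          hinj k (Multiset.mem_range.2 hk)
        rw [hh, Multiset.count_eq_one_of_mem (Multiset.nodup_range m) (Multiset.mem_range.2 hk)]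
      · have hy0 : Multiset.count w y = 0 := by
          by_contra hc
          have hwmem : w ∈ y := by
            by_contra h
            exact hc (Multiset.count_eq_zero.2 h)
          obtain ⟨i, hi, rfl⟩ := hushape w hwmem
          rcases Nat.even_or_odd i with ⟨k, hk⟩ | ⟨k, hk⟩
          · have hce : Multiset.count (gen i) y = 0 := by
              rcases Nat.eq_zero_or_pos k with rfl | hkpos
              · have hik : i = 0 := by omega
                rw [hik]
                omega
              · obtain ⟨n', rfl⟩ : ∃ n', k = n'+1 := ⟨k-1, by omega⟩
                have hik : i = 2*n'+1+1 := by omega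
                rw [hik]
                exact (hodd2 n').2
            exact hc hce
          · exact hw ⟨k, by omega, by rw [hk]⟩
        have hz0 : Multiset.count w z' = 0 :=
          Multiset.count_eq_zero.2 (fun hmem => hw ((hmemz' w).1 hmem))
        rw [hy0, hz0]
  exact ⟨⟨hHs0, hclosed⟩, hcond, hsmall, hzne, hzatom, hz'atom, hzs, hz's, hzc, hz'c,
    huniq, hdist⟩
end

section
/- Let G be an abelian nontrivial group and F_ι(G) = {S ∈ ℱ(G) : S has a nonempty zero-sum subsequence} ∪ {1}. Then F_ι(G) is not half-factorial: there exists S ∈ F_ι(G) with |𝖫(S)| ≥ 2. -/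
lemma singleton_mem_FIota {G : Type*} [AddCommGroup G] {a : G} :
    ({a} : Multiset G) ∈ FIota G ↔ a = 0 := by
  constructor
  · rintro (h | ⟨T, hT, hT0, hTs⟩)
    · exact absurd h (by simp)
    · rcases (Multiset.le_singleton).1 hT with rfl | rfl
      · exact absurd rfl hT0
      · simpa using hTs
  · rintro rfl
    exact Or.inr ⟨{0}, le_rfl, by simp, by simp⟩

lemma zero_cons_mem_FIota {G : Type*} [AddCommGroup G] (s : Multiset G) :
    (0 ::ₘ s : Multiset G) ∈ FIota G :=
  Or.inr ⟨{0}, Multiset.singleton_le.2 (Multiset.mem_cons_self 0 s), by simp, by simp⟩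

lemma atom_pair {G : Type*} [AddCommGroup G] {a b : G}
    (hmem : ({a, b} : Multiset G) ∈ FIota G) (hab : ¬(a = 0 ∧ b = 0)) :
    MAtomIn (FIota G) {a, b} := by
  refine ⟨hmem, by simp, ?_⟩
  intro c d hc hd hcd
  by_contra h
  push_neg at h
  obtain ⟨hc0, hd0⟩ := h
  have hcard : Multiset.card c + Multiset.card d = 2 := by
    have := congrArg Multiset.card hcd
    simpa using this.symm
  have hc1 : Multiset.card c = 1 := by
    have := Multiset.card_pos.2 hc0
    have := Multiset.card_pos.2 hd0
    omega
  have hd1 : Multiset.card d = 1 := by omega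
  obtain ⟨x, rfl⟩ := Multiset.card_eq_one.1 hc1
  obtain ⟨y, rfl⟩ := Multiset.card_eq_one.1 hd1
  have hx : x = 0 := singleton_mem_FIota.1 hc
  have hy : y = 0 := singleton_mem_FIota.1 hd
  subst hx hy
  have ha : a = 0 := by
    have : a ∈ ({a, b} : Multiset G) := by simp
    rw [hcd] at this
    simpa using this
  have hb : b = 0 := by
    have : b ∈ ({a, b} : Multiset G) := by simp
    rw [hcd] at this
    simpa using this
  exact hab ⟨ha, hb⟩

lemma atom_zero {G : Type*} [AddCommGroup G] : MAtomIn (FIota G) ({0} : Multiset G) := by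
  refine ⟨singleton_mem_FIota.2 rfl, by simp, ?_⟩
  intro c d _ _ hcd
  have hcard : Multiset.card c + Multiset.card d = 1 := by
    have := congrArg Multiset.card hcd
    simpa using this.symm
  rcases Nat.eq_zero_or_pos (Multiset.card c) with h | h
  · exact Or.inl (Multiset.card_eq_zero.1 h)
  · right
    exact Multiset.card_eq_zero.1 (by omega)

/-- if the abelian group `G` is nontrivial, then `F_ι(G)` is not
half-factorial: some element has factorizations into atoms of two different lengths. -/
theorem stmt_18 {G : Type*} [AddCommGroup G] (hG : ∃ g : G, g ≠ 0) :
    ∃ S ∈ FIota G, ∃ y y' : Multiset (Multiset G),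
      (∀ u ∈ y, MAtomIn (FIota G) u) ∧ y.sum = S ∧
      (∀ u ∈ y', MAtomIn (FIota G) u) ∧ y'.sum = S ∧
      Multiset.card y ≠ Multiset.card y' := by
  obtain ⟨g, hg⟩ := hG
  refine ⟨{0, 0, g, -g}, zero_cons_mem_FIota _, {{0}, {0}, {g, -g}}, {{0, g}, {0, -g}}, ?_, ?_, ?_, ?_, ?_⟩
  · intro u hu
    simp only [Multiset.insert_eq_cons, Multiset.mem_cons, Multiset.mem_singleton] at hu
    rcases hu with rfl | rfl | rfl
    · exact atom_zero
    · exact atom_zero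
    · refine atom_pair (Or.inr ⟨{g, -g}, le_rfl, by simp, by simp⟩) ?_
      rintro ⟨rfl, -⟩; exact hg rfl
  · show ({0} : Multiset G) + ({0} + ({g, -g} + 0)) = _
    simp only [Multiset.insert_eq_cons, ← Multiset.singleton_add, add_zero]
  · intro u hu
    simp only [Multiset.insert_eq_cons, Multiset.mem_cons, Multiset.mem_singleton] at hu
    rcases hu with rfl | rfl
    · exact atom_pair (zero_cons_mem_FIota _) (fun h => hg h.2)
    · refine atom_pair (zero_cons_mem_FIota _) ?_
      rintro ⟨-, h⟩; exact hg (neg_eq_zero.1 h)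
  · show ({0, g} : Multiset G) + ({0, -g} + 0) = _
    simp only [Multiset.insert_eq_cons, ← Multiset.singleton_add, add_zero]
    ac_rfl
  · simp
end

section
/- Let G be an infinite abelian group. Then for every k ≥ 2, the union of sets of lengths 𝒰_k(F_ι(G)) equals ℕ_{≥2}, and the system of sets of lengths of F_ι(G) is exactly ℒ(F_ι(G)) = {{k} : k ∈ ℕ₀} ∪ {L ⊆ ℕ_{≥2} : L is a finite nonempty interval}. -/
/-- The set of lengths of factorizations of `S` into atoms of `F_ι(G)`. -/
def MLenSet (G : Type*) [AddCommGroup G] (S : Multiset G) : Set ℕ :=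
  {n | ∃ y : Multiset (Multiset G), (∀ u ∈ y, MAtomIn (FIota G) u) ∧
    y.sum = S ∧ Multiset.card y = n}

set_option linter.unusedSectionVars false

section Stmt19Aux

variable {G : Type*} [AddCommGroup G] [DecidableEq G]

/-- nonempty zero-sum sub-multiset -/
def IsZS (T : Multiset G) : Prop := T ≠ 0 ∧ T.sum = 0

def HasZS (S : Multiset G) : Prop := ∃ T ≤ S, IsZS T

def ZSF (S : Multiset G) : Prop := ¬ HasZS S

def MAtom (u : Multiset G) : Prop :=
  u ≠ 0 ∧ HasZS u ∧ ∀ T₁ T₂ : Multiset G, IsZS T₁ → IsZS T₂ → T₁ + T₂ ≤ u → False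

lemma hasZS_mono {S S' : Multiset G} (h : S ≤ S') (hS : HasZS S) : HasZS S' := by
  obtain ⟨T, hT, hz⟩ := hS; exact ⟨T, hT.trans h, hz⟩

lemma IsZS.hasZS {T : Multiset G} (h : IsZS T) : HasZS T := ⟨T, le_refl _, h⟩

lemma zsf_zero : ZSF (0 : Multiset G) := by
  rintro ⟨T, hT, hne, _⟩; exact hne (Multiset.le_zero.1 hT)

lemma HasZS.ne_zero {S : Multiset G} (h : HasZS S) : S ≠ 0 := by
  rintro rfl; exact zsf_zero h

lemma zsf_of_le {S S' : Multiset G} (h : S ≤ S') (hS : ZSF S') : ZSF S :=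
  fun hz => hS (hasZS_mono h hz)

lemma le_sub_of_add_le {a b c : Multiset G} (h : a + b ≤ c) : a ≤ c - b := by
  have := tsub_le_tsub_right h b
  rwa [add_tsub_cancel_right] at this

lemma add_le_of_le_sub {a b c : Multiset G} (hb : b ≤ c) (h : a ≤ c - b) : a + b ≤ c := by
  have h2 : a + b ≤ (c - b) + b := add_le_add_left h b
  rwa [tsub_add_cancel_of_le hb] at h2

/-- every zero-sum-containing multiset contains a minimal zero-sum -/
lemma exists_min_zs {S : Multiset G} (h : HasZS S) :
    ∃ U ≤ S, IsZS U ∧ ∀ T ≤ U, IsZS T → T = U := by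
  classical
  set P : Set ℕ := {n | ∃ T ≤ S, IsZS T ∧ Multiset.card T = n} with hP
  have hne : P.Nonempty := by obtain ⟨T, hT, hz⟩ := h; exact ⟨_, T, hT, hz, rfl⟩
  obtain ⟨U, hUS, hUz, hUcard⟩ := Nat.sInf_mem hne
  refine ⟨U, hUS, hUz, fun T hTU hTz => ?_⟩
  have h1 : sInf P ≤ Multiset.card T := Nat.sInf_le ⟨T, hTU.trans hUS, hTz, rfl⟩
  exact Multiset.eq_of_le_of_card_le hTU (hUcard ▸ h1)

lemma matom_of_min_zs {U : Multiset G} (hz : IsZS U) (hmin : ∀ T ≤ U, IsZS T → T = U) :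
    MAtom U := by
  refine ⟨hz.1, hz.hasZS, fun T₁ T₂ h1 h2 hle => ?_⟩
  have e1 : T₁ = U := hmin T₁ (le_trans (Multiset.le_add_right _ _) hle) h1
  subst e1
  have h3 : T₂ ≤ T₁ - T₁ := le_sub_of_add_le (by rwa [add_comm] at hle)
  rw [tsub_self] at h3
  exact h2.1 (Multiset.le_zero.1 h3)

lemma exists_min_zs_atom {S : Multiset G} (h : HasZS S) :
    ∃ U ≤ S, IsZS U ∧ MAtom U := by
  obtain ⟨U, hUS, hz, hmin⟩ := exists_min_zs h
  exact ⟨U, hUS, hz, matom_of_min_zs hz hmin⟩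

lemma matom_sub_zsf {A U : Multiset G} (hA : MAtom A) (hU : U ≤ A) (hz : IsZS U) :
    ZSF (A - U) := by
  rintro ⟨T, hT, hTz⟩
  exact hA.2.2 T U hTz hz (add_le_of_le_sub hU hT)

lemma matom_of_le {A X : Multiset G} (hA : MAtom A) (hX : X ≤ A) (hz : HasZS X) : MAtom X := by
  refine ⟨hz.ne_zero, hz, fun T₁ T₂ h1 h2 hle => hA.2.2 T₁ T₂ h1 h2 (hle.trans hX)⟩

lemma matom_or_zsf_of_le {A X : Multiset G} (hA : MAtom A) (hX : X ≤ A) : MAtom X ∨ ZSF X := by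
  by_cases h : HasZS X
  · exact Or.inl (matom_of_le hA hX h)
  · exact Or.inr h

/-- relation of MAtom to the statement's MAtomIn -/
lemma matomIn_iff (u : Multiset G) : MAtomIn (FIota G) u ↔ MAtom u := by
  constructor
  · rintro ⟨hu, hne, hsplit⟩
    have hzs : HasZS u := by
      rcases hu with h | ⟨T, hT, h1, h2⟩
      · exact absurd h hne
      · exact ⟨T, hT, h1, h2⟩
    refine ⟨hne, hzs, fun T₁ T₂ h1 h2 hle => ?_⟩
    have hT₁u : T₁ ≤ u := le_trans (Multiset.le_add_right _ _) hle
    have hT₂u : T₂ ≤ u - T₁ := le_sub_of_add_le (by rwa [add_comm] at hle)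
    have hsum : u = T₁ + (u - T₁) := by
      rw [add_comm, tsub_add_cancel_of_le hT₁u]
    have m1 : T₁ ∈ FIota G := Or.inr ⟨T₁, le_refl _, h1.1, h1.2⟩
    have m2 : (u - T₁) ∈ FIota G := Or.inr ⟨T₂, hT₂u, h2.1, h2.2⟩
    rcases hsplit T₁ (u - T₁) m1 m2 hsum with h | h
    · exact h1.1 h
    · rw [h] at hT₂u
      exact h2.1 (Multiset.le_zero.1 hT₂u)
  · rintro ⟨hne, ⟨T, hT, hz⟩, hnd⟩
    refine ⟨Or.inr ⟨T, hT, hz.1, hz.2⟩, hne, fun b c hb hc habc => ?_⟩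
    by_contra hcon
    push_neg at hcon
    rcases hb with rfl | ⟨T₁, hT₁, h1, h2⟩
    · exact hcon.1 rfl
    rcases hc with rfl | ⟨T₂, hT₂, h3, h4⟩
    · exact hcon.2 rfl
    exact hnd T₁ T₂ ⟨h1, h2⟩ ⟨h3, h4⟩ (habc ▸ add_le_add hT₁ hT₂)

/-! ## Decomposition lemmas -/

lemma split2 {X C V : Multiset G} (h : X ≤ C + V) :
    ∃ x₁ x₂ : Multiset G, x₁ ≤ C ∧ x₂ ≤ V ∧ X = x₁ + x₂ := by
  refine ⟨X ∩ C, X - (X ∩ C), Multiset.inter_le_right .., ?_, ?_⟩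
  · rw [Multiset.le_iff_count]
    intro a
    rw [Multiset.count_sub, Multiset.count_inter]
    have hX : X.count a ≤ C.count a + V.count a := by
      have := Multiset.le_iff_count.1 h a
      simpa [Multiset.count_add] using this
    omega
  · rw [add_comm, tsub_add_cancel_of_le (Multiset.inter_le_left ..)]

lemma split2_pair {Y Y' C V : Multiset G} (h : Y + Y' ≤ C + V) :
    ∃ y₁ y₂ y'₁ y'₂ : Multiset G, Y = y₁ + y₂ ∧ Y' = y'₁ + y'₂ ∧
      y₁ + y'₁ ≤ C ∧ y₂ + y'₂ ≤ V := by
  obtain ⟨w₁, w₂, hw₁, hw₂, hw⟩ := split2 h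
  have hYle : Y ≤ w₁ + w₂ := (Multiset.le_add_right Y Y').trans (le_of_eq hw)
  obtain ⟨y₁, y₂, hy₁, hy₂, hy⟩ := split2 hYle
  refine ⟨y₁, y₂, w₁ - y₁, w₂ - y₂, hy, ?_, ?_, ?_⟩
  · have : Y + Y' = (y₁ + y₂) + ((w₁ - y₁) + (w₂ - y₂)) := by
      rw [hw]
      have e1 : y₁ + (w₁ - y₁) = w₁ := by rw [add_comm, tsub_add_cancel_of_le hy₁]
      have e2 : y₂ + (w₂ - y₂) = w₂ := by rw [add_comm, tsub_add_cancel_of_le hy₂]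
      calc w₁ + w₂ = (y₁ + (w₁ - y₁)) + (y₂ + (w₂ - y₂)) := by rw [e1, e2]
      _ = (y₁ + y₂) + ((w₁ - y₁) + (w₂ - y₂)) := by ac_rfl
    rw [hy] at this
    exact add_left_cancel this
  · calc y₁ + (w₁ - y₁) = w₁ := by rw [add_comm, tsub_add_cancel_of_le hy₁]
    _ ≤ C := hw₁
  · calc y₂ + (w₂ - y₂) = w₂ := by rw [add_comm, tsub_add_cancel_of_le hy₂]
    _ ≤ V := hw₂

lemma sum_mono_le {y y' : Multiset (Multiset G)} (h : y ≤ y') : y.sum ≤ y'.sum := by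
  obtain ⟨d, rfl⟩ := Multiset.le_iff_exists_add.1 h
  rw [Multiset.sum_add]
  exact Multiset.le_add_right _ _

lemma mem_le_sum {y : Multiset (Multiset G)} {u : Multiset G} (h : u ∈ y) : u ≤ y.sum := by
  obtain ⟨y', rfl⟩ := Multiset.exists_cons_of_mem h
  rw [Multiset.sum_cons]
  exact Multiset.le_add_right _ _

/-- decompose a sub-multiset of a sum of a multiset of multisets into pieces -/
lemma splitMul {y : Multiset (Multiset G)} {U : Multiset G} (h : U ≤ y.sum) :
    ∃ w : Multiset (Multiset G × Multiset G), w.map Prod.fst = y ∧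
      (∀ p ∈ w, p.2 ≤ p.1) ∧ (w.map Prod.snd).sum = U := by
  classical
  induction y using Multiset.induction generalizing U with
  | empty =>
    simp only [Multiset.sum_zero, Multiset.le_zero] at h
    exact ⟨0, by simp, by simp, by simp [h]⟩
  | cons a y ih =>
    rw [Multiset.sum_cons] at h
    obtain ⟨u₁, u₂, hu₁, hu₂, hu⟩ := split2 h
    obtain ⟨w, hw1, hw2, hw3⟩ := ih hu₂
    refine ⟨(a, u₁) ::ₘ w, by simp [hw1], ?_, by simp [hw3, hu, add_comm]⟩
    intro p hp
    rcases Multiset.mem_cons.1 hp with rfl | hp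
    · exact hu₁
    · exact hw2 p hp

/-! ## Factorizations -/

def IsFact (S : Multiset G) (y : Multiset (Multiset G)) : Prop :=
  (∀ u ∈ y, MAtom u) ∧ y.sum = S

/-- `μ(S) ≤ k` -/
def PLE (S : Multiset G) (k : ℕ) : Prop := ∃ y, IsFact S y ∧ Multiset.card y ≤ k

lemma mem_mlenSet_iff {S : Multiset G} {n : ℕ} :
    n ∈ MLenSet G S ↔ ∃ y, IsFact S y ∧ Multiset.card y = n := by
  unfold MLenSet IsFact
  constructor
  · rintro ⟨y, h1, h2, h3⟩
    exact ⟨y, ⟨fun u hu => (matomIn_iff u).1 (h1 u hu), h2⟩, h3⟩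
  · rintro ⟨y, ⟨h1, h2⟩, h3⟩
    exact ⟨y, fun u hu => (matomIn_iff u).2 (h1 u hu), h2, h3⟩

lemma isFact_append {S S' : Multiset G} {y y' : Multiset (Multiset G)}
    (h : IsFact S y) (h' : IsFact S' y') : IsFact (S + S') (y + y') := by
  refine ⟨fun u hu => ?_, by rw [Multiset.sum_add, h.2, h'.2]⟩
  rcases Multiset.mem_add.1 hu with h1 | h1
  · exact h.1 u h1
  · exact h'.1 u h1

lemma isFact_single {S : Multiset G} (h : MAtom S) : IsFact S {S} := by
  constructor
  · intro u hu; rwa [Multiset.mem_singleton.1 hu]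
  · simp

/-! ## The key two-atom lemma -/

lemma card_lt_of_add_le {x x' t : Multiset G} (h : x + x' ≤ t) (hx' : x' ≠ 0) :
    Multiset.card x < Multiset.card t := by
  have h1 := Multiset.card_le_card h
  rw [Multiset.card_add] at h1
  have h2 : 0 < Multiset.card x' := Multiset.card_pos.2 hx'
  omega

lemma sub_add_distrib {C V F : Multiset G} (hF : F ≤ C) : (C + V) - F = (C - F) + V := by
  have : ((C - F) + V) + F = C + V := by
    have e : (C - F) + F = C := tsub_add_cancel_of_le hF
    calc ((C - F) + V) + F = ((C - F) + F) + V := by ac_rfl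
    _ = C + V := by rw [e]
  rw [← this, add_tsub_cancel_right]

lemma twoPart {C V : Multiset G} (hV : ZSF V)
    (hC : ∀ Z Z' : Multiset G, IsZS Z → IsZS Z' → Z + Z' ≤ C → False)
    (hT : HasZS (C + V)) : PLE (C + V) 2 := by
  classical
  by_cases h2 : ∃ Z Z' : Multiset G, IsZS Z ∧ IsZS Z' ∧ Z + Z' ≤ C + V
  case neg =>
    -- C + V is an atom
    refine ⟨{C + V}, isFact_single ⟨hT.ne_zero, hT, fun T₁ T₂ h1 h2' hle => ?_⟩, by simp⟩
    exact h2 ⟨T₁, T₂, h1, h2', hle⟩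
  case pos =>
  by_cases hcase1 : ∃ E F : Multiset G, IsZS E ∧ IsZS F ∧ F ≤ C ∧ E + F ≤ C + V
  · -- CASE (i): some pure member of a disjoint pair
    obtain ⟨E, F, hE, hF, hFC, hEF⟩ := hcase1
    set 𝒞 : Set (Multiset G) := {c | c ≤ C - F ∧ HasZS (c + V)} with h𝒞
    have hCne : ∃ c, c ∈ 𝒞 := by
      have hE2 : E ≤ (C - F) + V := by
        have := le_sub_of_add_le hEF
        rwa [sub_add_distrib hFC] at this
      obtain ⟨ec, ev, hec, hev, he⟩ := split2 hE2
      refine ⟨ec, hec, ⟨E, ?_, hE⟩⟩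
      rw [he]; exact add_le_add_right hev ec
    set NS : Set ℕ := {n | ∃ c ∈ 𝒞, Multiset.card c = n} with hNS
    have hNSne : NS.Nonempty := by obtain ⟨c, hc⟩ := hCne; exact ⟨_, c, hc, rfl⟩
    obtain ⟨c₀, hc₀, hc₀card⟩ := Nat.sInf_mem hNSne
    have hmin : ∀ c ∈ 𝒞, Multiset.card c₀ ≤ Multiset.card c := by
      intro c hc
      rw [hc₀card]; exact Nat.sInf_le ⟨c, hc, rfl⟩
    have hc₀ne : c₀ ≠ 0 := by
      intro h0
      have hzz := hc₀.2
      rw [h0, zero_add] at hzz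
      exact hV hzz
    have hc₀C : c₀ ≤ C := hc₀.1.trans tsub_le_self
    have hFP : F ≤ C - c₀ := by
      refine le_sub_of_add_le ?_
      rw [add_comm]
      exact add_le_of_le_sub hFC hc₀.1
    have hQ : MAtom (c₀ + V) := by
      refine ⟨fun h0 => hc₀ne (by simpa using (add_eq_zero.1 h0).1), hc₀.2, ?_⟩
      intro Z Z' hZ hZ' hle
      obtain ⟨z₁, z₂, z'₁, z'₂, heZ, heZ', hle1, hle2⟩ := split2_pair hle
      have hz₁ : z₁ ∈ 𝒞 := by
        refine ⟨(le_trans (Multiset.le_add_right _ _) hle1).trans hc₀.1, ⟨Z, ?_, hZ⟩⟩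
        rw [heZ]
        exact add_le_add_right ((le_trans (Multiset.le_add_right _ _) (by rwa [add_comm] at hle2)).trans (le_refl V)) z₁
      have hz'₁ : z'₁ ∈ 𝒞 := by
        refine ⟨(le_trans (Multiset.le_add_right _ _) (by rwa [add_comm] at hle1)).trans hc₀.1, ⟨Z', ?_, hZ'⟩⟩
        rw [heZ']
        exact add_le_add_right (le_trans (Multiset.le_add_right _ _) (by rwa [add_comm] at hle2)) z'₁
      have h1 := hmin z₁ hz₁
      have h2 := hmin z'₁ hz'₁
      have h3 := Multiset.card_le_card hle1
      rw [Multiset.card_add] at h3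
      have h4 : 0 < Multiset.card c₀ := Multiset.card_pos.2 hc₀ne
      omega
    have hP : MAtom (C - c₀) := by
      refine ⟨fun h0 => hF.1 (Multiset.le_zero.1 (h0 ▸ hFP)), ⟨F, hFP, hF⟩, ?_⟩
      intro Z Z' hZ hZ' hle
      exact hC Z Z' hZ hZ' (hle.trans tsub_le_self)
    refine ⟨(C - c₀) ::ₘ {c₀ + V}, ⟨?_, ?_⟩, by simp⟩
    · intro u hu
      rcases Multiset.mem_cons.1 hu with rfl | hu
      · exact hP
      · rwa [Multiset.mem_singleton.1 hu]
    · rw [Multiset.sum_cons, Multiset.sum_singleton, ← add_assoc,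
        tsub_add_cancel_of_le hc₀C]
  · -- CASE (ii): every disjoint pair is mixed-mixed
    obtain ⟨Z₀, Z'₀, hZ₀, hZ'₀, hle₀⟩ := h2
    -- the family of placed mixed-mixed pairs
    set Dp : Multiset G → Multiset G → Multiset G → Multiset G → Prop :=
      fun a₁ a₂ b₁ b₂ => IsZS (a₁ + a₂) ∧ IsZS (b₁ + b₂) ∧ a₂ ≠ 0 ∧ b₂ ≠ 0 ∧
        a₁ + b₁ ≤ C ∧ a₂ + b₂ ≤ V with hDp
    have hpure : ∀ Z Z' : Multiset G, IsZS Z → IsZS Z' → Z + Z' ≤ C + V → Z' ≤ C → False := by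
      intro Z Z' hZ hZ' hle hZ'C
      exact hcase1 ⟨Z, Z', hZ, hZ', hZ'C, hle⟩
    have hDne : ∃ a₁ a₂ b₁ b₂, Dp a₁ a₂ b₁ b₂ := by
      obtain ⟨z₁, z₂, z'₁, z'₂, heZ, heZ', hle1, hle2⟩ := split2_pair hle₀
      refine ⟨z₁, z₂, z'₁, z'₂, heZ ▸ hZ₀, heZ' ▸ hZ'₀, ?_, ?_, hle1, hle2⟩
      · rintro rfl
        rw [add_zero] at heZ
        refine hpure Z'₀ Z₀ hZ'₀ hZ₀ (by rwa [add_comm] at hle₀) ?_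
        rw [heZ]; exact (le_trans (Multiset.le_add_right _ _) hle1)
      · rintro rfl
        rw [add_zero] at heZ'
        refine hpure Z₀ Z'₀ hZ₀ hZ'₀ hle₀ ?_
        rw [heZ']
        exact (le_trans (Multiset.le_add_right _ _) (by rwa [add_comm] at hle1))
    set Sβ : Set ℕ := {n | ∃ a₁ a₂ b₁ b₂, Dp a₁ a₂ b₁ b₂ ∧ Multiset.card b₂ = n} with hSβ
    have hSβne : Sβ.Nonempty := by
      obtain ⟨a₁, a₂, b₁, b₂, h⟩ := hDne; exact ⟨_, a₁, a₂, b₁, b₂, h, rfl⟩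
    set β := sInf Sβ with hβdef
    obtain ⟨a₁', a₂', b₁', b₂', hD', hβ'⟩ := Nat.sInf_mem hSβne
    set Sα : Set ℕ := {n | ∃ a₁ a₂ b₁ b₂, Dp a₁ a₂ b₁ b₂ ∧ Multiset.card b₂ = β ∧
      Multiset.card a₁ = n} with hSα
    have hSαne : Sα.Nonempty := ⟨_, a₁', a₂', b₁', b₂', hD', hβ', rfl⟩
    obtain ⟨a₁, a₂, b₁, b₂, hD, hβ, hα⟩ := Nat.sInf_mem hSαne
    have m1 : ∀ x₁ x₂ w₁ w₂, Dp x₁ x₂ w₁ w₂ → β ≤ Multiset.card w₂ := by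
      intro x₁ x₂ w₁ w₂ h
      exact Nat.sInf_le ⟨x₁, x₂, w₁, w₂, h, rfl⟩
    have m2 : ∀ x₁ x₂ w₁ w₂, Dp x₁ x₂ w₁ w₂ → Multiset.card w₂ = β →
        Multiset.card a₁ ≤ Multiset.card x₁ := by
      intro x₁ x₂ w₁ w₂ h hw
      rw [hα]; exact Nat.sInf_le ⟨x₁, x₂, w₁, w₂, h, hw, rfl⟩
    obtain ⟨hA, hB, ha₂, hb₂, hC1, hV1⟩ := hD
    have ha₁C : a₁ ≤ C := le_trans (Multiset.le_add_right _ _) hC1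
    have hb₂V : b₂ ≤ V := le_trans (Multiset.le_add_right _ _) (by rwa [add_comm] at hV1)
    have hb₁ : b₁ ≤ C - a₁ := le_sub_of_add_le (by rwa [add_comm] at hC1)
    have ha₂' : a₂ ≤ V - b₂ := le_sub_of_add_le hV1
    -- the parts
    set P := (V - b₂) + a₁ with hPdef
    set Q := b₂ + (C - a₁) with hQdef
    have hsum : P + Q = C + V := by
      rw [hPdef, hQdef]
      have e1 : a₁ + (C - a₁) = C := by rw [add_comm, tsub_add_cancel_of_le ha₁C]
      have e2 : (V - b₂) + b₂ = V := tsub_add_cancel_of_le hb₂V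
      calc ((V - b₂) + a₁) + (b₂ + (C - a₁)) = (a₁ + (C - a₁)) + ((V - b₂) + b₂) := by ac_rfl
      _ = C + V := by rw [e1, e2]
    have hAP : a₁ + a₂ ≤ P := by
      rw [hPdef]
      calc a₁ + a₂ ≤ a₁ + (V - b₂) := add_le_add_right ha₂' a₁
      _ = (V - b₂) + a₁ := add_comm _ _
    have hBQ : b₁ + b₂ ≤ Q := by
      rw [hQdef]
      calc b₁ + b₂ ≤ (C - a₁) + b₂ := add_le_add_left hb₁ b₂
      _ = b₂ + (C - a₁) := add_comm _ _
    have hPle : P ≤ C + V := by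
      rw [hPdef, add_comm (V - b₂) a₁]
      exact add_le_add ha₁C tsub_le_self
    have hQle : Q ≤ C + V := by
      rw [hQdef, add_comm b₂ (C - a₁)]
      exact add_le_add tsub_le_self hb₂V
    have hQatom : MAtom Q := by
      refine ⟨fun h0 => hb₂ ?_, ⟨b₁ + b₂, hBQ, hB⟩, ?_⟩
      · rw [hQdef] at h0; exact (add_eq_zero.1 h0).1
      intro Z Z' hZ hZ' hle
      rw [hQdef] at hle
      obtain ⟨zb, zc, z'b, z'c, heZ, heZ', hle1, hle2⟩ := split2_pair hle
      -- zb-pieces in b₂ (V-material), zc-pieces in C - a₁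
      by_cases hzb : zb = 0
      · subst hzb
        rw [zero_add] at heZ
        refine hpure Z' Z hZ' hZ ((by rwa [add_comm] at hle : Z' + Z ≤ Q).trans hQle) ?_
        rw [heZ]
        exact (le_trans (Multiset.le_add_right _ _) hle2).trans tsub_le_self
      by_cases hz'b : z'b = 0
      · subst hz'b
        rw [zero_add] at heZ'
        refine hpure Z Z' hZ hZ' (hle.trans hQle) ?_
        rw [heZ']
        exact (le_trans (Multiset.le_add_right _ _) (by rwa [add_comm] at hle2)).trans tsub_le_self
      -- both mixed: contradict minimality of β
      have hp' : Dp a₁ a₂ zc zb := by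
        refine ⟨hA, by rwa [add_comm zc zb, ← heZ], ha₂, hzb, ?_, ?_⟩
        · rw [add_comm]
          refine add_le_of_le_sub ha₁C ?_
          exact (le_trans (Multiset.le_add_right _ _) (by rwa [add_comm] at hle2))
        · calc a₂ + zb ≤ (V - b₂) + b₂ :=
            add_le_add ha₂' (le_trans (Multiset.le_add_right _ _) hle1)
          _ = V := tsub_add_cancel_of_le hb₂V
      have h1 := m1 _ _ _ _ hp'
      have h2 : Multiset.card zb < Multiset.card b₂ := card_lt_of_add_le hle1 hz'b
      omega
    have hPatom : MAtom P := by
      refine ⟨fun h0 => ha₂ ?_, ⟨a₁ + a₂, hAP, hA⟩, ?_⟩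
      · have : a₁ + a₂ ≤ 0 := h0 ▸ hAP
        exact (add_eq_zero.1 (Multiset.le_zero.1 this)).2
      intro Z Z' hZ hZ' hle
      rw [hPdef] at hle
      obtain ⟨zv, zc, z'v, z'c, heZ, heZ', hle1, hle2⟩ := split2_pair hle
      by_cases hzc : zc = 0
      · subst hzc
        rw [add_zero] at heZ
        refine hV ⟨Z, ?_, hZ⟩
        rw [heZ]
        exact (le_trans (Multiset.le_add_right _ _) hle1).trans tsub_le_self
      by_cases hz'c : z'c = 0
      · subst hz'c
        rw [add_zero] at heZ'
        refine hV ⟨Z', ?_, hZ'⟩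
        rw [heZ']
        exact (le_trans (Multiset.le_add_right _ _) (by rwa [add_comm] at hle1)).trans tsub_le_self
      by_cases hzv : zv = 0
      · subst hzv
        rw [zero_add] at heZ
        refine hpure Z' Z hZ' hZ ((by rwa [add_comm] at hle : Z' + Z ≤ P).trans hPle) ?_
        rw [heZ]
        exact ((le_trans (Multiset.le_add_right _ _) hle2).trans
          (le_trans (Multiset.le_add_right _ _) hC1))
      by_cases hz'v : z'v = 0
      · subst hz'v
        rw [zero_add] at heZ'
        refine hpure Z Z' hZ hZ' (hle.trans hPle) ?_
        rw [heZ']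
        exact ((le_trans (Multiset.le_add_right _ _) (by rwa [add_comm] at hle2)).trans
          (le_trans (Multiset.le_add_right _ _) hC1))
      -- all pieces nonzero : contradict minimality of α
      have hp' : Dp zc zv b₁ b₂ := by
        refine ⟨by rwa [add_comm zc zv, ← heZ], hB, hzv, hb₂, ?_, ?_⟩
        · calc zc + b₁ ≤ a₁ + (C - a₁) :=
            add_le_add (le_trans (Multiset.le_add_right _ _) hle2) hb₁
          _ = C := by rw [add_comm, tsub_add_cancel_of_le ha₁C]
        · calc zv + b₂ ≤ (V - b₂) + b₂ :=
            add_le_add_left (le_trans (Multiset.le_add_right _ _) hle1) b₂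
          _ = V := tsub_add_cancel_of_le hb₂V
      have h1 := m2 _ _ _ _ hp' hβ
      have h2 : Multiset.card zc < Multiset.card a₁ := card_lt_of_add_le hle2 hz'c
      omega
    refine ⟨P ::ₘ {Q}, ⟨?_, ?_⟩, by simp⟩
    · intro u hu
      rcases Multiset.mem_cons.1 hu with rfl | hu
      · exact hPatom
      · rwa [Multiset.mem_singleton.1 hu]
    · rw [Multiset.sum_cons, Multiset.sum_singleton, hsum]

/-! ## partitions from atom/zsf pieces -/

lemma PLE_mono {S : Multiset G} {k k' : ℕ} (h : PLE S k) (hk : k ≤ k') : PLE S k' := by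
  obtain ⟨y, hy, hc⟩ := h; exact ⟨y, hy, hc.trans hk⟩

lemma PLE_pieces : ∀ (v : Multiset (Multiset G)), (∀ x ∈ v, MAtom x ∨ ZSF x) →
    HasZS v.sum → PLE v.sum (Multiset.card v) := by
  intro v
  induction v using Multiset.induction with
  | empty => intro _ h; rw [Multiset.sum_zero] at h; exact absurd h zsf_zero
  | cons x v' ih =>
    intro hmem hzs
    rw [Multiset.sum_cons] at hzs ⊢
    rcases hmem x (Multiset.mem_cons_self x v') with hx | hx
    · by_cases hv' : HasZS v'.sum
      · obtain ⟨y, hy, hc⟩ := ih (fun z hz => hmem z (Multiset.mem_cons_of_mem hz)) hv'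
        refine ⟨x ::ₘ y, ⟨?_, by rw [Multiset.sum_cons, hy.2]⟩, by simpa using hc⟩
        intro u hu
        rcases Multiset.mem_cons.1 hu with rfl | hu
        · exact hx
        · exact hy.1 u hu
      · -- x atom, rest zsf
        rcases eq_or_ne v' 0 with rfl | hne
        · rw [Multiset.sum_zero, add_zero]
          exact ⟨{x}, isFact_single hx, by simp⟩
        · have h2 := twoPart (C := x) (V := v'.sum) hv' hx.2.2
            (hasZS_mono (Multiset.le_add_right _ _) hx.2.1)
          refine PLE_mono h2 ?_
          rw [Multiset.card_cons]
          have : 0 < Multiset.card v' := Multiset.card_pos.2 hne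
          omega
    · by_cases hv' : HasZS v'.sum
      · obtain ⟨y, hy, hc⟩ := ih (fun z hz => hmem z (Multiset.mem_cons_of_mem hz)) hv'
        have hyne : y ≠ 0 := by
          rintro rfl
          have h2 := hy.2
          rw [Multiset.sum_zero] at h2
          exact hv'.ne_zero h2.symm
        obtain ⟨z, hz⟩ := Multiset.exists_mem_of_ne_zero hyne
        obtain ⟨y'', rfl⟩ := Multiset.exists_cons_of_mem hz
        have hzatom : MAtom z := hy.1 z hz
        have h2 := twoPart (C := z) (V := x) hx hzatom.2.2
          (hasZS_mono (Multiset.le_add_right _ _) hzatom.2.1)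
        obtain ⟨w₂, hw₂, hc₂⟩ := h2
        refine ⟨w₂ + y'', ⟨?_, ?_⟩, ?_⟩
        · intro u hu
          rcases Multiset.mem_add.1 hu with h | h
          · exact hw₂.1 u h
          · exact hy.1 u (Multiset.mem_cons_of_mem h)
        · rw [Multiset.sum_add, hw₂.2]
          have : v'.sum = z + y''.sum := by rw [← Multiset.sum_cons, hy.2]
          rw [this]; ac_rfl
        · have hcy := hc
          simp only [Multiset.card_cons] at hcy
          rw [Multiset.card_add, Multiset.card_cons]
          omega
      · -- both zsf
        have hCx : ∀ Z Z' : Multiset G, IsZS Z → IsZS Z' → Z + Z' ≤ x → False := by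
          intro Z Z' hZ _ hle
          exact hx ⟨Z, le_trans (Multiset.le_add_right _ _) hle, hZ⟩
        rcases eq_or_ne v' 0 with rfl | hne
        · rw [Multiset.sum_zero, add_zero] at hzs
          exact absurd hzs hx
        · have h2 := twoPart (C := x) (V := v'.sum) hv' hCx hzs
          refine PLE_mono h2 ?_
          rw [Multiset.card_cons]
          have : 1 ≤ Multiset.card v' := Multiset.card_pos.2 hne
          omega

lemma sum_map_snd_le (w : Multiset (Multiset G × Multiset G)) (h : ∀ p ∈ w, p.2 ≤ p.1) :
    (w.map Prod.snd).sum ≤ (w.map Prod.fst).sum := by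
  induction w using Multiset.induction with
  | empty => simp
  | cons a w ih =>
    simp only [Multiset.map_cons, Multiset.sum_cons]
    exact add_le_add (h a (Multiset.mem_cons_self a w))
      (ih (fun p hp => h p (Multiset.mem_cons_of_mem hp)))

lemma sum_map_sub (w : Multiset (Multiset G × Multiset G)) (h : ∀ p ∈ w, p.2 ≤ p.1) :
    (w.map fun p => p.1 - p.2).sum = (w.map Prod.fst).sum - (w.map Prod.snd).sum := by
  induction w using Multiset.induction with
  | empty => simp
  | cons a w ih =>
    have ha := h a (Multiset.mem_cons_self a w)
    have hw : ∀ p ∈ w, p.2 ≤ p.1 := fun p hp => h p (Multiset.mem_cons_of_mem hp)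
    have hle : (w.map Prod.snd).sum ≤ (w.map Prod.fst).sum := sum_map_snd_le w hw
    simp only [Multiset.map_cons, Multiset.sum_cons, ih hw]
    rw [tsub_add_tsub_comm ha hle]

/-- key step: a factorization of length `p` and one of length `≥ p+2` produce one of
length `p+1`. -/
theorem ng_main : ∀ (n : ℕ) (S : Multiset G), Multiset.card S ≤ n →
    ∀ p q r, (∃ y, IsFact S y ∧ Multiset.card y = p) →
      (∃ y, IsFact S y ∧ Multiset.card y = q) → p ≤ r → r ≤ q →
      ∃ y, IsFact S y ∧ Multiset.card y = r := by
  intro n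
  induction n with
  | zero =>
    intro S hS p q r hp hq hpr hrq
    have hS0 : S = 0 := Multiset.card_eq_zero.1 (Nat.le_zero.1 hS)
    subst hS0
    obtain ⟨y, hy, hyc⟩ := hp
    have hy0 : y = 0 := by
      by_contra hne
      obtain ⟨u, hu⟩ := Multiset.exists_mem_of_ne_zero hne
      have h1 := (mem_le_sum hu).trans (le_of_eq hy.2)
      exact (hy.1 u hu).1 (Multiset.le_zero.1 h1)
    obtain ⟨y', hy', hyc'⟩ := hq
    have hy'0 : y' = 0 := by
      by_contra hne
      obtain ⟨u, hu⟩ := Multiset.exists_mem_of_ne_zero hne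
      have h1 := (mem_le_sum hu).trans (le_of_eq hy'.2)
      exact (hy'.1 u hu).1 (Multiset.le_zero.1 h1)
    subst hy0; subst hy'0
    simp only [Multiset.card_zero] at hyc hyc'
    refine ⟨0, hy, ?_⟩
    simp only [Multiset.card_zero]
    omega
  | succ n ih =>
    intro S hS p q r hp hq hpr hrq
    -- inner step lemma
    have step : ∀ p' q', (∃ y, IsFact S y ∧ Multiset.card y = p') →
        (∃ y, IsFact S y ∧ Multiset.card y = q') → p' + 2 ≤ q' →
        ∃ y, IsFact S y ∧ Multiset.card y = p' + 1 := by
      intro p' q' hp' hq' hpq'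
      obtain ⟨yA, hyA, hcA⟩ := hp'
      obtain ⟨yB, hyB, hcB⟩ := hq'
      -- p' ≥ 1
      have hyBne : yB ≠ 0 := by
        rintro rfl
        rw [Multiset.card_zero] at hcB
        omega
      have hp1 : 1 ≤ p' := by
        by_contra h0
        push_neg at h0
        have hp0 : p' = 0 := by omega
        subst hp0
        have hyA0 : yA = 0 := Multiset.card_eq_zero.1 hcA
        have hS0 : S = 0 := by rw [← hyA.2, hyA0, Multiset.sum_zero]
        obtain ⟨u, hu⟩ := Multiset.exists_mem_of_ne_zero hyBne
        have h1 := (mem_le_sum hu).trans (le_of_eq hyB.2)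
        rw [hS0] at h1
        exact (hyB.1 u hu).1 (Multiset.le_zero.1 h1)
      obtain ⟨B₁, hB₁mem⟩ := Multiset.exists_mem_of_ne_zero hyBne
      obtain ⟨yB', rfl⟩ := Multiset.exists_cons_of_mem hB₁mem
      have hBatom : MAtom B₁ := hyB.1 B₁ (Multiset.mem_cons_self _ _)
      obtain ⟨U, hUB₁, hUz, hUatom⟩ := exists_min_zs_atom hBatom.2.1
      have hB₁S : B₁ ≤ S := by
        rw [← hyB.2]; rw [Multiset.sum_cons]; exact Multiset.le_add_right _ _
      have hUS : U ≤ S := hUB₁.trans hB₁S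
      have hSsplit : S = B₁ + yB'.sum := by rw [← hyB.2, Multiset.sum_cons]
      have hSU : S - U = (B₁ - U) + yB'.sum := by
        rw [hSsplit, sub_add_distrib hUB₁]
      have hyB'card : Multiset.card yB' = q' - 1 := by
        have := hcB; simp only [Multiset.card_cons] at this; omega
      have hyB'ne : yB' ≠ 0 := by
        rintro rfl
        simp at hyB'card
        omega
      obtain ⟨B₂, hB₂mem⟩ := Multiset.exists_mem_of_ne_zero hyB'ne
      have hB₂atom : MAtom B₂ := hyB.1 B₂ (Multiset.mem_cons_of_mem hB₂mem)
      have hZSsub : HasZS (S - U) := by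
        rw [hSU]
        exact hasZS_mono ((mem_le_sum hB₂mem).trans (Multiset.le_add_left _ _))
          hB₂atom.2.1
      -- (a): a factorization of S - U with ≤ p' parts
      have hsmall : PLE (S - U) p' := by
        have hUyA : U ≤ yA.sum := by rw [hyA.2]; exact hUS
        obtain ⟨w, hw1, hw2, hw3⟩ := splitMul hUyA
        have hy₁sum : (w.map fun pr => pr.1 - pr.2).sum = S - U := by
          rw [sum_map_sub w hw2, hw1, hw3, hyA.2]
        have hpieces : ∀ x ∈ (w.map fun pr => pr.1 - pr.2), MAtom x ∨ ZSF x := by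
          intro x hx
          obtain ⟨pr, hpr, rfl⟩ := Multiset.mem_map.1 hx
          have h1 : pr.1 ∈ yA := by rw [← hw1]; exact Multiset.mem_map_of_mem _ hpr
          exact matom_or_zsf_of_le (hyA.1 pr.1 h1) tsub_le_self
        have := PLE_pieces _ hpieces (hy₁sum ▸ hZSsub)
        rw [hy₁sum] at this
        refine PLE_mono this ?_
        rw [Multiset.card_map]
        have : Multiset.card w = Multiset.card yA := by rw [← hw1, Multiset.card_map]
        omega
      -- (b): a factorization of S - U with ≥ p'+1 parts
      have hbig : ∃ ℓ₂ ≥ p' + 1, ∃ y, IsFact (S - U) y ∧ Multiset.card y = ℓ₂ := by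
        rcases eq_or_ne (B₁ - U) 0 with hJ | hJ
        · refine ⟨q' - 1, by omega, yB', ⟨fun u hu => hyB.1 u (Multiset.mem_cons_of_mem hu), ?_⟩, hyB'card⟩
          rw [hSU, hJ, zero_add]
        · obtain ⟨yB'', rfl⟩ := Multiset.exists_cons_of_mem hB₂mem
          have hJzsf : ZSF (B₁ - U) := matom_sub_zsf hBatom hUB₁ hUz
          have h2 := twoPart (C := B₂) (V := B₁ - U) hJzsf hB₂atom.2.2
            (hasZS_mono (Multiset.le_add_right _ _) hB₂atom.2.1)
          obtain ⟨w₂, hw₂, hc₂⟩ := h2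
          have hw₂ne : w₂ ≠ 0 := by
            rintro rfl
            have h2 := hw₂.2
            rw [Multiset.sum_zero] at h2
            exact hB₂atom.1 ((add_eq_zero.1 h2.symm).1)
          have hc₂1 : 1 ≤ Multiset.card w₂ := Multiset.card_pos.2 hw₂ne
          refine ⟨Multiset.card w₂ + Multiset.card yB'', ?_, w₂ + yB'', ⟨?_, ?_⟩, by
            rw [Multiset.card_add]⟩
          · have : Multiset.card (B₂ ::ₘ yB'') = q' - 1 := hyB'card
            simp only [Multiset.card_cons] at this
            omega
          · intro u hu
            rcases Multiset.mem_add.1 hu with h | h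
            · exact hw₂.1 u h
            · exact hyB.1 u (Multiset.mem_cons_of_mem (Multiset.mem_cons_of_mem h))
          · rw [Multiset.sum_add, hw₂.2, hSU, Multiset.sum_cons]
            ac_rfl
      obtain ⟨ℓ₂, hℓ₂ge, hfact₂⟩ := hbig
      obtain ⟨yPle, hyPle, hcPle⟩ := hsmall
      -- apply induction hypothesis to S - U
      have hcard : Multiset.card (S - U) ≤ n := by
        have h1 : Multiset.card (S - U) = Multiset.card S - Multiset.card U := by
          rw [Multiset.card_sub hUS]
        have h2 : 1 ≤ Multiset.card U := Multiset.card_pos.2 hUz.1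
        omega
      obtain ⟨yp, hyp, hycard⟩ := ih (S - U) hcard (Multiset.card yPle) ℓ₂ p'
        ⟨yPle, hyPle, rfl⟩ hfact₂ hcPle (by omega)
      refine ⟨U ::ₘ yp, ⟨?_, ?_⟩, by simp [hycard]⟩
      · intro u hu
        rcases Multiset.mem_cons.1 hu with rfl | hu
        · exact hUatom
        · exact hyp.1 u hu
      · rw [Multiset.sum_cons, hyp.2, add_comm, tsub_add_cancel_of_le hUS]
    -- fill the interval using `step`
    clear ih
    have fill : ∀ d p' q' r', q' - p' ≤ d →
        (∃ y, IsFact S y ∧ Multiset.card y = p') →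
        (∃ y, IsFact S y ∧ Multiset.card y = q') → p' ≤ r' → r' ≤ q' →
        ∃ y, IsFact S y ∧ Multiset.card y = r' := by
      intro d
      induction d with
      | zero =>
        intro p' q' r' hd hp' hq' h1 h2
        rcases le_or_gt q' p' with h | h
        · have : r' = p' := by omega
          subst this; exact hp'
        · omega
      | succ d ihd =>
        intro p' q' r' hd hp' hq' h1 h2
        rcases le_or_gt q' (p' + 1) with h | h
        · rcases eq_or_lt_of_le h1 with rfl | h3
          · exact hp'
          · have : r' = q' := by omega
            subst this; exact hq'
        · have hp1 := step p' q' hp' hq' (by omega)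
          rcases eq_or_lt_of_le h1 with rfl | h3
          · exact hp'
          · exact ihd (p' + 1) q' r' (by omega) hp1 hq' (by omega) h2
    exact fill (q - p) p q r (le_refl _) hp hq hpr hrq

/-! ## existence and basic facts -/

lemma mem_fiota_iff {S : Multiset G} : S ∈ FIota G ↔ S = 0 ∨ HasZS S := by
  unfold FIota HasZS IsZS
  simp only [Set.mem_setOf_eq]

lemma exists_fact_aux : ∀ n (S : Multiset G), Multiset.card S ≤ n → (S = 0 ∨ HasZS S) →
    ∃ y, IsFact S y := by
  intro n
  induction n with
  | zero =>
    intro S hS _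
    have : S = 0 := Multiset.card_eq_zero.1 (Nat.le_zero.1 hS)
    exact ⟨0, by simp [IsFact], by simp [this]⟩
  | succ n ih =>
    intro S hS hmem
    rcases hmem with rfl | hzs
    · exact ⟨0, by simp [IsFact], by simp⟩
    by_cases hatom : MAtom S
    · exact ⟨{S}, isFact_single hatom⟩
    · unfold MAtom at hatom
      push_neg at hatom
      obtain ⟨T₁, T₂, h1, h2, hle'⟩ := hatom hzs.ne_zero hzs
      have hle := hle'.1
      have hT₁S : T₁ ≤ S := le_trans (Multiset.le_add_right _ _) hle
      have hcards := Multiset.card_le_card hle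
      rw [Multiset.card_add] at hcards
      have hc1 : 0 < Multiset.card T₁ := Multiset.card_pos.2 h1.1
      have hc2 : 0 < Multiset.card T₂ := Multiset.card_pos.2 h2.1
      obtain ⟨y₁, hy₁⟩ := ih T₁ (by omega) (Or.inr h1.hasZS)
      have hT₂sub : T₂ ≤ S - T₁ := le_sub_of_add_le (by rwa [add_comm] at hle)
      have hcsub : Multiset.card (S - T₁) ≤ n := by
        rw [Multiset.card_sub hT₁S]
        omega
      obtain ⟨y₂, hy₂⟩ := ih (S - T₁) hcsub (Or.inr ⟨T₂, hT₂sub, h2⟩)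
      refine ⟨y₁ + y₂, ?_⟩
      have := isFact_append hy₁ hy₂
      rwa [add_comm T₁ (S - T₁), tsub_add_cancel_of_le hT₁S] at this

lemma exists_fact {S : Multiset G} (h : S ∈ FIota G) : ∃ y, IsFact S y :=
  exists_fact_aux (Multiset.card S) S (le_refl _) (mem_fiota_iff.1 h)

lemma isFact_zero {y : Multiset (Multiset G)} (h : IsFact 0 y) : y = 0 := by
  by_contra hne
  obtain ⟨u, hu⟩ := Multiset.exists_mem_of_ne_zero hne
  have h1 := (mem_le_sum hu).trans (le_of_eq h.2)
  exact (h.1 u hu).1 (Multiset.le_zero.1 h1)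

lemma mlenSet_zero : MLenSet G (0 : Multiset G) = {0} := by
  ext n
  rw [mem_mlenSet_iff]
  constructor
  · rintro ⟨y, hy, rfl⟩
    rw [isFact_zero hy]
    simp
  · rintro rfl
    exact ⟨0, ⟨by simp, by simp⟩, rfl⟩

lemma mlenSet_atom {S : Multiset G} (h : MAtom S) : MLenSet G S = {1} := by
  ext n
  rw [mem_mlenSet_iff]
  constructor
  · rintro ⟨y, hy, rfl⟩
    by_contra hne
    have hc : Multiset.card y ≠ 1 := hne
    rcases Nat.lt_or_ge (Multiset.card y) 1 with h1 | h1
    · have : y = 0 := Multiset.card_eq_zero.1 (by omega)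
      subst this
      exact h.1 (by simpa using hy.2.symm)
    · have h2 : 2 ≤ Multiset.card y := by omega
      have hyne : y ≠ 0 := by rintro rfl; simp at h2
      obtain ⟨u, hu⟩ := Multiset.exists_mem_of_ne_zero hyne
      obtain ⟨y', rfl⟩ := Multiset.exists_cons_of_mem hu
      have hy'ne : y' ≠ 0 := by
        rintro rfl
        simp at h2
      obtain ⟨v, hv⟩ := Multiset.exists_mem_of_ne_zero hy'ne
      obtain ⟨Tu, hTu, hTuz⟩ := (hy.1 u (Multiset.mem_cons_self _ _)).2.1
      obtain ⟨Tv, hTv, hTvz⟩ := (hy.1 v (Multiset.mem_cons_of_mem hv)).2.1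
      refine h.2.2 Tu Tv hTuz hTvz ?_
      calc Tu + Tv ≤ u + v := add_le_add hTu hTv
      _ ≤ u + y'.sum := add_le_add_right (mem_le_sum hv) u
      _ = (u ::ₘ y').sum := (Multiset.sum_cons u y').symm
      _ = S := hy.2
  · rintro rfl
    exact ⟨{S}, isFact_single h, by simp⟩

lemma fact_card_le_card {S : Multiset G} {y : Multiset (Multiset G)} (h : IsFact S y) :
    Multiset.card y ≤ Multiset.card S := by
  have : ∀ (y : Multiset (Multiset G)), (∀ u ∈ y, u ≠ 0) →
      Multiset.card y ≤ Multiset.card y.sum := by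
    intro y
    induction y using Multiset.induction with
    | empty => simp
    | cons a y ih =>
      intro hne
      rw [Multiset.card_cons, Multiset.sum_cons, Multiset.card_add]
      have h1 : 0 < Multiset.card a := Multiset.card_pos.2 (hne a (Multiset.mem_cons_self a y))
      have h2 := ih (fun u hu => hne u (Multiset.mem_cons_of_mem hu))
      omega
  have h2 := this y (fun u hu => (h.1 u hu).1)
  rwa [h.2] at h2

/-- full no-gap statement for MLenSet -/
lemma mlenSet_nogap {S : Multiset G} {p q r : ℕ} (hp : p ∈ MLenSet G S)
    (hq : q ∈ MLenSet G S) (h1 : p ≤ r) (h2 : r ≤ q) : r ∈ MLenSet G S := by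
  rw [mem_mlenSet_iff] at *
  exact ng_main (Multiset.card S) S (le_refl _) p q r hp hq h1 h2

/-! ## independent elements and pair constructions -/

def Indep {m : ℕ} (g : Fin m → G) : Prop :=
  (∀ i, g i ≠ 0) ∧ ∀ s : Fin m → G, (∀ i, s i = 0 ∨ s i = g i ∨ s i = - g i) →
    ∑ i, s i = 0 → ∀ i, s i = 0

lemma exists_indep [Infinite G] (m : ℕ) : ∃ g : Fin m → G, Indep g := by
  classical
  induction m with
  | zero => exact ⟨Fin.elim0, fun i => i.elim0, fun s _ _ i => i.elim0⟩
  | succ m ih =>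
    obtain ⟨g, hg⟩ := ih
    -- finitely many forbidden values
    set F : Finset G := Finset.image
      (fun c : Fin m → Fin 3 => ∑ i, (if c i = 0 then 0 else if c i = 1 then g i else - g i))
      Finset.univ with hF
    set bad : Finset G := F ∪ F.image Neg.neg ∪ {0} with hbad
    obtain ⟨x, hx⟩ := Infinite.exists_notMem_finset bad
    have hx0 : x ≠ 0 := by
      intro h; exact hx (by rw [h, hbad]; simp)
    have hxF : x ∉ F := fun h => hx (by rw [hbad]; simp [h])
    have hxnF : -x ∉ F := by
      intro h
      exact hx (by
        rw [hbad]
        have : x ∈ F.image Neg.neg := Finset.mem_image.2 ⟨-x, h, by simp⟩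
        simp [this])
    have hsumF : ∀ t : Fin m → G, (∀ i, t i = 0 ∨ t i = g i ∨ t i = - g i) →
        (∑ i, t i) ∈ F := by
      intro t ht
      refine Finset.mem_image.2 ⟨fun i => if t i = 0 then 0 else if t i = g i then 1 else 2,
        Finset.mem_univ _, ?_⟩
      refine Finset.sum_congr rfl fun i _ => ?_
      show (if (if t i = 0 then (0 : Fin 3) else if t i = g i then 1 else 2) = 0 then 0
        else if (if t i = 0 then (0 : Fin 3) else if t i = g i then 1 else 2) = 1 then g i
        else - g i) = t i
      by_cases h0 : t i = 0
      · rw [if_pos h0]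
        simp [h0]
      · rw [if_neg h0]
        by_cases h1 : t i = g i
        · rw [if_pos h1]
          have e1 : (1 : Fin 3) ≠ 0 := by decide
          rw [if_neg e1, if_pos rfl]
          exact h1.symm
        · rw [if_neg h1]
          have e1 : (2 : Fin 3) ≠ 0 := by decide
          have e2 : (2 : Fin 3) ≠ 1 := by decide
          rw [if_neg e1, if_neg e2]
          rcases ht i with h | h | h
          · exact absurd h h0
          · exact absurd h h1
          · exact h.symm
    refine ⟨Fin.snoc g x, ⟨?_, ?_⟩⟩
    · intro i
      refine Fin.lastCases ?_ ?_ i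
      · rwa [Fin.snoc_last]
      · intro j; rw [Fin.snoc_castSucc]; exact hg.1 j
    · intro s hs hsum i
      rw [Fin.sum_univ_castSucc] at hsum
      set t : Fin m → G := fun j => s (Fin.castSucc j) with ht
      have hta : ∀ j, t j = 0 ∨ t j = g j ∨ t j = - g j := by
        intro j
        have := hs (Fin.castSucc j)
        rwa [Fin.snoc_castSucc] at this
      have hlast : s (Fin.last m) = 0 := by
        rcases hs (Fin.last m) with h | h | h
        · exact h
        · exfalso
          rw [Fin.snoc_last] at h
          apply hxnF
          have : ∑ j, t j = - x := by
            have := hsum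
            rw [h] at this
            linear_combination (norm := abel) this
          rw [← this]
          exact hsumF t hta
        · exfalso
          rw [Fin.snoc_last] at h
          apply hxF
          have : ∑ j, t j = x := by
            have := hsum
            rw [h] at this
            linear_combination (norm := abel) this
          rw [← this]
          exact hsumF t hta
      have hrest : ∀ j, t j = 0 := by
        apply hg.2 t hta
        rw [hlast, add_zero] at hsum
        exact hsum
      refine Fin.lastCases ?_ ?_ i
      · exact hlast
      · exact hrest

/-! ## pairs -/

def prm {m : ℕ} (g : Fin m → G) (i : Fin m) : Multiset G := {g i, - g i}

variable {m : ℕ} {g : Fin m → G}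

lemma prm_sum (i : Fin m) : (prm g i).sum = 0 := by
  simp [prm]

lemma prm_card (i : Fin m) : Multiset.card (prm g i) = 2 := by
  simp [prm]

lemma count_prm (x : G) (i : Fin m) :
    (prm g i).count x = (if x = g i then 1 else 0) + (if x = - g i then 1 else 0) := by
  simp only [prm, Multiset.insert_eq_cons, Multiset.count_cons, Multiset.count_singleton]
  omega

lemma sub_pair {a b : G} {t : Multiset G} (h : t ≤ (a ::ₘ {b})) :
    t = 0 ∨ t = {a} ∨ t = {b} ∨ t = (a ::ₘ {b}) := by
  have hc := Multiset.card_le_card h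
  simp only [Multiset.card_cons, Multiset.card_singleton] at hc
  interval_cases hn : Multiset.card t
  · exact Or.inl (Multiset.card_eq_zero.1 hn)
  · obtain ⟨x, rfl⟩ := Multiset.card_eq_one.1 hn
    have hx : x ∈ (a ::ₘ {b}) := Multiset.mem_of_le h (Multiset.mem_singleton_self x)
    rcases Multiset.mem_cons.1 hx with rfl | hx
    · exact Or.inr (Or.inl rfl)
    · rw [Multiset.mem_singleton.1 hx]
      exact Or.inr (Or.inr (Or.inl rfl))
  · refine Or.inr (Or.inr (Or.inr ?_))
    refine Multiset.eq_of_le_of_card_le h ?_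
    simp [hn]

/-- decompose a sub-multiset of a finset-indexed sum -/
lemma le_finsetSum_decomp {ι : Type*} [DecidableEq ι] (s : Finset ι) (f : ι → Multiset G) :
    ∀ T : Multiset G, T ≤ ∑ i ∈ s, f i →
      ∃ t : ι → Multiset G, (∀ i, t i ≤ f i) ∧ T = ∑ i ∈ s, t i := by
  classical
  induction s using Finset.induction with
  | empty =>
    intro T hT
    simp only [Finset.sum_empty, Multiset.le_zero] at hT
    exact ⟨fun _ => 0, fun i => Multiset.zero_le _, by simp [hT]⟩
  | @insert a s ha ih =>
    intro T hT
    rw [Finset.sum_insert ha] at hT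
    obtain ⟨x₁, x₂, hx₁, hx₂, hx⟩ := split2 hT
    obtain ⟨t, ht1, ht2⟩ := ih x₂ hx₂
    refine ⟨Function.update t a x₁, ?_, ?_⟩
    · intro i
      rcases eq_or_ne i a with rfl | hne
      · rwa [Function.update_self]
      · rw [Function.update_of_ne hne]; exact ht1 i
    · rw [Finset.sum_insert ha, Function.update_self, hx, ht2]
      congr 1
      refine Finset.sum_congr rfl fun i hi => ?_
      exact (Function.update_of_ne (fun h : i = a => ha (h ▸ hi)) x₁ t).symm

lemma sum_of_finsetSum {ι : Type*} (s : Finset ι) (f : ι → Multiset G) :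
    (∑ i ∈ s, f i).sum = ∑ i ∈ s, (f i).sum := by
  classical
  induction s using Finset.induction with
  | empty => simp
  | @insert a s ha ih => rw [Finset.sum_insert ha, Finset.sum_insert ha, Multiset.sum_add, ih]

/-- classification of zero-sum sub-multisets of a sum of independent pairs -/
lemma zs_in_pairs (hg : Indep g) {T : Multiset G} (hT : T ≤ ∑ i : Fin m, prm g i)
    (hsum : T.sum = 0) : ∃ s : Finset (Fin m), T = ∑ i ∈ s, prm g i := by
  classical
  obtain ⟨t, ht1, ht2⟩ := le_finsetSum_decomp Finset.univ (prm g) T hT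
  have hts : ∀ i, (t i).sum = 0 ∨ (t i).sum = g i ∨ (t i).sum = - g i := by
    intro i
    rcases sub_pair (ht1 i) with h | h | h | h <;> rw [h]
    · simp
    · simp
    · simp
    · rw [show ((g i) ::ₘ {- g i}).sum = 0 from by simp]
      simp
  have hall : ∀ i, (t i).sum = 0 := by
    apply hg.2 _ hts
    rw [← sum_of_finsetSum, ← ht2, hsum]
  have hzz : ∀ i, t i = 0 ∨ t i = prm g i := by
    intro i
    rcases sub_pair (ht1 i) with h | h | h | h
    · exact Or.inl h
    · exfalso
      have := hall i
      rw [h] at this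
      simp only [Multiset.sum_singleton] at this
      exact hg.1 i this
    · exfalso
      have := hall i
      rw [h] at this
      simp only [Multiset.sum_singleton] at this
      exact hg.1 i (by rwa [neg_eq_zero] at this)
    · exact Or.inr h
  refine ⟨Finset.univ.filter (fun i => t i = prm g i), ?_⟩
  rw [ht2, ← Finset.sum_filter_add_sum_filter_not Finset.univ (fun i => t i = prm g i)]
  have h2 : ∑ i ∈ Finset.univ.filter (fun i => ¬ t i = prm g i), t i = 0 := by
    refine Finset.sum_eq_zero fun i hi => ?_
    rcases hzz i with h | h
    · exact h
    · exact absurd h (Finset.mem_filter.1 hi).2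
  rw [h2, add_zero]
  exact Finset.sum_congr rfl fun i hi => (Finset.mem_filter.1 hi).2

lemma indep_ne_aux (hg : Indep g) {i j : Fin m} (hij : i ≠ j) (a b : G)
    (ha : a = g i ∨ a = - g i) (hb : b = g j ∨ b = - g j) (hab : a + b = 0) : False := by
  classical
  set s : Fin m → G := fun u => if u = i then a else if u = j then b else 0 with hs
  have hsum : ∑ u, s u = a + b := by
    have hfe : s = (fun u => (if u = i then a else 0) + (if u = j then b else 0)) := by
      funext u
      rcases eq_or_ne u i with rfl | h1
      · rw [hs]
        simp [if_pos rfl, if_neg hij]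
      · rcases eq_or_ne u j with rfl | h2
        · simp [hs, if_neg h1]
        · simp [hs, if_neg h1, if_neg h2]
    rw [hfe, Finset.sum_add_distrib, Finset.sum_ite_eq' Finset.univ i (fun _ => a),
      Finset.sum_ite_eq' Finset.univ j (fun _ => b)]
    simp
  have hzero := hg.2 s (fun u => by
      rcases eq_or_ne u i with rfl | h1
      · rcases ha with h | h
        · exact Or.inr (Or.inl (by simp [hs, h]))
        · exact Or.inr (Or.inr (by simp [hs, h]))
      · rcases eq_or_ne u j with rfl | h2
        · rcases hb with h | h
          · refine Or.inr (Or.inl ?_)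
            simp [hs, if_neg h1, h]
          · refine Or.inr (Or.inr ?_)
            simp [hs, if_neg h1, h]
        · exact Or.inl (by simp [hs, if_neg h1, if_neg h2])) (by rw [hsum, hab]) i
  have hai : s i = a := by simp [hs]
  rw [hai] at hzero
  rcases ha with h | h
  · exact hg.1 i (h ▸ hzero)
  · rw [h, neg_eq_zero] at hzero
    exact hg.1 i hzero

/-! ## counting tools -/

lemma count_msum (x : G) : ∀ (y : Multiset (Multiset G)),
    y.sum.count x = (y.map (Multiset.count x)).sum := by
  intro y
  induction y using Multiset.induction with
  | empty => simp
  | cons a y ih => simp [Multiset.count_add, ih]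

lemma card_msum : ∀ (y : Multiset (Multiset G)),
    Multiset.card y.sum = (y.map Multiset.card).sum := by
  intro y
  induction y using Multiset.induction with
  | empty => simp
  | cons a y ih => simp [ih]

lemma count_finsetSum {ι : Type*} (x : G) (s : Finset ι) (f : ι → Multiset G) :
    (∑ i ∈ s, f i).count x = ∑ i ∈ s, (f i).count x := by
  classical
  induction s using Finset.induction with
  | empty => simp
  | @insert a s ha ih => rw [Finset.sum_insert ha, Finset.sum_insert ha, Multiset.count_add, ih]

lemma mem_finsetSum {ι : Type*} {x : G} {s : Finset ι} {f : ι → Multiset G} :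
    x ∈ ∑ i ∈ s, f i ↔ ∃ i ∈ s, x ∈ f i := by
  classical
  induction s using Finset.induction with
  | empty => simp
  | @insert a s ha ih =>
    rw [Finset.sum_insert ha, Multiset.mem_add, ih]
    constructor
    · rintro (h | ⟨i, hi, h⟩)
      · exact ⟨a, Finset.mem_insert_self a s, h⟩
      · exact ⟨i, Finset.mem_insert_of_mem hi, h⟩
    · rintro ⟨i, hi, h⟩
      rcases Finset.mem_insert.1 hi with rfl | hi
      · exact Or.inl h
      · exact Or.inr ⟨i, hi, h⟩

/-! ## atoms of the model multiset -/

lemma matom_zero_cons {X : Multiset G} (hX : ZSF X) (h0 : (0:G) ∉ X) :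
    MAtom ((0:G) ::ₘ X) := by
  have hz : IsZS {(0:G)} := ⟨by simp, by simp⟩
  refine ⟨by simp, ⟨{0}, by
    rw [Multiset.singleton_le]; exact Multiset.mem_cons_self 0 X, hz⟩, ?_⟩
  intro Z Z' hZ hZ' hle
  have key : ∀ W : Multiset G, W ≤ (0:G) ::ₘ X → IsZS W → (0:G) ∈ W := by
    intro W hW hWz
    by_contra h0W
    have hWX : W ≤ X := by
      rw [Multiset.le_iff_count]
      intro a
      have h2 := Multiset.le_iff_count.1 hW a
      rcases eq_or_ne a 0 with rfl | ha
      · simp [Multiset.count_eq_zero_of_notMem h0W]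
      · rwa [Multiset.count_cons_of_ne ha] at h2
    exact hX ⟨W, hWX, hWz⟩
  have h1 := key Z (le_trans (Multiset.le_add_right _ _) hle) hZ
  have h2 := key Z' (le_trans (Multiset.le_add_left _ _) hle) hZ'
  have hc := Multiset.le_iff_count.1 hle 0
  rw [Multiset.count_add, Multiset.count_cons_self, Multiset.count_eq_zero_of_notMem h0] at hc
  have c1 : 1 ≤ Z.count 0 := Multiset.one_le_count_iff_mem.2 h1
  have c2 : 1 ≤ Z'.count 0 := Multiset.one_le_count_iff_mem.2 h2
  omega

variable {m : ℕ} {g : Fin m → G}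

lemma matom_prm (hg : Indep g) (i : Fin m) : MAtom (prm g i) := by
  refine matom_of_min_zs ⟨by simp [prm], prm_sum i⟩ ?_
  intro T hT hTz
  have hT' : T ≤ (g i) ::ₘ {- g i} := by rwa [prm, Multiset.insert_eq_cons] at hT
  rcases sub_pair hT' with h | h | h | h
  · exact absurd h hTz.1
  · exfalso
    have := hTz.2
    rw [h, Multiset.sum_singleton] at this
    exact hg.1 i this
  · exfalso
    have := hTz.2
    rw [h, Multiset.sum_singleton, neg_eq_zero] at this
    exact hg.1 i this
  · rw [h, prm, Multiset.insert_eq_cons]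

lemma singleton_le_prm (e : G) (i : Fin m) (he : e = g i ∨ e = - g i) :
    ({e} : Multiset G) ≤ prm g i := by
  rw [Multiset.singleton_le, prm]
  rcases he with rfl | rfl
  · exact Multiset.mem_cons_self _ _
  · rw [Multiset.insert_eq_cons]
    exact Multiset.mem_cons_of_mem (Multiset.mem_singleton_self _)

/-- no complete pair inside a multiset of chosen halves -/
lemma prm_not_le_halves (hg : Indep g) (e : Fin m → G) (he : ∀ i, e i = g i ∨ e i = - g i)
    (s' : Finset (Fin m)) (j : Fin m) (h : prm g j ≤ ∑ i ∈ s', {e i}) : False := by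
  classical
  set X := ∑ i ∈ s', ({e i} : Multiset G) with hX
  have hcount : ∀ c : G, X.count c = ∑ i ∈ s', (if c = e i then 1 else 0) := by
    intro c
    rw [hX, count_finsetSum]
    refine Finset.sum_congr rfl fun i _ => ?_
    rw [Multiset.count_singleton]
  by_cases hord : g j = - g j
  · -- order two: need count (g j) X ≥ 2
    have h1 := Multiset.le_iff_count.1 h (g j)
    rw [count_prm, if_pos rfl, if_pos hord, hcount] at h1
    have h2 : ∑ i ∈ s', (if g j = e i then 1 else 0) ≤ 1 := by
      have : ∀ i ∈ s', i ≠ j → (if g j = e i then 1 else 0) = 0 := by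
        intro i _ hij
        rw [if_neg]
        intro hc
        refine indep_ne_aux hg hij (e i) (- g j) (he i) (Or.inr rfl) ?_
        rw [← hc]
        exact add_neg_cancel (g j)
      calc ∑ i ∈ s', (if g j = e i then 1 else 0)
          ≤ ∑ i ∈ s', (if i = j then 1 else 0) := by
            refine Finset.sum_le_sum fun i hi => ?_
            by_cases hij : i = j
            · subst hij
              rw [if_pos rfl]
              split <;> omega
            · rw [this i hi hij]
              omega
      _ ≤ 1 := by
            rw [Finset.sum_ite_eq' s' j (fun _ => 1)]
            split <;> omega
    omega
  · -- both g j and -g j must occur among halves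
    have hmem : - g j ∈ X := by
      refine Multiset.mem_of_le h ?_
      rw [prm, Multiset.insert_eq_cons]
      exact Multiset.mem_cons_of_mem (Multiset.mem_singleton_self _)
    have hmem2 : g j ∈ X := by
      refine Multiset.mem_of_le h ?_
      rw [prm, Multiset.insert_eq_cons]
      exact Multiset.mem_cons_self _ _
    rw [hX, mem_finsetSum] at hmem hmem2
    obtain ⟨i, hi, hmi⟩ := hmem
    obtain ⟨i', hi', hmi'⟩ := hmem2
    rw [Multiset.mem_singleton] at hmi hmi'
    by_cases hij : i = j
    · by_cases hij' : i' = j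
      · subst hij; subst hij'
        rw [← hmi] at hmi'
        exact hord hmi'
      · exact indep_ne_aux hg hij' (e i') (- g j) (he i') (Or.inr rfl)
          (by rw [← hmi']; exact add_neg_cancel (g j))
    · exact indep_ne_aux hg hij (e i) (g j) (he i) (Or.inl rfl)
        (by rw [← hmi]; exact neg_add_cancel (g j))

lemma zsf_halves (hg : Indep g) (e : Fin m → G) (he : ∀ i, e i = g i ∨ e i = - g i)
    (s' : Finset (Fin m)) : ZSF (∑ i ∈ s', ({e i} : Multiset G)) := by
  rintro ⟨T, hT, hTz⟩
  have hTP : T ≤ ∑ i : Fin m, prm g i := by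
    refine hT.trans (le_trans (Finset.sum_le_sum fun i _ => singleton_le_prm (e i) i (he i)) ?_)
    exact Finset.sum_le_sum_of_subset (Finset.subset_univ s')
  obtain ⟨w, hw⟩ := zs_in_pairs hg hTP hTz.2
  have hwne : w.Nonempty := by
    rcases Finset.eq_empty_or_nonempty w with rfl | h
    · rw [Finset.sum_empty] at hw
      exact absurd hw hTz.1
    · exact h
  obtain ⟨j, hj⟩ := hwne
  refine prm_not_le_halves hg e he s' j ?_
  calc prm g j ≤ ∑ i ∈ w, prm g i :=
    Finset.single_le_sum (f := fun i => prm g i) (fun i _ => Multiset.zero_le _) hj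
  _ = T := hw.symm
  _ ≤ _ := hT

/-! ## the model multisets and their length sets -/

lemma sum_mono_le_nat {s t : Multiset ℕ} (h : s ≤ t) : s.sum ≤ t.sum := by
  obtain ⟨d, rfl⟩ := Multiset.le_iff_exists_add.1 h
  rw [Multiset.sum_add]
  exact Nat.le_add_right _ _

lemma sum_replicate_singleton (j : ℕ) (a : G) :
    (Multiset.replicate j ({a} : Multiset G)).sum = Multiset.replicate j a := by
  induction j with
  | zero => simp
  | succ j ih => rw [Multiset.replicate_succ, Multiset.replicate_succ, Multiset.sum_cons, ih,
      Multiset.singleton_add]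

lemma matom_count_zero_le {u : Multiset G} (h : MAtom u) : u.count 0 ≤ 1 := by
  by_contra hc
  push_neg at hc
  have hz : IsZS ({(0:G)} : Multiset G) := ⟨by simp, by simp⟩
  refine h.2.2 {0} {0} hz hz ?_
  rw [Multiset.le_iff_count]
  intro x
  rcases eq_or_ne x 0 with rfl | hx
  · have : (({(0:G)} : Multiset G) + {0}).count 0 = 2 := by simp
    omega
  · have : (({(0:G)} : Multiset G) + {0}).count x = 0 := by
      simp [Multiset.count_singleton, hx]
    omega

lemma matom_single_zero : MAtom ({(0 : G)} : Multiset G) := by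
  have := matom_zero_cons (X := (0 : Multiset G)) zsf_zero (by simp)
  simpa using this

lemma mlenSet_replicate (k : ℕ) : MLenSet G (Multiset.replicate k (0:G)) = {k} := by
  ext n
  rw [mem_mlenSet_iff]
  constructor
  · rintro ⟨y, hy, rfl⟩
    have hcard1 : ∀ u ∈ y, Multiset.card u = 1 := by
      intro u hu
      have hle : u ≤ Multiset.replicate k (0:G) := by
        rw [← hy.2]; exact mem_le_sum hu
      have hrep : u = Multiset.replicate (Multiset.card u) 0 := by
        rw [Multiset.eq_replicate_card]
        intro b hb
        exact Multiset.eq_of_mem_replicate (Multiset.mem_of_le hle hb)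
      have h1 : 1 ≤ Multiset.card u := Multiset.card_pos.2 (hy.1 u hu).1
      have h2 := matom_count_zero_le (hy.1 u hu)
      rw [hrep, Multiset.count_replicate, if_pos rfl] at h2
      omega
    have : k = Multiset.card y := by
      have h1 : Multiset.card (y.sum) = k := by rw [hy.2, Multiset.card_replicate]
      rw [card_msum] at h1
      rw [← h1]
      have h3 : y.map Multiset.card = Multiset.replicate (Multiset.card y) 1 := by
        rw [Multiset.eq_replicate]
        constructor
        · simp
        · intro b hb
          obtain ⟨u, hu, rfl⟩ := Multiset.mem_map.1 hb
          exact hcard1 u hu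
      rw [h3, Multiset.sum_replicate, smul_eq_mul, mul_one]
    simp [this]
  · rintro rfl
    refine ⟨Multiset.replicate n ({(0:G)} : Multiset G), ⟨?_, ?_⟩, by simp⟩
    · intro u hu
      rw [Multiset.eq_of_mem_replicate hu]
      exact matom_single_zero
    · rw [sum_replicate_singleton]

variable {m : ℕ} {g : Fin m → G}

lemma counting_lemma {ι : Type*} (s : Finset ι) (P : ι → Multiset G → Prop)
    [∀ i u, Decidable (P i u)] :
    ∀ (y : Multiset (Multiset G)), (∀ u ∈ y, ∃ i ∈ s, P i u) →
      Multiset.card y ≤ ∑ i ∈ s, Multiset.card (y.filter (P i ·)) := by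
  intro y
  induction y using Multiset.induction with
  | empty => simp
  | cons u y ih =>
    intro h
    obtain ⟨i₀, hi₀, hP⟩ := h u (Multiset.mem_cons_self u y)
    have ihy := ih (fun v hv => h v (Multiset.mem_cons_of_mem hv))
    have hstep : ∀ i ∈ s, Multiset.card (y.filter (P i ·)) +
        (if P i u then 1 else 0) = Multiset.card ((u ::ₘ y).filter (P i ·)) := by
      intro i _
      rw [Multiset.filter_cons, Multiset.card_add]
      split <;> simp [add_comm]
    calc Multiset.card (u ::ₘ y) = Multiset.card y + 1 := by simp
    _ ≤ (∑ i ∈ s, Multiset.card (y.filter (P i ·))) + 1 := by omega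
    _ ≤ (∑ i ∈ s, Multiset.card (y.filter (P i ·))) +
        (∑ i ∈ s, if P i u then 1 else 0) := by
          have h1 : (1:ℕ) ≤ ∑ i ∈ s, if P i u then 1 else 0 := by
            calc (1:ℕ) = if P i₀ u then 1 else 0 := by rw [if_pos hP]
            _ ≤ _ := Finset.single_le_sum (f := fun i => if P i u then (1:ℕ) else 0)
                (fun i _ => by positivity) hi₀
          omega
    _ = ∑ i ∈ s, (Multiset.card (y.filter (P i ·)) + (if P i u then 1 else 0)) := by
          rw [Finset.sum_add_distrib]
    _ = _ := Finset.sum_congr rfl hstep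

lemma count_gj_pairs (hg : Indep g) (j : Fin m) :
    (∑ i : Fin m, prm g i).count (g j) = (prm g j).count (g j) := by
  rw [count_finsetSum]
  refine Finset.sum_eq_single_of_mem j (Finset.mem_univ j) ?_
  intro i _ hij
  have h1 : ¬ (g j = g i) := fun hc =>
    indep_ne_aux hg hij (g i) (- g j) (Or.inl rfl) (Or.inr rfl)
      (by rw [← hc]; exact add_neg_cancel (g j))
  have h2 : ¬ (g j = - g i) := fun hc =>
    indep_ne_aux hg hij (g i) (g j) (Or.inl rfl) (Or.inl rfl)
      (by rw [hc]; exact add_neg_cancel (g i))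
  rw [count_prm, if_neg h1, if_neg h2]
  simp

/-- the model multiset for the interval `[k, k+m]` -/
theorem mlenSet_model (hg : Indep g) {k : ℕ} (hk : 2 ≤ k) :
    MLenSet G (Multiset.replicate k (0:G) + ∑ i : Fin m, prm g i) = Set.Icc k (k + m) := by
  classical
  set RS := Multiset.replicate k (0:G) + ∑ i : Fin m, prm g i with hRS
  have hprmcount0 : ∀ i : Fin m, (prm g i).count 0 = 0 := by
    intro i
    have h1 : ¬ ((0:G) = g i) := fun h => hg.1 i h.symm
    have h2 : ¬ ((0:G) = - g i) := fun h => hg.1 i (by rw [← neg_eq_zero]; exact h.symm)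
    rw [count_prm, if_neg h1, if_neg h2]
  have hcount0 : RS.count 0 = k := by
    rw [hRS, Multiset.count_add, Multiset.count_replicate, if_pos rfl, count_finsetSum]
    rw [Finset.sum_congr rfl (fun i _ => hprmcount0 i)]
    simp
  have hcountne : ∀ x : G, x ≠ 0 → RS.count x = (∑ i : Fin m, prm g i).count x := by
    intro x hx
    rw [hRS, Multiset.count_add, Multiset.count_replicate]
    rw [if_neg (fun h : (0:G) = x => hx h.symm)]
    rw [zero_add]
  ext n
  rw [mem_mlenSet_iff, Set.mem_Icc]
  constructor
  · rintro ⟨y, hy, rfl⟩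
    constructor
    · -- k ≤ card y
      have h1 : (y.map (Multiset.count 0)).sum = k := by rw [← count_msum, hy.2, hcount0]
      have h2 : (y.map (Multiset.count 0)).sum ≤ Multiset.card (y.map (Multiset.count 0)) • 1 := by
        refine Multiset.sum_le_card_nsmul _ 1 ?_
        intro x hx
        obtain ⟨u, hu, rfl⟩ := Multiset.mem_map.1 hx
        exact matom_count_zero_le (hy.1 u hu)
      rw [Multiset.card_map, smul_eq_mul, mul_one] at h2
      omega
    · -- card y ≤ k + m
      set y₁ := y.filter (fun u => u.count 0 = 0) with hy₁
      set y₀ := y.filter (fun u => ¬ u.count 0 = 0) with hy₀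
      have hysplit : Multiset.card y = Multiset.card y₀ + Multiset.card y₁ := by
        rw [hy₀, hy₁, ← Multiset.card_add]
        congr 1
        rw [add_comm]
        exact (Multiset.filter_add_not _ y).symm
      have hcy₀ : Multiset.card y₀ ≤ k := by
        have h0 : Multiset.card y₀ • 1 ≤ (y₀.map (Multiset.count 0)).sum := by
          rw [← Multiset.card_map (Multiset.count 0) y₀]
          refine Multiset.card_nsmul_le_sum ?_
          intro x hx
          obtain ⟨u, hu, rfl⟩ := Multiset.mem_map.1 hx
          have := (Multiset.mem_filter.1 hu).2
          omega
        have h1 : (y₀.map (Multiset.count 0)).sum ≤ (y.map (Multiset.count 0)).sum :=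
          sum_mono_le_nat (Multiset.map_le_map (Multiset.filter_le _ y))
        have h2 : (y.map (Multiset.count 0)).sum = k := by rw [← count_msum, hy.2, hcount0]
        rw [smul_eq_mul, mul_one] at h0
        omega
      have hcy₁ : Multiset.card y₁ ≤ m := by
        have hpure : ∀ u ∈ y₁, u ≤ ∑ i : Fin m, prm g i := by
          intro u hu
          have huy : u ∈ y := Multiset.mem_of_le (Multiset.filter_le _ y) hu
          have hle : u ≤ RS := by rw [← hy.2]; exact mem_le_sum huy
          rw [Multiset.le_iff_count]
          intro x
          rcases eq_or_ne x 0 with rfl | hx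
          · have := (Multiset.mem_filter.1 hu).2
            omega
          · have := Multiset.le_iff_count.1 hle x
            rwa [hcountne x hx] at this
        have hexists : ∀ u ∈ y₁, ∃ j ∈ (Finset.univ : Finset (Fin m)), prm g j ≤ u := by
          intro u hu
          have huy : u ∈ y := Multiset.mem_of_le (Multiset.filter_le _ y) hu
          obtain ⟨T, hT, hTz⟩ := (hy.1 u huy).2.1
          obtain ⟨w, hw⟩ := zs_in_pairs hg (hT.trans (hpure u hu)) hTz.2
          have hwne : w.Nonempty := by
            rcases Finset.eq_empty_or_nonempty w with rfl | h
            · rw [Finset.sum_empty] at hw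
              exact absurd hw hTz.1
            · exact h
          obtain ⟨j, hj⟩ := hwne
          refine ⟨j, Finset.mem_univ j, ?_⟩
          calc prm g j ≤ ∑ i ∈ w, prm g i :=
            Finset.single_le_sum (f := fun i => prm g i) (fun i _ => Multiset.zero_le _) hj
          _ = T := hw.symm
          _ ≤ u := hT
        have huniq : ∀ j : Fin m, Multiset.card (y₁.filter ((prm g j ≤ ·))) ≤ 1 := by
          intro j
          by_contra hc
          push_neg at hc
          have h2 : 2 ≤ Multiset.card (y₁.filter ((prm g j ≤ ·))) := hc
          set f := y₁.filter ((prm g j ≤ ·)) with hf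
          have hfne : f ≠ 0 := by
            intro h0
            rw [h0] at h2
            simp at h2
          obtain ⟨v₁, hv₁⟩ := Multiset.exists_mem_of_ne_zero hfne
          obtain ⟨r₁, hr₁⟩ := Multiset.exists_cons_of_mem hv₁
          have hr₁ne : r₁ ≠ 0 := by
            rintro rfl
            rw [hr₁] at h2
            simp at h2
          obtain ⟨v₂, hv₂⟩ := Multiset.exists_mem_of_ne_zero hr₁ne
          obtain ⟨r₂, hr₂⟩ := Multiset.exists_cons_of_mem hv₂
          have hp₁ : prm g j ≤ v₁ := (Multiset.mem_filter.1 hv₁).2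
          have hp₂ : prm g j ≤ v₂ := by
            have : v₂ ∈ f := by
              rw [hr₁]
              exact Multiset.mem_cons_of_mem hv₂
            exact (Multiset.mem_filter.1 this).2
          have hvle : v₁ + v₂ ≤ RS := by
            have h3 : v₁ + v₂ ≤ f.sum := by
              rw [hr₁, hr₂, Multiset.sum_cons, Multiset.sum_cons, ← add_assoc]
              exact Multiset.le_add_right _ _
            have h4 : f.sum ≤ y.sum :=
              sum_mono_le ((Multiset.filter_le _ y₁).trans (Multiset.filter_le _ y))
            rw [hy.2] at h4
            exact h3.trans h4
          have hpp : prm g j + prm g j ≤ RS := (add_le_add hp₁ hp₂).trans hvle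
          have hcnt := Multiset.le_iff_count.1 hpp (g j)
          rw [Multiset.count_add, hcountne (g j) (hg.1 j), count_gj_pairs hg j] at hcnt
          have hone : 1 ≤ (prm g j).count (g j) := by
            rw [count_prm, if_pos rfl]
            omega
          omega
        have := counting_lemma Finset.univ (fun j u => prm g j ≤ u) y₁ hexists
        calc Multiset.card y₁ ≤ ∑ j : Fin m, Multiset.card (y₁.filter ((prm g j ≤ ·))) := this
        _ ≤ ∑ _j : Fin m, 1 := Finset.sum_le_sum fun j _ => huniq j
        _ = m := by simp
      omega
  · -- constructions
    rintro ⟨hn1, hn2⟩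
    set p := n - k with hp
    have hpm : p ≤ m := by omega
    obtain ⟨sp, _, hspcard⟩ := Finset.exists_subset_card_eq (show p ≤ (Finset.univ : Finset (Fin m)).card from
      (by rw [Finset.card_univ, Fintype.card_fin]; exact hpm))
    set X₁ : Multiset G := ∑ i ∈ spᶜ, ({g i} : Multiset G) with hX₁
    set X₂ : Multiset G := ∑ i ∈ spᶜ, ({- g i} : Multiset G) with hX₂
    set y : Multiset (Multiset G) := Multiset.replicate (k-2) ({(0:G)} : Multiset G) +
      (((0:G) ::ₘ X₁) ::ₘ ((0:G) ::ₘ X₂) ::ₘ (sp.val.map (prm g))) with hy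
    have h0X₁ : (0:G) ∉ X₁ := by
      rw [hX₁, mem_finsetSum]
      rintro ⟨i, _, hi⟩
      rw [Multiset.mem_singleton] at hi
      exact hg.1 i hi.symm
    have h0X₂ : (0:G) ∉ X₂ := by
      rw [hX₂, mem_finsetSum]
      rintro ⟨i, _, hi⟩
      rw [Multiset.mem_singleton] at hi
      exact hg.1 i (by rw [← neg_eq_zero]; exact hi.symm)
    refine ⟨y, ⟨?_, ?_⟩, ?_⟩
    · intro u hu
      rw [hy] at hu
      rcases Multiset.mem_add.1 hu with h | h
      · rw [Multiset.eq_of_mem_replicate h]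
        exact matom_single_zero
      · rcases Multiset.mem_cons.1 h with rfl | h
        · exact matom_zero_cons (zsf_halves hg g (fun i => Or.inl rfl) spᶜ) h0X₁
        · rcases Multiset.mem_cons.1 h with rfl | h
          · exact matom_zero_cons (zsf_halves hg (fun i => - g i) (fun i => Or.inr rfl) spᶜ) h0X₂
          · obtain ⟨i, _, rfl⟩ := Multiset.mem_map.1 h
            exact matom_prm hg i
    · -- sum = RS
      rw [hy, Multiset.sum_add, sum_replicate_singleton, Multiset.sum_cons, Multiset.sum_cons]
      have e1 : (sp.val.map (prm g)).sum = ∑ i ∈ sp, prm g i := rfl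
      have e2 : ((0:G) ::ₘ X₁) = {(0:G)} + X₁ := by rw [Multiset.singleton_add]
      have e3 : ((0:G) ::ₘ X₂) = {(0:G)} + X₂ := by rw [Multiset.singleton_add]
      rw [e1, e2, e3]
      have ezeros : Multiset.replicate (k-2) (0:G) + ({(0:G)} + {(0:G)}) =
          Multiset.replicate k (0:G) := by
        rw [← Multiset.replicate_one (0:G), ← Multiset.replicate_add,
          ← Multiset.replicate_add]
        congr 1
        omega
      have epairs : X₁ + X₂ + (∑ i ∈ sp, prm g i) = ∑ i : Fin m, prm g i := by
        have h4 : X₁ + X₂ = ∑ i ∈ spᶜ, prm g i := by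
          rw [hX₁, hX₂, ← Finset.sum_add_distrib]
          refine Finset.sum_congr rfl fun i _ => ?_
          rw [prm, Multiset.insert_eq_cons, Multiset.singleton_add]
        rw [h4, add_comm, Finset.sum_add_sum_compl]
      calc Multiset.replicate (k-2) (0:G) + (({(0:G)} + X₁) + (({(0:G)} + X₂) +
            (∑ i ∈ sp, prm g i)))
          = (Multiset.replicate (k-2) (0:G) + ({(0:G)} + {(0:G)})) +
            (X₁ + X₂ + (∑ i ∈ sp, prm g i)) := by ac_rfl
      _ = _ := by rw [ezeros, epairs, hRS]
    · have hcv : Multiset.card sp.val = p := hspcard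
      rw [hy, Multiset.card_add, Multiset.card_replicate, Multiset.card_cons,
        Multiset.card_cons, Multiset.card_map, hcv]
      omega

/-! ## final assembly -/

lemma replicate_zero_mem_fiota (k : ℕ) : Multiset.replicate k (0:G) ∈ FIota G := by
  rcases Nat.eq_zero_or_pos k with rfl | hk
  · exact Or.inl rfl
  · refine Or.inr ⟨{(0:G)}, ?_, by simp, by simp⟩
    rw [Multiset.singleton_le, Multiset.mem_replicate]
    exact ⟨by omega, rfl⟩

theorem stmt_19' {G : Type*} [AddCommGroup G] [Infinite G] :
    (∀ k : ℕ, 2 ≤ k →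
      {j : ℕ | ∃ S : Multiset G, k ∈ MLenSet G S ∧ j ∈ MLenSet G S} =
        {j : ℕ | 2 ≤ j}) ∧
    {Ls : Set ℕ | ∃ S ∈ FIota G, Ls = MLenSet G S} =
      {Ls : Set ℕ | (∃ k : ℕ, Ls = {k}) ∨
        ∃ k l : ℕ, 2 ≤ k ∧ k ≤ l ∧ Ls = Set.Icc k l} := by
  classical
  letI : DecidableEq G := Classical.decEq G
  constructor
  · -- part 1
    intro k hk
    ext j
    simp only [Set.mem_setOf_eq]
    constructor
    · rintro ⟨S, hkS, hjS⟩
      by_contra hj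
      push_neg at hj
      have hj01 : j = 0 ∨ j = 1 := by omega
      rcases hj01 with rfl | rfl
      · rw [mem_mlenSet_iff] at hjS
        obtain ⟨y, hy, hc⟩ := hjS
        have hy0 : y = 0 := Multiset.card_eq_zero.1 hc
        have hS0 : S = 0 := by rw [← hy.2, hy0, Multiset.sum_zero]
        rw [hS0, mlenSet_zero] at hkS
        rw [Set.mem_singleton_iff] at hkS
        omega
      · rw [mem_mlenSet_iff] at hjS
        obtain ⟨y, hy, hc⟩ := hjS
        obtain ⟨u, rfl⟩ := Multiset.card_eq_one.1 hc
        have hSu : S = u := by rw [← hy.2, Multiset.sum_singleton]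
        have hu : MAtom u := hy.1 u (Multiset.mem_singleton_self u)
        rw [hSu, mlenSet_atom hu, Set.mem_singleton_iff] at hkS
        omega
    · intro hj
      obtain ⟨g, hg⟩ := exists_indep (G := G) (max k j - min k j)
      have hminmax : min k j + (max k j - min k j) = max k j := by omega
      refine ⟨Multiset.replicate (min k j) (0:G) + ∑ i, prm g i, ?_, ?_⟩
      · rw [mlenSet_model hg (le_min hk hj), Set.mem_Icc, hminmax]
        omega
      · rw [mlenSet_model hg (le_min hk hj), Set.mem_Icc, hminmax]
        omega
  · -- part 2
    ext Ls
    simp only [Set.mem_setOf_eq]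
    constructor
    · rintro ⟨S, hS, rfl⟩
      rcases eq_or_ne S 0 with rfl | hSne
      · exact Or.inl ⟨0, mlenSet_zero⟩
      by_cases hatom : MAtom S
      · exact Or.inl ⟨1, mlenSet_atom hatom⟩
      right
      have hne : (MLenSet G S).Nonempty := by
        obtain ⟨y, hy⟩ := exists_fact hS
        exact ⟨Multiset.card y, mem_mlenSet_iff.2 ⟨y, hy, rfl⟩⟩
      have hbdd : BddAbove (MLenSet G S) := by
        refine ⟨Multiset.card S, fun n hn => ?_⟩
        rw [mem_mlenSet_iff] at hn
        obtain ⟨y, hy, rfl⟩ := hn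
        exact fact_card_le_card hy
      have hμ : sInf (MLenSet G S) ∈ MLenSet G S := Nat.sInf_mem hne
      have hM : sSup (MLenSet G S) ∈ MLenSet G S := Nat.sSup_mem hne hbdd
      have hicc : MLenSet G S = Set.Icc (sInf (MLenSet G S)) (sSup (MLenSet G S)) := by
        ext r
        constructor
        · intro hr
          exact Set.mem_Icc.2 ⟨Nat.sInf_le hr, le_csSup hbdd hr⟩
        · intro hr
          exact mlenSet_nogap hμ hM (Set.mem_Icc.1 hr).1 (Set.mem_Icc.1 hr).2
      refine ⟨sInf (MLenSet G S), sSup (MLenSet G S), ?_, Nat.sInf_le hM, hicc⟩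
      by_contra h2
      push_neg at h2
      have h01 : sInf (MLenSet G S) = 0 ∨ sInf (MLenSet G S) = 1 := by omega
      rcases h01 with h0 | h1
      · rw [h0, mem_mlenSet_iff] at hμ
        obtain ⟨y, hy, hc⟩ := hμ
        have hy0 : y = 0 := Multiset.card_eq_zero.1 hc
        refine hSne ?_
        rw [← hy.2, hy0, Multiset.sum_zero]
      · rw [h1, mem_mlenSet_iff] at hμ
        obtain ⟨y, hy, hc⟩ := hμ
        obtain ⟨u, rfl⟩ := Multiset.card_eq_one.1 hc
        have hSu : S = u := by rw [← hy.2, Multiset.sum_singleton]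
        exact hatom (hSu ▸ hy.1 u (Multiset.mem_singleton_self u))
    · rintro (⟨k, rfl⟩ | ⟨k, l, hk, hkl, rfl⟩)
      · exact ⟨Multiset.replicate k (0:G), replicate_zero_mem_fiota k,
          (mlenSet_replicate k).symm⟩
      · obtain ⟨g, hg⟩ := exists_indep (G := G) (l - k)
        refine ⟨Multiset.replicate k (0:G) + ∑ i, prm g i, ?_, ?_⟩
        · refine Or.inr ⟨{(0:G)}, ?_, by simp, by simp⟩
          refine le_trans ?_ (Multiset.le_add_right _ _)
          rw [Multiset.singleton_le, Multiset.mem_replicate]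
          exact ⟨by omega, rfl⟩
        · rw [mlenSet_model hg hk, Nat.add_sub_cancel' hkl]

end Stmt19Aux

/-- for an infinite abelian group `G`, every union of sets of lengths
`𝒰_k(F_ι(G))` with `k ≥ 2` equals `ℕ_{≥2}`, and the system of sets of lengths of
`F_ι(G)` consists exactly of the singletons `{k}`, `k ∈ ℕ₀`, and all finite nonempty
intervals contained in `ℕ_{≥2}`. -/
theorem stmt_19 {G : Type*} [AddCommGroup G] [Infinite G] :
    (∀ k : ℕ, 2 ≤ k →
      {j : ℕ | ∃ S : Multiset G, k ∈ MLenSet G S ∧ j ∈ MLenSet G S} =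
        {j : ℕ | 2 ≤ j}) ∧
    {Ls : Set ℕ | ∃ S ∈ FIota G, Ls = MLenSet G S} =
      {Ls : Set ℕ | (∃ k : ℕ, Ls = {k}) ∨
        ∃ k l : ℕ, 2 ≤ k ∧ k ≤ l ∧ Ls = Set.Icc k l} :=
  stmt_19'
end
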